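/- arXiv:1310.3487 — 8 statements merged into one kernel-verified Lean document; each statement's English description precedes it below -/
import Mathlib

section
/- Moving adversary flow away from the link with the largest residual capacity weakly helps the follower: let 0 < s ≤ R and let g be an adversary flow for demand R − s such that c_1 − g_1 ≥ c_l − g_l for every link l. Let q ≠ 1 and 0 < Δ ≤ g_1, and define the adversary flow g′ by g′_1 = g_1 − Δ, g′_q = g_q + Δ and g′_l = g_l for all other links l. Then Φ(g′) ≤ Φ(g). -/
open scoped BigOperators

/-- Parallel-links routing model: `L ≥ 1` links with capacities `c l > 0` and a latency
function `T : ℝ → ℝ`, where the per-unit latency of link `l` under total flow `x` is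
`T_l(x) = T (c l - x)`, and each such link latency `T_l` is positive, strictly increasing,
convex and continuously differentiable on `[0, c l)`. -/
structure Model (L : ℕ) where
  hL : 0 < L
  c : Fin L → ℝ
  T : ℝ → ℝ
  c_pos : ∀ l, 0 < c l
  T_pos : ∀ (l : Fin L), ∀ x ∈ Set.Ico (0 : ℝ) (c l), 0 < T (c l - x)
  T_mono : ∀ l : Fin L, StrictMonoOn (fun x => T (c l - x)) (Set.Ico 0 (c l))
  T_convex : ∀ l : Fin L, ConvexOn ℝ (Set.Ico 0 (c l)) (fun x => T (c l - x))
  T_smooth : ∀ l : Fin L, ContDiffOn ℝ 1 (fun x => T (c l - x)) (Set.Ico 0 (c l))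

/-- A flow vector for demand `r`: nonnegative components summing to `r`. -/
def IsFlow {L : ℕ} (r : ℝ) (f : Fin L → ℝ) : Prop :=
  (∀ l, 0 ≤ f l) ∧ ∑ l, f l = r

namespace Model

variable {L : ℕ}

/-- The derivative `T_l'` of the link latency `T_l = fun x => T (c l - x)`. -/
noncomputable def Tl' (M : Model L) (l : Fin L) : ℝ → ℝ :=
  deriv (fun x => M.T (M.c l - x))

/-- The follower's cost of flow `f` against adversary flow `g`:
`∑ l, f l * T (c l - g l - f l)`. -/
noncomputable def cost (M : Model L) (g f : Fin L → ℝ) : ℝ :=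
  ∑ l, f l * M.T (M.c l - g l - f l)

/-- `Φ(g)`: the follower's optimal cost, for follower demand `s`, against
the adversary flow `g`. -/
noncomputable def Phi (M : Model L) (s : ℝ) (g : Fin L → ℝ) : ℝ :=
  sInf { J | ∃ f : Fin L → ℝ, IsFlow s f ∧ (∀ l, 0 < f l → g l + f l < M.c l) ∧
    J = M.cost g f }

/-- `W(s)`: the worst-case Stackelberg value for follower demand `s`,
where the adversary has demand `R - s`. -/
noncomputable def W (M : Model L) (R s : ℝ) : ℝ :=
  sSup { J | ∃ g : Fin L → ℝ, IsFlow (R - s) g ∧ J = M.Phi s g }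

/-- The nonatomic (Wardrop) condition of `h ≥ 0` with respect to the total flow `t`. -/
def WardropCond (M : Model L) (h t : Fin L → ℝ) : Prop :=
  ∀ l n : Fin L, t n < M.c n → 0 < h l →
    t l < M.c l ∧ M.T (M.c l - t l) ≤ M.T (M.c n - t n)

/-- The atomic KKT condition of `h ≥ 0` with respect to the total flow `t`. -/
def AtomicKKT (M : Model L) (h t : Fin L → ℝ) : Prop :=
  ∀ l n : Fin L, t n < M.c n → 0 < h l →
    t l < M.c l ∧
      M.T (M.c l - t l) + h l * M.Tl' l (t l)
        ≤ M.T (M.c n - t n) + h n * M.Tl' n (t n)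

end Model

private lemma sum_split_two {L : ℕ} (o q : Fin L) (h : q ≠ o) (A : Fin L → ℝ) :
    ∑ l, A l = A o + A q + ∑ l ∈ (Finset.univ.erase o).erase q, A l := by
  classical
  have hqmem : q ∈ Finset.univ.erase o := Finset.mem_erase.mpr ⟨h, Finset.mem_univ q⟩
  rw [← Finset.add_sum_erase _ A (Finset.mem_univ o), ← Finset.add_sum_erase _ A hqmem,
    add_assoc]

/-- Moving adversary flow away from the link with the largest residual
capacity weakly helps the follower. Link `1` of the paper is the link `⟨0, M.hL⟩`. -/
theorem move_adversary_flow_away_from_largest_residual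
    {L : ℕ} (M : Model L) (R s : ℝ)
    (hR : 0 < R) (hRc : R < ∑ l, M.c l) (hs : 0 < s) (hsR : s ≤ R)
    (g : Fin L → ℝ) (hg : IsFlow (R - s) g)
    (hmax : ∀ l, M.c l - g l ≤ M.c ⟨0, M.hL⟩ - g ⟨0, M.hL⟩)
    (q : Fin L) (hq : q ≠ ⟨0, M.hL⟩)
    (Δ : ℝ) (hΔ : 0 < Δ) (hΔg : Δ ≤ g ⟨0, M.hL⟩)
    (g' : Fin L → ℝ)
    (hg'1 : g' ⟨0, M.hL⟩ = g ⟨0, M.hL⟩ - Δ)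
    (hg'q : g' q = g q + Δ)
    (hg'rest : ∀ l, l ≠ ⟨0, M.hL⟩ → l ≠ q → g' l = g l) :
    M.Phi s g' ≤ M.Phi s g := by
  classical
  set o : Fin L := ⟨0, M.hL⟩ with ho
  have hqo : q ≠ o := hq
  obtain ⟨hgnn, hgsum⟩ := hg
  -- positivity of the largest residual
  have hresid_pos : 0 < M.c o - g o := by
    by_contra hcon
    push_neg at hcon
    have hsum : ∑ l, M.c l ≤ ∑ l, g l := by
      apply Finset.sum_le_sum
      intro l _
      have := hmax l
      linarith
    rw [hgsum] at hsum
    linarith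
  have hg'nn : ∀ l, 0 ≤ g' l := by
    intro l
    by_cases h1 : l = o
    · rw [h1, hg'1]; linarith
    · by_cases h2 : l = q
      · rw [h2, hg'q]; linarith [hgnn q]
      · rw [hg'rest l h1 h2]; exact hgnn l
  -- monotonicity of T on (0, c o]
  have Tmono : ∀ y1 y2 : ℝ, 0 < y1 → y1 ≤ y2 → y2 ≤ M.c o → M.T y2 ≤ M.T y1 := by
    intro y1 y2 h1 h12 h2c
    have hx2 : M.c o - y2 ∈ Set.Ico (0:ℝ) (M.c o) := ⟨by linarith, by linarith⟩
    have hx1 : M.c o - y1 ∈ Set.Ico (0:ℝ) (M.c o) := ⟨by linarith, by linarith⟩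
    have := (M.T_mono o).monotoneOn hx2 hx1 (by linarith)
    simpa [sub_sub_cancel] using this
  -- key construction: the follower can respond to g' at least as well
  have key : ∀ f : Fin L → ℝ, IsFlow s f → (∀ l, 0 < f l → g l + f l < M.c l) →
      ∃ f' : Fin L → ℝ, IsFlow s f' ∧ (∀ l, 0 < f' l → g' l + f' l < M.c l) ∧
        M.cost g' f' ≤ M.cost g f := by
    intro f hf hfeas
    obtain ⟨hfnn, hfsum⟩ := hf
    have hfo_feas : g o + f o < M.c o := by
      rcases (hfnn o).eq_or_lt with h | h
      · rw [← h]; linarith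
      · exact hfeas o h
    have ha1 : 0 < M.c o - g o - f o := by linarith
    have hcgq : M.c q - g q ≤ M.c o - g o := hmax q
    have ha1co : M.c o - g o - f o ≤ M.c o := by linarith [hgnn o, hfnn o]
    have haqco : M.c q - g q - f q ≤ M.c o := by linarith [hgnn o, hfnn q]
    -- generic builder
    have build : ∀ vo vq : ℝ, 0 ≤ vo → 0 ≤ vq → vo + vq = f o + f q →
        (0 < vo → g' o + vo < M.c o) → (0 < vq → g' q + vq < M.c q) →
        vo * M.T (M.c o - g' o - vo) + vq * M.T (M.c q - g' q - vq)
          ≤ f o * M.T (M.c o - g o - f o) + f q * M.T (M.c q - g q - f q) →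
        ∃ f' : Fin L → ℝ, IsFlow s f' ∧ (∀ l, 0 < f' l → g' l + f' l < M.c l) ∧
          M.cost g' f' ≤ M.cost g f := by
      intro vo vq hvo hvq hvsum hfo hfq hcost
      refine ⟨fun l => if l = o then vo else if l = q then vq else f l, ⟨?_, ?_⟩, ?_, ?_⟩
      · intro l
        by_cases h1 : l = o
        · simp [h1, hvo]
        · by_cases h2 : l = q
          · simp [h2, hqo, hvq]
          · simp [h1, h2, hfnn l]
      · rw [sum_split_two o q hqo]
        rw [sum_split_two o q hqo f] at hfsum
        have hrest : ∑ l ∈ (Finset.univ.erase o).erase q,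
            (if l = o then vo else if l = q then vq else f l)
            = ∑ l ∈ (Finset.univ.erase o).erase q, f l := by
          apply Finset.sum_congr rfl
          intro l hl
          have h2 : l ≠ q := (Finset.mem_erase.mp hl).1
          have h1 : l ≠ o := (Finset.mem_erase.mp (Finset.mem_erase.mp hl).2).1
          simp [h1, h2]
        simp only [eq_self_iff_true, if_true, if_neg hqo, hrest]
        linarith
      · intro l
        by_cases h1 : l = o
        · subst h1; simpa using hfo
        · by_cases h2 : l = q
          · subst h2; simp only [if_neg h1, if_pos rfl]; exact hfq
          · simp only [if_neg h1, if_neg h2]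
            rw [hg'rest l h1 h2]
            exact hfeas l
      · show (∑ l, _) ≤ (∑ l, _)
        rw [sum_split_two o q hqo (fun l => f l * M.T (M.c l - g l - f l)),
          sum_split_two o q hqo]
        have hrest : ∑ l ∈ (Finset.univ.erase o).erase q,
            ((if l = o then vo else if l = q then vq else f l) *
              M.T (M.c l - g' l - (if l = o then vo else if l = q then vq else f l)))
            = ∑ l ∈ (Finset.univ.erase o).erase q, f l * M.T (M.c l - g l - f l) := by
          apply Finset.sum_congr rfl
          intro l hl
          have h2 : l ≠ q := (Finset.mem_erase.mp hl).1
          have h1 : l ≠ o := (Finset.mem_erase.mp (Finset.mem_erase.mp hl).2).1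
          simp [h1, h2, hg'rest l h1 h2]
        simp only [eq_self_iff_true, if_true, if_neg hqo, hrest]
        linarith
    -- case analysis
    by_cases hcase1 : M.c o - g o - f o < M.c q - g q - f q
    · have haq : 0 < M.c q - g q - f q := lt_trans ha1 hcase1
      by_cases hcase2 : M.c o - g o - f o ≤ M.c q - g q - Δ
      · -- swap residuals
        apply build (M.c o - g o + Δ - (M.c q - g q - f q))
          (M.c q - g q - Δ - (M.c o - g o - f o))
        · linarith [hfnn q]
        · linarith
        · ring
        · intro _; rw [hg'1]; linarith
        · intro _; rw [hg'q]; linarith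
        · have e1 : M.c o - g' o - (M.c o - g o + Δ - (M.c q - g q - f q))
              = M.c q - g q - f q := by rw [hg'1]; ring
          have e2 : M.c q - g' q - (M.c q - g q - Δ - (M.c o - g o - f o))
              = M.c o - g o - f o := by rw [hg'q]; ring
          rw [e1, e2]
          have hT : M.T (M.c q - g q - f q) ≤ M.T (M.c o - g o - f o) :=
            Tmono _ _ ha1 hcase1.le haqco
          have hK : 0 ≤ (M.c o - g o) - (M.c q - g q) + Δ := by linarith
          nlinarith [mul_le_mul_of_nonneg_left hT hK]
      · -- put everything on link o
        push_neg at hcase2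
        apply build (f o + f q) 0 (by linarith [hfnn o, hfnn q]) le_rfl (by ring)
        · intro _
          rw [hg'1]
          linarith
        · intro h0; exact absurd h0 (lt_irrefl 0)
        · have e1 : M.c o - g' o - (f o + f q)
              = M.c o - g o + Δ - f o - f q := by rw [hg'1]; ring
          rw [e1, zero_mul, add_zero]
          have hyco : M.c o - g o + Δ - f o - f q ≤ M.c o := by
            linarith [hfnn o, hfnn q]
          have hT1 : M.T (M.c o - g o + Δ - f o - f q) ≤ M.T (M.c o - g o - f o) :=
            Tmono _ _ ha1 (by linarith [hfnn q]) hyco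
          have hT2 : M.T (M.c o - g o + Δ - f o - f q) ≤ M.T (M.c q - g q - f q) :=
            Tmono _ _ haq (by linarith) hyco
          rw [add_mul]
          exact add_le_add (mul_le_mul_of_nonneg_left hT1 (hfnn o))
            (mul_le_mul_of_nonneg_left hT2 (hfnn q))
    · push_neg at hcase1
      by_cases hcase2 : Δ ≤ f q
      · -- shift Δ of follower flow from q to o
        have haq : 0 < M.c q - g q - f q := by
          have := hfeas q (lt_of_lt_of_le hΔ hcase2)
          linarith
        apply build (f o + Δ) (f q - Δ) (by linarith [hfnn o]) (by linarith) (by ring)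
        · intro _; rw [hg'1]; linarith
        · intro h0
          rw [hg'q]
          have := hfeas q (lt_of_lt_of_le hΔ hcase2)
          linarith
        · have e1 : M.c o - g' o - (f o + Δ) = M.c o - g o - f o := by rw [hg'1]; ring
          have e2 : M.c q - g' q - (f q - Δ) = M.c q - g q - f q := by rw [hg'q]; ring
          rw [e1, e2]
          have hT : M.T (M.c o - g o - f o) ≤ M.T (M.c q - g q - f q) :=
            Tmono _ _ haq hcase1 ha1co
          nlinarith [mul_le_mul_of_nonneg_left hT hΔ.le]
      · -- put everything on link o
        push_neg at hcase2
        apply build (f o + f q) 0 (by linarith [hfnn o, hfnn q]) le_rfl (by ring)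
        · intro _
          rw [hg'1]
          linarith
        · intro h0; exact absurd h0 (lt_irrefl 0)
        · have e1 : M.c o - g' o - (f o + f q)
              = M.c o - g o + Δ - f o - f q := by rw [hg'1]; ring
          rw [e1, zero_mul, add_zero]
          have hyco : M.c o - g o + Δ - f o - f q ≤ M.c o := by
            linarith [hfnn o, hfnn q]
          have hT1 : M.T (M.c o - g o + Δ - f o - f q) ≤ M.T (M.c o - g o - f o) :=
            Tmono _ _ ha1 (by linarith) hyco
          rw [add_mul]
          refine add_le_add (mul_le_mul_of_nonneg_left hT1 (hfnn o)) ?_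
          rcases (hfnn q).eq_or_lt with h0 | h0
          · rw [← h0, zero_mul, zero_mul]
          · have haq : 0 < M.c q - g q - f q := by
              have := hfeas q h0
              linarith
            have hT2 : M.T (M.c o - g o + Δ - f o - f q) ≤ M.T (M.c q - g q - f q) :=
              Tmono _ _ haq (by linarith) hyco
            exact mul_le_mul_of_nonneg_left hT2 (hfnn q)
  -- the feasible set for g is nonempty
  have hSig : s < ∑ l, max (M.c l - g l) 0 := by
    have h1 : ∑ l, (M.c l - g l) ≤ ∑ l, max (M.c l - g l) 0 :=
      Finset.sum_le_sum (fun l _ => le_max_left _ _)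
    have h2 : ∑ l, (M.c l - g l) = ∑ l, M.c l - (R - s) := by
      rw [Finset.sum_sub_distrib, hgsum]
    linarith
  have hSigpos : 0 < ∑ l, max (M.c l - g l) 0 := lt_trans hs hSig
  have hne : {J | ∃ f : Fin L → ℝ, IsFlow s f ∧ (∀ l, 0 < f l → g l + f l < M.c l) ∧
      J = M.cost g f}.Nonempty := by
    refine ⟨M.cost g (fun l => s / (∑ l, max (M.c l - g l) 0) * max (M.c l - g l) 0),
      fun l => s / (∑ l, max (M.c l - g l) 0) * max (M.c l - g l) 0, ⟨?_, ?_⟩, ?_, rfl⟩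
    · intro l
      exact mul_nonneg (div_nonneg hs.le hSigpos.le) (le_max_right _ _)
    · rw [← Finset.mul_sum, div_mul_cancel₀ _ (ne_of_gt hSigpos)]
    · intro l hl
      have hl' : 0 < s / (∑ l, max (M.c l - g l) 0) * max (M.c l - g l) 0 := hl
      show g l + s / (∑ l, max (M.c l - g l) 0) * max (M.c l - g l) 0 < M.c l
      clear hl
      rename' hl' => hl
      have hm : 0 < max (M.c l - g l) 0 := by
        by_contra hcon
        push_neg at hcon
        have hz : max (M.c l - g l) 0 = 0 := le_antisymm hcon (le_max_right _ _)
        rw [hz, mul_zero] at hl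
        exact lt_irrefl 0 hl
      have hcg : 0 < M.c l - g l := by
        by_contra hcon
        push_neg at hcon
        rw [max_eq_right hcon] at hm
        exact lt_irrefl 0 hm
      have hlt : s / (∑ l, max (M.c l - g l) 0) * (M.c l - g l) < 1 * (M.c l - g l) :=
        mul_lt_mul_of_pos_right ((div_lt_one hSigpos).mpr hSig) hcg
      rw [max_eq_left hcg.le]
      linarith
  -- lower bound on the feasible costs for g'
  have hbdd : BddBelow {J | ∃ f : Fin L → ℝ, IsFlow s f ∧
      (∀ l, 0 < f l → g' l + f l < M.c l) ∧ J = M.cost g' f} := by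
    refine ⟨0, ?_⟩
    rintro J ⟨f, ⟨hfnn, -⟩, hfe, rfl⟩
    apply Finset.sum_nonneg
    intro l _
    rcases (hfnn l).eq_or_lt with h | h
    · rw [← h, zero_mul]
    · have hlt := hfe l h
      have hT := M.T_pos l (g' l + f l) ⟨by linarith [hg'nn l], hlt⟩
      have e : M.c l - (g' l + f l) = M.c l - g' l - f l := by ring
      rw [e] at hT
      positivity
  -- conclude
  show sInf _ ≤ sInf _
  apply le_csInf hne
  rintro J ⟨f, hf, hfe, rfl⟩
  obtain ⟨f', h1, h2, h3⟩ := key f hf hfe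
  exact le_trans (csInf_le hbdd ⟨f', h1, h2, rfl⟩) h3
end

section
/- Moving adversary flow onto the link with the largest residual capacity weakly hurts the follower: let 0 < s ≤ R, let g be an adversary flow for demand R − s, let q ≠ 1 and 0 < Δ ≤ g_q, and define the adversary flow g′′ by g′′_1 = g_1 + Δ, g′′_q = g_q − Δ and g′′_l = g_l for all other links l. If c_1 − g′′_1 ≥ c_l − g′′_l for every link l, then Φ(g′′) ≥ Φ(g). -/
open scoped BigOperators

section Aux

variable {L : ℕ}

/-- Monotonicity of `T` in residual coordinates: larger residual gives smaller latency. -/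
lemma Model.Tmono_le (M : Model L) (l : Fin L) {u v : ℝ}
    (h0 : 0 < v) (hvu : v ≤ u) (hu : u ≤ M.c l) : M.T u ≤ M.T v := by
  have h1 : M.c l - u ∈ Set.Ico (0 : ℝ) (M.c l) := ⟨by linarith, by linarith⟩
  have h2 : M.c l - v ∈ Set.Ico (0 : ℝ) (M.c l) := ⟨by linarith, by linarith⟩
  have h := (M.T_mono l).monotoneOn h1 h2 (by linarith)
  simpa using h

/-- Convexity-based key inequality in residual coordinates. -/
lemma Model.conv_key (M : Model L) (l : Fin L) {p w lam a b : ℝ}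
    (hp : 0 < p) (hpw : p < w) (hw : w ≤ M.c l)
    (hl1 : 1/2 ≤ lam) (hl2 : lam ≤ 1) (hb : 0 ≤ b) (hba : b ≤ a) :
    (a + b) * M.T ((1 - lam) * p + lam * w) ≤ a * M.T p + b * M.T w := by
  have hxa : M.c l - p ∈ Set.Ico (0 : ℝ) (M.c l) := ⟨by linarith, by linarith⟩
  have hxb : M.c l - w ∈ Set.Ico (0 : ℝ) (M.c l) := ⟨by linarith, by linarith⟩
  have hconv := (M.T_convex l).2 hxa hxb (by linarith : (0:ℝ) ≤ 1 - lam)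
    (by linarith : (0:ℝ) ≤ lam) (by ring)
  simp only [smul_eq_mul] at hconv
  have harg : (1 - lam) * (M.c l - p) + lam * (M.c l - w)
      = M.c l - ((1 - lam) * p + lam * w) := by ring
  rw [harg] at hconv
  simp only [sub_sub_cancel] at hconv
  have hmono : M.T w ≤ M.T p := M.Tmono_le l hp hpw.le hw
  have hA : 0 ≤ lam * a - (1 - lam) * b := by
    have h1 : (1 - lam) * b ≤ lam * b := mul_le_mul_of_nonneg_right (by linarith) hb
    have h2 : lam * b ≤ lam * a := mul_le_mul_of_nonneg_left hba (by linarith)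
    linarith
  have hE : 0 ≤ (lam * a - (1 - lam) * b) * (M.T p - M.T w) :=
    mul_nonneg hA (by linarith)
  have h1 := mul_le_mul_of_nonneg_left hconv (by linarith : (0:ℝ) ≤ a + b)
  nlinarith [h1, hE]

/-- Against any adversary flow that leaves strictly more than `s` units of capacity,
the follower has a feasible flow. -/
lemma Model.exists_feasible (M : Model L) (s : ℝ) (hs : 0 < s)
    (g : Fin L → ℝ) (hgsum : (∑ l, g l) + s < ∑ l, M.c l) :
    ∃ f : Fin L → ℝ, IsFlow s f ∧ ∀ l, 0 < f l → g l + f l < M.c l := by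
  classical
  set S : ℝ := ∑ l, max (M.c l - g l) 0 with hSdef
  have h1 : ∑ l, (M.c l - g l) ≤ S :=
    Finset.sum_le_sum fun l _ => le_max_left _ _
  have h2 : ∑ l, (M.c l - g l) = (∑ l, M.c l) - ∑ l, g l := by
    rw [Finset.sum_sub_distrib]
  have hS : s < S := by linarith
  have hS0 : 0 < S := lt_trans hs hS
  refine ⟨fun l => s * max (M.c l - g l) 0 / S, ⟨fun l => by positivity, ?_⟩, ?_⟩
  · rw [← Finset.sum_div, ← Finset.mul_sum, ← hSdef, mul_div_assoc,
      div_self (ne_of_gt hS0), mul_one]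
  · intro l hl
    dsimp only at hl ⊢
    have hm : 0 < max (M.c l - g l) 0 := by
      by_contra h
      push_neg at h
      have hle : s * max (M.c l - g l) 0 ≤ 0 :=
        mul_nonpos_iff.2 (Or.inl ⟨hs.le, h⟩)
      have : s * max (M.c l - g l) 0 / S ≤ 0 := div_nonpos_of_nonpos_of_nonneg hle hS0.le
      linarith
    have hcg : 0 < M.c l - g l := by
      rcases le_or_gt (M.c l - g l) 0 with h | h
      · rw [max_eq_right h] at hm; linarith
      · exact h
    rw [max_eq_left hcg.le]
    have hlt : s * (M.c l - g l) / S < M.c l - g l := by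
      rw [div_lt_iff₀ hS0]
      nlinarith
    linarith

/-- Follower costs are nonnegative. -/
lemma Model.cost_nonneg (M : Model L) (g f : Fin L → ℝ)
    (hgn : ∀ l, 0 ≤ g l) (hfn : ∀ l, 0 ≤ f l)
    (hfc : ∀ l, 0 < f l → g l + f l < M.c l) :
    0 ≤ M.cost g f := by
  apply Finset.sum_nonneg
  intro l _
  rcases (hfn l).eq_or_lt with h | h
  · rw [← h, zero_mul]
  · have hpos := M.T_pos l (g l + f l) ⟨add_nonneg (hgn l) (hfn l), hfc l h⟩
    have harg : M.c l - g l - f l = M.c l - (g l + f l) := by ring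
    rw [harg]
    exact mul_nonneg h.le hpos.le

end Aux
/-- Moving adversary flow onto the link with the largest residual
capacity weakly hurts the follower. Link `1` of the paper is the link `⟨0, M.hL⟩`. -/
theorem move_adversary_flow_onto_largest_residual
    {L : ℕ} (M : Model L) (R s : ℝ)
    (hR : 0 < R) (hRc : R < ∑ l, M.c l) (hs : 0 < s) (hsR : s ≤ R)
    (g : Fin L → ℝ) (hg : IsFlow (R - s) g)
    (q : Fin L) (hq : q ≠ ⟨0, M.hL⟩)
    (Δ : ℝ) (hΔ : 0 < Δ) (hΔg : Δ ≤ g q)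
    (g'' : Fin L → ℝ)
    (hg''1 : g'' ⟨0, M.hL⟩ = g ⟨0, M.hL⟩ + Δ)
    (hg''q : g'' q = g q - Δ)
    (hg''rest : ∀ l, l ≠ ⟨0, M.hL⟩ → l ≠ q → g'' l = g l)
    (hmax : ∀ l, M.c l - g'' l ≤ M.c ⟨0, M.hL⟩ - g'' ⟨0, M.hL⟩) :
    M.Phi s g ≤ M.Phi s g'' := by
  classical
  set one : Fin L := ⟨0, M.hL⟩ with hone
  have hq' : one ≠ q := fun h => hq h.symm
  -- `g''` is nonnegative and sums to `R - s`.
  have hg''nn : ∀ l, 0 ≤ g'' l := by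
    intro l
    by_cases h1 : l = one
    · rw [h1, hg''1]; have := hg.1 one; linarith
    · by_cases h2 : l = q
      · rw [h2, hg''q]; linarith
      · rw [hg''rest l h1 h2]; exact hg.1 l
  have hg''sum : ∑ l, g'' l = R - s := by
    have he : ∀ l ∈ Finset.univ, g'' l
        = g l + ((if l = one then Δ else 0) + (if l = q then -Δ else 0)) := by
      intro l _
      by_cases h1 : l = one
      · subst h1; rw [hg''1]; simp [hq']
      · by_cases h2 : l = q
        · subst h2; rw [hg''q]; simp [h1]; ring
        · rw [hg''rest l h1 h2]; simp [h1, h2]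
    rw [Finset.sum_congr rfl he, Finset.sum_add_distrib, Finset.sum_add_distrib, hg.2]
    simp [Finset.sum_ite_eq']
  simp only [Model.Phi]
  -- the feasible set against `g''` is nonempty
  obtain ⟨f0, hf0, hf0c⟩ := M.exists_feasible s hs g'' (by rw [hg''sum]; linarith)
  have hne : {J | ∃ f : Fin L → ℝ, IsFlow s f ∧
      (∀ l, 0 < f l → g'' l + f l < M.c l) ∧ J = M.cost g'' f}.Nonempty :=
    ⟨M.cost g'' f0, f0, hf0, hf0c, rfl⟩
  apply le_csInf hne
  rintro J ⟨f, hf, hfc, rfl⟩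
  -- residuals under `g''`
  set r1 : ℝ := M.c one - g'' one - f one with hr1d
  set r2 : ℝ := M.c q - g'' q - f q with hr2d
  clear_value r1 r2
  have hC1 : 0 < M.c one - g'' one := by
    have hsumpos : 0 < ∑ l, (M.c l - g'' l) := by
      rw [Finset.sum_sub_distrib, hg''sum]; linarith
    by_contra hcon
    push_neg at hcon
    have hub : ∀ l ∈ Finset.univ, M.c l - g'' l ≤ 0 := fun l _ => le_trans (hmax l) hcon
    linarith [Finset.sum_nonpos hub]
  have hf1 : 0 ≤ f one := hf.1 one
  have hfq : 0 ≤ f q := hf.1 q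
  have hr1pos : 0 < r1 := by
    rcases hf1.eq_or_lt with h | h
    · rw [hr1d, ← h]; linarith
    · have := hfc one h; rw [hr1d]; linarith
  have hr2le : r2 ≤ M.c one - g'' one := by
    have := hmax q; rw [hr2d]; linarith
  have hr1le : r1 ≤ M.c one - g'' one := by rw [hr1d]; linarith
  have hr2pos : 0 < f q → 0 < r2 := fun h => by
    have := hfc q h; rw [hr2d]; linarith
  have hfdiff : r1 < r2 → f q < f one := by
    intro h
    have h1 : f one = (M.c one - g'' one) - r1 := by rw [hr1d]; ring
    have h2 : f q = (M.c q - g'' q) - r2 := by rw [hr2d]; ring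
    have := hmax q
    linarith
  have hc1le : M.c one - g'' one ≤ M.c one := by linarith [hg''nn one]
  -- the amount shifted
  set b : ℝ := max ((r2 - r1) / 2) (max (Δ - f q) 0) with hbd
  clear_value b
  have hb0 : 0 ≤ b := by
    rw [hbd]; exact le_trans (le_max_right _ _) (le_max_right _ _)
  have hbq : Δ - f q ≤ b := by
    rw [hbd]; exact le_trans (le_max_left _ _) (le_max_right _ _)
  have hbub : b ≤ f one + Δ := by
    rw [hbd]
    apply max_le
    · have h1 : f one = (M.c one - g'' one) - r1 := by rw [hr1d]; ring
      linarith
    · apply max_le <;> linarith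
  -- the new follower flow
  set f' : Fin L → ℝ :=
    fun l => if l = one then f one + Δ - b else if l = q then f q - Δ + b else f l with hf'd
  have hf'one : f' one = f one + Δ - b := by simp [hf'd]
  have hf'q : f' q = f q - Δ + b := by simp [hf'd, hq]
  have hf'rest : ∀ l, l ≠ one → l ≠ q → f' l = f l := fun l h1 h2 => by
    simp [hf'd, h1, h2]
  clear_value f'
  have hf'nn : ∀ l, 0 ≤ f' l := by
    intro l
    by_cases h1 : l = one
    · rw [h1, hf'one]; linarith
    · by_cases h2 : l = q
      · rw [h2, hf'q]; linarith
      · rw [hf'rest l h1 h2]; exact hf.1 l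
  have hf'sum : ∑ l, f' l = s := by
    have he : ∀ l ∈ Finset.univ, f' l
        = f l + ((if l = one then Δ - b else 0) + (if l = q then b - Δ else 0)) := by
      intro l _
      by_cases h1 : l = one
      · subst h1; rw [hf'one]; simp [hq']; ring
      · by_cases h2 : l = q
        · subst h2; rw [hf'q]; simp [h1]; ring
        · rw [hf'rest l h1 h2]; simp [h1, h2]
    rw [Finset.sum_congr rfl he, Finset.sum_add_distrib, Finset.sum_add_distrib, hf.2]
    simp [Finset.sum_ite_eq']
  have hgone : g one = g'' one - Δ := by rw [hg''1]; ring
  have hgq : g q = g'' q + Δ := by rw [hg''q]; ring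
  -- feasibility of `f'` against `g`
  have hf'c : ∀ l, 0 < f' l → g l + f' l < M.c l := by
    intro l hl
    by_cases h1 : l = one
    · subst h1
      rw [hf'one, hgone]
      have h1' : g'' one + f one = M.c one - r1 := by rw [hr1d]; ring
      linarith
    · by_cases h2 : l = q
      · rw [h2] at hl ⊢
        rw [hf'q] at hl
        rw [hf'q, hgq]
        have hbr2 : b < r2 := by
          rcases le_or_gt ((r2 - r1) / 2) (max (Δ - f q) 0) with h | h
          · have hb' : b = max (Δ - f q) 0 := by rw [hbd]; exact max_eq_right h
            rcases le_or_gt (Δ - f q) 0 with h3 | h3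
            · have hbz : b = 0 := by rw [hb']; exact max_eq_right h3
              have hfq' : 0 < f q := by rw [hbz] at hl; linarith
              have := hr2pos hfq'
              linarith
            · have hbz : b = Δ - f q := by rw [hb']; exact max_eq_left h3.le
              rw [hbz] at hl; linarith
          · have hb' : b = (r2 - r1) / 2 := by rw [hbd]; exact max_eq_left h.le
            have h0 : (0:ℝ) ≤ max (Δ - f q) 0 := le_max_right _ _
            rw [hb']; linarith
        have h2' : g'' q + f q = M.c q - r2 := by rw [hr2d]; ring
        linarith
      · rw [hf'rest l h1 h2] at hl ⊢
        have := hfc l hl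
        rwa [hg''rest l h1 h2] at this
  -- the key cost inequality
  have hmain : (f one + Δ - b) * M.T (r1 + b) + (f q - Δ + b) * M.T (r2 - b)
      ≤ f one * M.T r1 + f q * M.T r2 := by
    rcases le_or_gt ((r2 - r1) / 2) (max (Δ - f q) 0) with hcase | hcase
    · have hb' : b = max (Δ - f q) 0 := by rw [hbd]; exact max_eq_right hcase
      rcases le_or_gt Δ (f q) with hdq | hdq
      · -- b = 0 and r2 ≤ r1 : pure monotonicity
        have hmz : max (Δ - f q) 0 = 0 := max_eq_right (by linarith)
        have hbz : b = 0 := by rw [hb', hmz]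
        have hr21 : r2 ≤ r1 := by rw [hmz] at hcase; linarith
        have hq0 : 0 < f q := lt_of_lt_of_le hΔ hdq
        have hr2p : 0 < r2 := hr2pos hq0
        have hT : M.T r1 ≤ M.T r2 := M.Tmono_le one hr2p hr21 (le_trans hr1le hc1le)
        rw [hbz]
        simp only [add_zero, sub_zero]
        nlinarith [mul_nonneg hΔ.le (sub_nonneg.2 hT)]
      · -- b = Δ - f q : all of `f q` is moved to link one
        have hbz : b = Δ - f q := by rw [hb']; exact max_eq_left (by linarith)
        rw [hbz]
        have hco1 : f one + Δ - (Δ - f q) = f one + f q := by ring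
        have hco2 : f q - Δ + (Δ - f q) = 0 := by ring
        rw [hco1, hco2, zero_mul, add_zero]
        have hρle : r1 + (Δ - f q) ≤ M.c one := by
          have hg1nn : 0 ≤ g one := hg.1 one
          rw [hr1d, hg''1]
          linarith
        have hρge : r1 ≤ r1 + (Δ - f q) := by linarith
        rcases le_or_gt r2 (r1 + (Δ - f q)) with hr2ρ | hr2ρ
        · -- residual on link one now at least that of q : monotonicity suffices
          have hT1 : M.T (r1 + (Δ - f q)) ≤ M.T r1 := M.Tmono_le one hr1pos hρge hρle
          have hT2 : f q * M.T (r1 + (Δ - f q)) ≤ f q * M.T r2 := by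
            rcases hfq.eq_or_lt with h | h
            · rw [← h]; simp
            · exact mul_le_mul_of_nonneg_left
                (M.Tmono_le one (hr2pos h) hr2ρ hρle) hfq
          have hT1' : f one * M.T (r1 + (Δ - f q)) ≤ f one * M.T r1 :=
            mul_le_mul_of_nonneg_left hT1 hf1
          linarith [hT1', hT2]
        · -- convexity case with λ = (Δ - f q)/(r2 - r1) ∈ [1/2, 1]
          have hr12 : r1 < r2 := by linarith
          have hd : 0 < r2 - r1 := by linarith
          have hfqf1 : f q < f one := hfdiff hr12
          have hmm : max (Δ - f q) 0 = Δ - f q := max_eq_left (by linarith)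
          rw [hmm] at hcase
          set lam : ℝ := (Δ - f q) / (r2 - r1) with hlamd
          have hlam1 : 1 / 2 ≤ lam := by
            rw [hlamd, le_div_iff₀ hd]; linarith
          have hlam2 : lam ≤ 1 := by
            rw [hlamd, div_le_one hd]; linarith
          have hcomb : (1 - lam) * r1 + lam * r2 = r1 + (Δ - f q) := by
            rw [hlamd]; field_simp; ring
          have hck := M.conv_key one hr1pos hr12 (le_trans hr2le hc1le)
            hlam1 hlam2 hfq hfqf1.le
          rw [hcomb] at hck
          linarith
    · -- b = (r2 - r1)/2 : equalize residuals, midpoint convexity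
      have hbz : b = (r2 - r1) / 2 := by rw [hbd]; exact max_eq_left hcase.le
      have h0 : (0:ℝ) ≤ max (Δ - f q) 0 := le_max_right _ _
      have hr12 : r1 < r2 := by linarith
      have hfqf1 : f q < f one := hfdiff hr12
      have hcomb : (1 - (1/2 : ℝ)) * r1 + (1/2 : ℝ) * r2 = r1 + b := by
        rw [hbz]; ring
      have hck := M.conv_key one hr1pos hr12 (le_trans hr2le hc1le)
        (le_refl (1/2 : ℝ)) (by norm_num) hfq hfqf1.le
      rw [hcomb] at hck
      have hrr : r2 - b = r1 + b := by rw [hbz]; ring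
      rw [hrr]
      nlinarith [hck]
  -- assemble: cost of `f'` against `g` is at most cost of `f` against `g''`
  have hcost : M.cost g f' ≤ M.cost g'' f := by
    have harg1 : M.c one - g one - f' one = r1 + b := by
      rw [hf'one, hgone, hr1d]; ring
    have harg2 : M.c q - g q - f' q = r2 - b := by
      rw [hf'q, hgq, hr2d]; ring
    have hzero : ∀ l ∈ Finset.univ, l ∉ ({one, q} : Finset (Fin L)) →
        f' l * M.T (M.c l - g l - f' l) - f l * M.T (M.c l - g'' l - f l) = 0 := by
      intro l _ hl
      simp only [Finset.mem_insert, Finset.mem_singleton, not_or] at hl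
      rw [hf'rest l hl.1 hl.2, hg''rest l hl.1 hl.2, sub_self]
    have hsub := Finset.sum_subset (Finset.subset_univ ({one, q} : Finset (Fin L))) hzero
    have hsplit : M.cost g f' - M.cost g'' f
        = (f' one * M.T (M.c one - g one - f' one)
            - f one * M.T (M.c one - g'' one - f one))
          + (f' q * M.T (M.c q - g q - f' q)
            - f q * M.T (M.c q - g'' q - f q)) := by
      rw [Model.cost, Model.cost, ← Finset.sum_sub_distrib, ← hsub,
        Finset.sum_pair hq']
    rw [harg1, harg2, hf'one, hf'q, ← hr1d, ← hr2d] at hsplit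
    linarith [hmain, hsplit]
  have hbdd : BddBelow {J | ∃ f : Fin L → ℝ, IsFlow s f ∧
      (∀ l, 0 < f l → g l + f l < M.c l) ∧ J = M.cost g f} := by
    refine ⟨0, ?_⟩
    rintro J ⟨h, hh, hhc, rfl⟩
    exact M.cost_nonneg g h hg.1 hh.1 hhc
  exact le_trans (csInf_le hbdd ⟨f', ⟨hf'nn, hf'sum⟩, hf'c, rfl⟩) hcost
end

section
/- An adversary routing strategy that behaves according to the Best-Response dynamics of nonatomic users is optimal for the malicious leader: let 0 < s ≤ R, let ĝ be an adversary flow for demand R − s, and let f̂ be a flow vector for demand s attaining Φ(ĝ) (with ĝ_l + f̂_l < c_l whenever f̂_l > 0). If ĝ satisfies the nonatomic (Wardrop) condition with respect to the total flow t = ĝ + f̂, then Φ(ĝ) ≥ Φ(g) for every adversary flow g for demand R − s; in particular Φ(ĝ) = W(s). -/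
open scoped BigOperators

/-- An adversary routing strategy that behaves according to the
Best-Response dynamics of nonatomic users is optimal for the malicious leader. -/
theorem nonatomic_adversary_is_optimal
    {L : ℕ} (M : Model L) (R s : ℝ)
    (hR : 0 < R) (hRc : R < ∑ l, M.c l) (hs : 0 < s) (hsR : s ≤ R)
    (ghat fhat : Fin L → ℝ)
    (hghat : IsFlow (R - s) ghat)
    (hfhat : IsFlow s fhat)
    (hcap : ∀ l, 0 < fhat l → ghat l + fhat l < M.c l)
    (hattain : (∑ l, fhat l * M.T (M.c l - ghat l - fhat l)) = M.Phi s ghat)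
    (hward : M.WardropCond ghat (fun l => ghat l + fhat l)) :
    (∀ g : Fin L → ℝ, IsFlow (R - s) g → M.Phi s g ≤ M.Phi s ghat) ∧
      M.Phi s ghat = M.W R s := by
  classical
  obtain ⟨hg0, hgsum⟩ := hghat
  obtain ⟨hf0, hfsum⟩ := hfhat
  set t : Fin L → ℝ := fun l => ghat l + fhat l with ht
  have htl : ∀ l, t l = ghat l + fhat l := fun l => rfl
  have htnn : ∀ l, 0 ≤ t l := fun l => add_nonneg (hg0 l) (hf0 l)
  have htsum : ∑ l, t l = R := by
    simp only [htl, Finset.sum_add_distrib, hgsum, hfsum]; ring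
  have hex : ∃ n, t n < M.c n := by
    by_contra h
    push_neg at h
    have hcle : ∑ l, M.c l ≤ ∑ l, t l := Finset.sum_le_sum fun l _ => h l
    rw [htsum] at hcle; linarith
  obtain ⟨n0, hn0⟩ := hex
  have hwd : ∀ l n : Fin L, t n < M.c n → 0 < ghat l →
      t l < M.c l ∧ M.T (M.c l - t l) ≤ M.T (M.c n - t n) := hward
  have h_tc : ∀ l, 0 < t l → t l < M.c l := by
    intro l hl
    rcases lt_or_ge 0 (fhat l) with hfl | hfl
    · exact hcap l hfl
    · have hfl0 : fhat l = 0 := le_antisymm hfl (hf0 l)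
      have hgl : 0 < ghat l := by rw [htl l, hfl0] at hl; linarith
      exact (hwd l n0 hn0 hgl).1
  have lam_pos : ∀ l, t l < M.c l → 0 < M.T (M.c l - t l) := by
    intro l hl
    exact M.T_pos l (t l) ⟨htnn l, hl⟩
  -- the attained cost equals ∑ fhat l * T(c l - t l)
  have hatt2 : M.Phi s ghat = ∑ l, fhat l * M.T (M.c l - t l) := by
    rw [← hattain]
    refine Finset.sum_congr rfl fun l _ => ?_
    rw [htl l, sub_sub]
  -- the main inequality
  have key : ∀ g : Fin L → ℝ, IsFlow (R - s) g → M.Phi s g ≤ M.Phi s ghat := by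
    rintro g ⟨hgnn, hgs⟩
    set f : Fin L → ℝ := fun l => max (t l - g l) 0 with hf
    have hfl' : ∀ l, f l = max (t l - g l) 0 := fun l => rfl
    have hfnn : ∀ l, 0 ≤ f l := fun l => le_max_right _ _
    have hfge : s ≤ ∑ l, f l := by
      have h1 : ∑ l, (t l - g l) = s := by
        rw [Finset.sum_sub_distrib, htsum, hgs]; ring
      calc s = ∑ l, (t l - g l) := h1.symm
        _ ≤ ∑ l, f l := Finset.sum_le_sum fun l _ => le_max_left _ _
    have h_tcA : ∀ l, 0 < f l → g l + f l = t l ∧ t l < M.c l := by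
      intro l hl
      have hlt : g l < t l := by
        by_contra hc
        push_neg at hc
        have h0 : f l = 0 := by rw [hfl' l]; exact max_eq_right (by linarith)
        linarith
      have hfe : f l = t l - g l := by rw [hfl' l]; exact max_eq_left (by linarith)
      have htl0 : 0 < t l := lt_of_le_of_lt (hgnn l) hlt
      exact ⟨by rw [hfe]; ring, h_tc l htl0⟩
    set S0 : ℝ := ∑ l, min (f l) (fhat l) with hS0
    set S1 : ℝ := ∑ l, max (f l - fhat l) 0 with hS1
    set S2 : ℝ := ∑ l, max (fhat l - f l) 0 with hS2
    have hS01 : S0 + S1 = ∑ l, f l := by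
      rw [hS0, hS1, ← Finset.sum_add_distrib]
      refine Finset.sum_congr rfl fun l _ => ?_
      rcases le_total (f l) (fhat l) with h | h
      · rw [min_eq_left h, max_eq_right (by linarith : f l - fhat l ≤ 0)]; ring
      · rw [min_eq_right h, max_eq_left (by linarith : (0:ℝ) ≤ f l - fhat l)]; ring
    have hS02 : S0 + S2 = s := by
      rw [hS0, hS2, ← Finset.sum_add_distrib, ← hfsum]
      refine Finset.sum_congr rfl fun l _ => ?_
      rcases le_total (f l) (fhat l) with h | h
      · rw [min_eq_left h, max_eq_left (by linarith : (0:ℝ) ≤ fhat l - f l)]; ring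
      · rw [min_eq_right h, max_eq_right (by linarith : fhat l - f l ≤ 0)]; ring
    have hS1nn : 0 ≤ S1 := Finset.sum_nonneg fun l _ => le_max_right _ _
    have hS2nn : 0 ≤ S2 := Finset.sum_nonneg fun l _ => le_max_right _ _
    have hS0le : S0 ≤ s := by linarith
    have hsS0S1 : s - S0 ≤ S1 := by linarith
    set th : ℝ := if S1 = 0 then 0 else (s - S0) / S1 with hth
    have hthS1 : th * S1 = s - S0 := by
      rw [hth]
      split_ifs with h
      · rw [h]
        have h2 : S0 + 0 = ∑ l, f l := by rw [← h]; exact hS01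
        have h3 : s ≤ S0 := by linarith
        linarith [mul_zero (0:ℝ)]
      · field_simp
    have hth0 : 0 ≤ th := by
      rw [hth]; split_ifs with h
      · exact le_refl 0
      · exact div_nonneg (by linarith) hS1nn
    have hth1 : th ≤ 1 := by
      rw [hth]; split_ifs with h
      · norm_num
      · have hS1pos : 0 < S1 := lt_of_le_of_ne hS1nn (Ne.symm h)
        rw [div_le_one hS1pos]; exact hsS0S1
    set f' : Fin L → ℝ := fun l => min (f l) (fhat l) + th * max (f l - fhat l) 0
      with hf'
    have hf'l : ∀ l, f' l = min (f l) (fhat l) + th * max (f l - fhat l) 0 :=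
      fun l => rfl
    have hf'nn : ∀ l, 0 ≤ f' l := fun l =>
      add_nonneg (le_min (hfnn l) (hf0 l)) (mul_nonneg hth0 (le_max_right _ _))
    have hminmax : ∀ l, min (f l) (fhat l) + max (f l - fhat l) 0 = f l := by
      intro l
      rcases le_total (f l) (fhat l) with h | h
      · rw [min_eq_left h, max_eq_right (by linarith : f l - fhat l ≤ 0)]; ring
      · rw [min_eq_right h, max_eq_left (by linarith : (0:ℝ) ≤ f l - fhat l)]; ring
    have hf'le : ∀ l, f' l ≤ f l := by
      intro l
      rw [hf'l]
      have h1 : th * max (f l - fhat l) 0 ≤ max (f l - fhat l) 0 := by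
        nlinarith [le_max_right (f l - fhat l) (0:ℝ)]
      have h2 := hminmax l
      linarith
    have hf'sum : ∑ l, f' l = s := by
      simp only [hf'l]
      rw [Finset.sum_add_distrib, ← Finset.mul_sum, ← hS0, ← hS1, hthS1]; ring
    have hf'feas : ∀ l, 0 < f' l → g l + f' l < M.c l := by
      intro l hl
      have hfl : 0 < f l := lt_of_lt_of_le hl (hf'le l)
      obtain ⟨he, hc⟩ := h_tcA l hfl
      have := hf'le l
      linarith
    -- step 1: cost g f' ≤ ∑ f' * lam
    have hcost1 : M.cost g f' ≤ ∑ l, f' l * M.T (M.c l - t l) := by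
      unfold Model.cost
      refine Finset.sum_le_sum fun l _ => ?_
      rcases eq_or_lt_of_le (hf'nn l) with h | h
      · rw [← h]; simp
      · obtain ⟨he, hcl⟩ := h_tcA l (lt_of_lt_of_le h (hf'le l))
        have hle : g l + f' l ≤ t l := by have := hf'le l; linarith
        have hmem1 : g l + f' l ∈ Set.Ico (0:ℝ) (M.c l) :=
          ⟨by have := hgnn l; linarith, lt_of_le_of_lt hle hcl⟩
        have hmem2 : t l ∈ Set.Ico (0:ℝ) (M.c l) := ⟨htnn l, hcl⟩
        have hm := (M.T_mono l).monotoneOn hmem1 hmem2 hle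
        have harg : M.c l - g l - f' l = M.c l - (g l + f' l) := by ring
        rw [harg]
        exact mul_le_mul_of_nonneg_left hm (le_of_lt h)
    -- step 2: ∑ f' * lam ≤ ∑ fhat * lam
    have hcost2 : ∑ l, f' l * M.T (M.c l - t l) ≤
        ∑ l, fhat l * M.T (M.c l - t l) := by
      have e1 : ∑ l, f' l * M.T (M.c l - t l)
          = ∑ l, min (f l) (fhat l) * M.T (M.c l - t l)
            + th * ∑ l, max (f l - fhat l) 0 * M.T (M.c l - t l) := by
        simp only [hf'l]
        rw [Finset.mul_sum, ← Finset.sum_add_distrib]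
        refine Finset.sum_congr rfl fun l _ => ?_
        ring
      have e2 : ∑ l, fhat l * M.T (M.c l - t l)
          = ∑ l, min (f l) (fhat l) * M.T (M.c l - t l)
            + ∑ l, max (fhat l - f l) 0 * M.T (M.c l - t l) := by
        rw [← Finset.sum_add_distrib]
        refine Finset.sum_congr rfl fun l _ => ?_
        have : min (f l) (fhat l) + max (fhat l - f l) 0 = fhat l := by
          rcases le_total (f l) (fhat l) with h | h
          · rw [min_eq_left h, max_eq_left (by linarith : (0:ℝ) ≤ fhat l - f l)]
            ring
          · rw [min_eq_right h, max_eq_right (by linarith : fhat l - f l ≤ 0)]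
            ring
        linear_combination (-M.T (M.c l - t l)) * this
      rw [e1, e2]
      have hmain : th * ∑ l, max (f l - fhat l) 0 * M.T (M.c l - t l)
          ≤ ∑ l, max (fhat l - f l) 0 * M.T (M.c l - t l) := by
        by_cases hcase : ∀ l, f l ≤ fhat l
        · have hz : ∑ l, max (f l - fhat l) 0 * M.T (M.c l - t l) = 0 := by
            refine Finset.sum_eq_zero fun l _ => ?_
            rw [max_eq_right (by linarith [hcase l] : f l - fhat l ≤ 0)]
            ring
          rw [hz, mul_zero]
          refine Finset.sum_nonneg fun l _ => ?_
          rcases le_or_gt (fhat l) (f l) with h | h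
          · rw [max_eq_right (by linarith : fhat l - f l ≤ 0)]; simp
          · have hfhl : 0 < fhat l := lt_of_le_of_lt (hfnn l) h
            have htcl : t l < M.c l := hcap l hfhl
            exact mul_nonneg (le_max_right _ _) (le_of_lt (lam_pos l htcl))
        · push_neg at hcase
          obtain ⟨p, hp⟩ := hcase
          -- facts about links where f exceeds fhat
          have hbig : ∀ l, fhat l < f l →
              0 < ghat l ∧ t l < M.c l := by
            intro l hl
            have hfl : 0 < f l := lt_of_le_of_lt (hf0 l) hl
            obtain ⟨he, hc⟩ := h_tcA l hfl
            refine ⟨?_, hc⟩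
            have : ghat l = g l + f l - fhat l := by rw [he, htl l]; ring
            have := hgnn l
            linarith [hgnn l]
          obtain ⟨hgp, htp⟩ := hbig p hp
          have hlamp : 0 < M.T (M.c p - t p) := lam_pos p htp
          have heqlam : ∀ l, fhat l < f l →
              M.T (M.c l - t l) = M.T (M.c p - t p) := by
            intro l hl
            obtain ⟨hgl, htl'⟩ := hbig l hl
            exact le_antisymm (hwd l p htp hgl).2 (hwd p l htl' hgp).2
          have hgelam : ∀ n, f n < fhat n →
              M.T (M.c p - t p) ≤ M.T (M.c n - t n) := by
            intro n hn
            have hfhn : 0 < fhat n := lt_of_le_of_lt (hfnn n) hn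
            have htcn : t n < M.c n := hcap n hfhn
            exact (hwd p n htcn hgp).2
          have hL : ∑ l, max (f l - fhat l) 0 * M.T (M.c l - t l)
              = S1 * M.T (M.c p - t p) := by
            rw [hS1, Finset.sum_mul]
            refine Finset.sum_congr rfl fun l _ => ?_
            rcases le_or_gt (f l) (fhat l) with h | h
            · rw [max_eq_right (by linarith : f l - fhat l ≤ 0)]; ring
            · rw [heqlam l h]
          have hRge : S2 * M.T (M.c p - t p)
              ≤ ∑ l, max (fhat l - f l) 0 * M.T (M.c l - t l) := by
            rw [hS2, Finset.sum_mul]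
            refine Finset.sum_le_sum fun l _ => ?_
            rcases le_or_gt (fhat l) (f l) with h | h
            · rw [max_eq_right (by linarith : fhat l - f l ≤ 0)]
              simp
            · exact mul_le_mul_of_nonneg_left (hgelam l h) (le_max_right _ _)
          rw [hL, ← mul_assoc, hthS1]
          have hsS0 : s - S0 = S2 := by linarith
          rw [hsS0]
          exact hRge
      linarith
    -- conclude: Phi s g ≤ cost g f' ≤ Phi s ghat
    have hbdd : BddBelow { J | ∃ f₀ : Fin L → ℝ, IsFlow s f₀ ∧
        (∀ l, 0 < f₀ l → g l + f₀ l < M.c l) ∧ J = M.cost g f₀ } := by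
      refine ⟨0, ?_⟩
      rintro J ⟨f₀, ⟨hf₀nn, hf₀s⟩, hf₀cap, rfl⟩
      unfold Model.cost
      refine Finset.sum_nonneg fun l _ => ?_
      rcases eq_or_lt_of_le (hf₀nn l) with h | h
      · rw [← h]; simp
      · have hx : g l + f₀ l ∈ Set.Ico (0:ℝ) (M.c l) :=
          ⟨by have := hgnn l; linarith, hf₀cap l h⟩
        have hTpos := M.T_pos l (g l + f₀ l) hx
        have harg : M.c l - g l - f₀ l = M.c l - (g l + f₀ l) := by ring
        rw [harg]
        positivity
    have hmem : M.cost g f' ∈ { J | ∃ f₀ : Fin L → ℝ, IsFlow s f₀ ∧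
        (∀ l, 0 < f₀ l → g l + f₀ l < M.c l) ∧ J = M.cost g f₀ } :=
      ⟨f', ⟨hf'nn, hf'sum⟩, hf'feas, rfl⟩
    have h1 : M.Phi s g ≤ M.cost g f' := csInf_le hbdd hmem
    calc M.Phi s g ≤ M.cost g f' := h1
      _ ≤ ∑ l, f' l * M.T (M.c l - t l) := hcost1
      _ ≤ ∑ l, fhat l * M.T (M.c l - t l) := hcost2
      _ = M.Phi s ghat := hatt2.symm
  -- conclusion
  refine ⟨key, ?_⟩
  have hmemW : M.Phi s ghat ∈
      { J | ∃ g : Fin L → ℝ, IsFlow (R - s) g ∧ J = M.Phi s g } :=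
    ⟨ghat, ⟨hg0, hgsum⟩, rfl⟩
  have hub : ∀ J ∈ { J | ∃ g : Fin L → ℝ, IsFlow (R - s) g ∧ J = M.Phi s g },
      J ≤ M.Phi s ghat := by
    rintro J ⟨g, hg, rfl⟩
    exact key g hg
  unfold Model.W
  exact le_antisymm (le_csSup ⟨M.Phi s ghat, hub⟩ hmemW)
    (csSup_le ⟨M.Phi s ghat, hmemW⟩ hub)
end

section
/- The Proportional Allocation lies in the Core of the worst-case NTU coalitional game: (i) the PA belongs to V(N), achieved by the proportional routing f^i_l = (r^i/R)·f*_l; and (ii) for every nonempty proper coalition S ⊆ {1,…,N} and every cost vector (J^i)_{i∈S} ∈ V(S), there exists a user i ∈ S with J^i ≥ (r^i/R)·J*_sys; hence no coalition deviating to its worst-case outcome can make all of its members strictly better off than at the PA. -/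
open scoped BigOperators

/-- The worst-case value set `V(S)` of a nonempty proper coalition `S`: cost vectors
arising when each member `i ∈ S` routes a flow `f i` for its demand `r i`, the
adversary (the users outside `S`) routes `g` for demand `R - r_S`, the coalition
aggregate satisfies the atomic KKT condition and `g` the nonatomic (Wardrop)
condition with respect to the total flow `t = g + ∑_{i ∈ S} f i`. -/
def VS {L N : ℕ} (M : Model L) (r : Fin N → ℝ) (R : ℝ)
    (S : Finset (Fin N)) (J : Fin N → ℝ) : Prop :=
  ∃ (f : Fin N → Fin L → ℝ) (g : Fin L → ℝ),
    (∀ i ∈ S, IsFlow (r i) (f i)) ∧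
    IsFlow (R - ∑ i ∈ S, r i) g ∧
    (∀ l, 0 < ∑ i ∈ S, f i l → g l + ∑ i ∈ S, f i l < M.c l) ∧
    M.AtomicKKT (fun l => ∑ i ∈ S, f i l) (fun l => g l + ∑ i ∈ S, f i l) ∧
    M.WardropCond g (fun l => g l + ∑ i ∈ S, f i l) ∧
    ∀ i ∈ S, J i = ∑ l, f i l * M.T (M.c l - (g l + ∑ j ∈ S, f j l))

/-- The value set `V(N)` of the grand coalition: cost vectors arising from individual
flows `f i` for demands `r i` whose aggregate is the system-optimal flow `fstar`. -/
def VN {L N : ℕ} (M : Model L) (r : Fin N → ℝ) (fstar : Fin L → ℝ)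
    (J : Fin N → ℝ) : Prop :=
  ∃ f : Fin N → Fin L → ℝ,
    (∀ i, IsFlow (r i) (f i)) ∧
    (∀ l, ∑ i, f i l = fstar l) ∧
    ∀ i, J i = ∑ l, f i l * M.T (M.c l - fstar l)

/-- The Proportional Allocation lies in the Core of the worst-case NTU
coalitional game: (i) the PA belongs to `V(N)`, achieved by the proportional routing
`f i l = (r i / R) * fstar l`; (ii) for every nonempty proper coalition `S` and every
cost vector in `V(S)`, some member `i ∈ S` has cost at least `(r i / R) * J*_sys`. -/
theorem proportional_allocation_in_core
    {L N : ℕ} (M : Model L) (r : Fin N → ℝ) (R : ℝ)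
    (hr : ∀ i, 0 < r i) (hrsum : ∑ i, r i = R)
    (hR : 0 < R) (hRc : R < ∑ l, M.c l)
    (fstar : Fin L → ℝ)
    (hfs : IsFlow R fstar) (hfs_lt : ∀ l, fstar l < M.c l)
    (hfs_opt : ∀ f : Fin L → ℝ, IsFlow R f → (∀ l, f l < M.c l) →
      ∑ l, fstar l * M.T (M.c l - fstar l) ≤ ∑ l, f l * M.T (M.c l - f l)) :
    -- (i) the PA is in V(N), achieved by the proportional routing
    ((∀ i, IsFlow (r i) (fun l => r i / R * fstar l)) ∧
      (∀ l, ∑ i, r i / R * fstar l = fstar l) ∧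
      (∀ i, r i / R * (∑ l, fstar l * M.T (M.c l - fstar l)) =
        ∑ l, (r i / R * fstar l) * M.T (M.c l - fstar l)) ∧
      VN M r fstar (fun i => r i / R * ∑ l, fstar l * M.T (M.c l - fstar l))) ∧
    -- (ii) no coalition deviating to its worst-case outcome makes everyone better off
    ∀ S : Finset (Fin N), S.Nonempty → S ≠ Finset.univ →
      ∀ J : Fin N → ℝ, VS M r R S J →
        ∃ i ∈ S, r i / R * (∑ l, fstar l * M.T (M.c l - fstar l)) ≤ J i := by
  have hRne : R ≠ 0 := ne_of_gt hR
  set Jstar := ∑ l, fstar l * M.T (M.c l - fstar l) with hJstar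
  constructor
  · refine ⟨?_, ?_, ?_, ?_⟩
    · intro i
      refine ⟨fun l => mul_nonneg (div_nonneg (hr i).le hR.le) (hfs.1 l), ?_⟩
      rw [← Finset.mul_sum, hfs.2, div_mul_cancel₀ _ hRne]
    · intro l
      rw [← Finset.sum_mul, ← Finset.sum_div, hrsum, div_self hRne, one_mul]
    · intro i
      rw [Finset.mul_sum]
      exact Finset.sum_congr rfl fun l _ => by ring
    · refine ⟨fun i l => r i / R * fstar l, ?_, ?_, ?_⟩
      · intro i
        refine ⟨fun l => mul_nonneg (div_nonneg (hr i).le hR.le) (hfs.1 l), ?_⟩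
        rw [← Finset.mul_sum, hfs.2, div_mul_cancel₀ _ hRne]
      · intro l
        rw [← Finset.sum_mul, ← Finset.sum_div, hrsum, div_self hRne, one_mul]
      · intro i
        show r i / R * Jstar = _
        rw [hJstar, Finset.mul_sum]
        exact Finset.sum_congr rfl fun l _ => by ring
  · intro S hS hSne J hVS
    obtain ⟨f, g, hfl, hg, hcap, hKKT, hWard, hJ⟩ := hVS
    set F : Fin L → ℝ := fun l => ∑ i ∈ S, f i l with hF
    set t : Fin L → ℝ := fun l => g l + F l with ht
    set rS := ∑ i ∈ S, r i with hrS
    have hF_nonneg : ∀ l, 0 ≤ F l := fun l =>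
      Finset.sum_nonneg fun i hi => (hfl i hi).1 l
    have hF_sum : ∑ l, F l = rS := by
      rw [hF, Finset.sum_comm]
      exact Finset.sum_congr rfl fun i hi => (hfl i hi).2
    have hrS_pos : 0 < rS := Finset.sum_pos (fun i _ => hr i) hS
    have hrS_lt : rS < R := by
      obtain ⟨j, hj⟩ : ∃ j, j ∉ S := by
        by_contra h
        push_neg at h
        exact hSne (Finset.eq_univ_iff_forall.2 h)
      calc rS < rS + r j := lt_add_of_pos_right _ (hr j)
        _ = ∑ i ∈ insert j S, r i := by rw [Finset.sum_insert hj]; ring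
        _ ≤ ∑ i, r i := Finset.sum_le_sum_of_subset_of_nonneg
            (Finset.subset_univ _) (fun i _ _ => (hr i).le)
        _ = R := hrsum
    have hgR : ∑ l, g l = R - rS := hg.2
    have ht_sum : ∑ l, t l = R := by
      simp only [ht]
      rw [Finset.sum_add_distrib, hgR, hF_sum]; ring
    have ht_nonneg : ∀ l, 0 ≤ t l := fun l => add_nonneg (hg.1 l) (hF_nonneg l)
    -- existence of a link with t n < c n
    have hex : ∃ n, t n < M.c n := by
      by_contra h
      push_neg at h
      have : ∑ l, M.c l ≤ ∑ l, t l := Finset.sum_le_sum fun l _ => h l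
      rw [ht_sum] at this
      linarith
    obtain ⟨n₀, hn₀⟩ := hex
    -- all links feasible under t
    have ht_lt : ∀ l, t l < M.c l := by
      intro l
      rcases lt_or_eq_of_le (hF_nonneg l) with hFl | hFl
      · exact hcap l hFl
      · rcases lt_or_eq_of_le (hg.1 l) with hgl | hgl
        · exact (hWard l n₀ hn₀ hgl).1
        · have : t l = 0 := by simp [ht, ← hgl, ← hFl]
          rw [this]; exact M.c_pos l
    -- coalition and adversary costs
    set CS := ∑ l, F l * M.T (M.c l - t l) with hCS
    set Cg := ∑ l, g l * M.T (M.c l - t l) with hCg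
    have h_total : Jstar ≤ Cg + CS := by
      have := hfs_opt t ⟨ht_nonneg, ht_sum⟩ ht_lt
      calc Jstar ≤ ∑ l, t l * M.T (M.c l - t l) := this
        _ = Cg + CS := by
          rw [hCg, hCS, ← Finset.sum_add_distrib]
          exact Finset.sum_congr rfl fun l _ => by simp [ht]; ring
    -- pick the minimally-priced link used by the coalition
    have hFsupp : ∃ m, 0 < F m := by
      by_contra h
      push_neg at h
      have : ∑ l, F l ≤ 0 := Finset.sum_nonpos fun l _ => h l
      rw [hF_sum] at this
      linarith
    obtain ⟨m₀, hm₀⟩ := hFsupp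
    obtain ⟨n, hnmem, hnmin⟩ := Finset.exists_min_image
      (Finset.univ.filter fun l => 0 < F l)
      (fun l => M.T (M.c l - t l))
      ⟨m₀, Finset.mem_filter.2 ⟨Finset.mem_univ _, hm₀⟩⟩
    have hnF : 0 < F n := (Finset.mem_filter.1 hnmem).2
    set μ := M.T (M.c n - t n) with hμ
    -- Cg ≤ (R - rS) * μ
    have hCg_le : Cg ≤ (R - rS) * μ := by
      rw [hCg, ← hgR, Finset.sum_mul]
      refine Finset.sum_le_sum fun l _ => ?_
      rcases lt_or_eq_of_le (hg.1 l) with hgl | hgl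
      · exact mul_le_mul_of_nonneg_left ((hWard l n (ht_lt n) hgl).2) (hg.1 l)
      · simp [← hgl]
    -- rS * μ ≤ CS
    have hCS_ge : rS * μ ≤ CS := by
      rw [hCS, ← hF_sum, Finset.sum_mul]
      refine Finset.sum_le_sum fun l _ => ?_
      rcases lt_or_eq_of_le (hF_nonneg l) with hFl | hFl
      · exact mul_le_mul_of_nonneg_left
          (hnmin l (Finset.mem_filter.2 ⟨Finset.mem_univ _, hFl⟩)) (hF_nonneg l)
      · simp [← hFl]
    -- key inequality: R * CS ≥ rS * (Cg + CS)
    have hkey : rS * Cg ≤ (R - rS) * CS := by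
      have h1 : rS * Cg ≤ rS * ((R - rS) * μ) :=
        mul_le_mul_of_nonneg_left hCg_le hrS_pos.le
      have h2 : (R - rS) * (rS * μ) ≤ (R - rS) * CS :=
        mul_le_mul_of_nonneg_left hCS_ge (by linarith)
      nlinarith
    have hmain : rS / R * Jstar ≤ CS := by
      have h3 : rS * Jstar ≤ rS * (Cg + CS) :=
        mul_le_mul_of_nonneg_left h_total hrS_pos.le
      have h4 : rS * (Cg + CS) ≤ R * CS := by nlinarith
      rw [div_mul_eq_mul_div, div_le_iff₀ hR]
      nlinarith
    -- sum of coalition member costs equals CS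
    have hJsum : ∑ i ∈ S, J i = CS := by
      rw [hCS]
      calc ∑ i ∈ S, J i
          = ∑ i ∈ S, ∑ l, f i l * M.T (M.c l - (g l + ∑ j ∈ S, f j l)) :=
            Finset.sum_congr rfl fun i hi => hJ i hi
        _ = ∑ l, ∑ i ∈ S, f i l * M.T (M.c l - (g l + ∑ j ∈ S, f j l)) :=
            Finset.sum_comm
        _ = ∑ l, F l * M.T (M.c l - t l) := by
            refine Finset.sum_congr rfl fun l _ => ?_
            rw [← Finset.sum_mul]
    -- conclusion by averaging
    by_contra h
    push_neg at h
    have hlt : ∑ i ∈ S, J i < ∑ i ∈ S, r i / R * Jstar :=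
      Finset.sum_lt_sum_of_nonempty hS fun i hi => h i hi
    have : ∑ i ∈ S, r i / R * Jstar = rS / R * Jstar := by
      rw [← Finset.sum_mul, ← Finset.sum_div, hrS]
    rw [hJsum, this] at hlt
    linarith
end

section
/- The per-unit worst-case cost of any coalition is at least the per-unit optimal system cost: for every 0 < s ≤ R, (1/R)·J*_sys ≤ (1/s)·W(s). -/
open scoped BigOperators

open Set

variable {L : ℕ}

lemma aux_Tl_hasDerivAt (M : Model L) (l : Fin L) {u : ℝ} (hu0 : 0 < u) (huc : u < M.c l) :
    HasDerivAt (fun x => M.T (M.c l - x)) (M.Tl' l u) u := by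
  have hmem : Set.Ico (0:ℝ) (M.c l) ∈ nhds u := Ico_mem_nhds hu0 huc
  have hd : DifferentiableWithinAt ℝ (fun x => M.T (M.c l - x)) (Set.Ico 0 (M.c l)) u :=
    (M.T_smooth l).differentiableOn one_ne_zero u ⟨hu0.le, huc⟩
  have : DifferentiableAt ℝ (fun x => M.T (M.c l - x)) u := hd.differentiableAt hmem
  exact this.hasDerivAt

lemma aux_tangent (M : Model L) (l : Fin L) {u v : ℝ} (hu0 : 0 < u) (huc : u < M.c l)
    (hv : v ∈ Set.Ico (0:ℝ) (M.c l)) :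
    M.T (M.c l - u) + M.Tl' l u * (v - u) ≤ M.T (M.c l - v) := by
  have hdiff : DifferentiableAt ℝ (fun x => M.T (M.c l - x)) u :=
    (aux_Tl_hasDerivAt M l hu0 huc).differentiableAt
  have huI : u ∈ Set.Ico (0:ℝ) (M.c l) := ⟨hu0.le, huc⟩
  have hderiv : deriv (fun x => M.T (M.c l - x)) u = M.Tl' l u := rfl
  rcases lt_trichotomy v u with h | h | h
  · have := (M.T_convex l).slope_le_deriv hv huI h hdiff
    rw [slope_def_field, hderiv] at this
    have hpos : 0 < u - v := by linarith
    rw [div_le_iff₀ hpos] at this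
    nlinarith
  · subst h; simp
  · have := (M.T_convex l).deriv_le_slope huI hv h hdiff
    rw [slope_def_field, hderiv] at this
    have hpos : 0 < v - u := by linarith
    rw [le_div_iff₀ hpos] at this
    nlinarith

lemma aux_deriv_nonneg (M : Model L) (l : Fin L) {u : ℝ} (hu0 : 0 < u) (huc : u < M.c l) :
    0 ≤ M.Tl' l u := by
  have h0 : (0:ℝ) ∈ Set.Ico (0:ℝ) (M.c l) := ⟨le_rfl, M.c_pos l⟩
  have ht := aux_tangent M l hu0 huc h0
  have hmono := M.T_mono l h0 ⟨hu0.le, huc⟩ hu0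
  simp only [sub_zero] at ht hmono
  nlinarith

lemma aux_T_anti (M : Model L) (l : Fin L) {x y : ℝ} (hx : x ∈ Set.Ico (0:ℝ) (M.c l))
    (hy : y ∈ Set.Ico (0:ℝ) (M.c l)) (hxy : x ≤ y) :
    M.T (M.c l - x) ≤ M.T (M.c l - y) :=
  (M.T_mono l).monotoneOn hx hy hxy

lemma aux_rdn {h : ℝ → ℝ} {d m : ℝ} (hm : 0 < m)
    (hd : HasDerivWithinAt h d (Set.Icc 0 m) 0)
    (hmin : ∀ δ ∈ Set.Icc (0:ℝ) m, h 0 ≤ h δ) : 0 ≤ d := by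
  have hslope := hasDerivWithinAt_iff_tendsto_slope.mp hd
  have hset : Set.Icc (0:ℝ) m \ {0} = Set.Ioc 0 m := Set.Icc_diff_left
  rw [hset] at hslope
  have hne : (nhdsWithin (0:ℝ) (Set.Ioc 0 m)).NeBot := by
    apply mem_closure_iff_nhdsWithin_neBot.mp
    rw [closure_Ioc hm.ne]
    exact ⟨le_rfl, hm.le⟩
  refine ge_of_tendsto hslope ?_
  filter_upwards [self_mem_nhdsWithin] with y hy
  have hy0 : 0 < y := hy.1
  have : h 0 ≤ h y := hmin y ⟨hy0.le, hy.2⟩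
  rw [slope_def_field]
  apply div_nonneg <;> linarith


/-- Every candidate follower cost is nonnegative. -/
lemma aux_cost_nonneg (M : Model L) {s : ℝ} (g f : Fin L → ℝ) (hg0 : ∀ l, 0 ≤ g l)
    (hf : IsFlow s f)
    (hfc : ∀ l, 0 < f l → g l + f l < M.c l) : 0 ≤ M.cost g f := by
  apply Finset.sum_nonneg
  intro l _
  rcases eq_or_lt_of_le (hf.1 l) with h | h
  · simp [← h]
  · have hx : g l + f l ∈ Set.Ico (0:ℝ) (M.c l) := by
      constructor
      · nlinarith [hf.1 l, hg0 l]
      · exact hfc l h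
    have := M.T_pos l _ hx
    have he : M.c l - (g l + f l) = M.c l - g l - f l := by ring
    rw [he] at this
    positivity

lemma aux_phi_bddBelow (M : Model L) (s : ℝ) (g : Fin L → ℝ) (hg0 : ∀ l, 0 ≤ g l) :
    BddBelow { J | ∃ f : Fin L → ℝ, IsFlow s f ∧ (∀ l, 0 < f l → g l + f l < M.c l) ∧
      J = M.cost g f } := by
  refine ⟨0, ?_⟩
  rintro J ⟨f, hf, hfc, rfl⟩
  exact aux_cost_nonneg M g f hg0 hf hfc

/-- There is a feasible follower flow with uniformly bounded cost. -/
lemma aux_feasible (M : Model L) (R s : ℝ) (hR : 0 < R) (hRc : R < ∑ l, M.c l)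
    (hs : 0 < s) (hsR : s ≤ R) (g : Fin L → ℝ) (hg0 : ∀ l, 0 ≤ g l)
    (hgsum : ∑ l, g l = R - s) :
    ∃ f : Fin L → ℝ, IsFlow s f ∧ (∀ l, 0 < f l → g l + f l < M.c l) ∧
      M.cost g f ≤ s * M.T ((∑ l, M.c l - R) / (2 * L) * ((∑ l, M.c l - R) / 2)
        / (∑ l, M.c l)) := by
  classical
  have hΓ : 0 < ∑ l, M.c l := lt_trans hR hRc
  set Γ := ∑ l, M.c l with hGdef
  set Δ := Γ - R with hDdef
  have hΔ : 0 < Δ := by rw [hDdef]; linarith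
  have hL : (0:ℝ) < (L:ℝ) := by exact_mod_cast M.hL
  set δ₁ : ℝ := Δ / (2 * L) with hd1def
  have hδ₁ : 0 < δ₁ := by positivity
  set δ₂ : ℝ := δ₁ * (Δ / 2) / Γ with hd2def
  have hδ₂ : 0 < δ₂ := by positivity
  set P : Finset (Fin L) := Finset.univ.filter (fun l => δ₁ ≤ M.c l - g l) with hPdef
  set S : ℝ := ∑ l ∈ P, (M.c l - g l) with hSdef
  have hsumall : ∑ l, (M.c l - g l) = s + Δ := by
    rw [Finset.sum_sub_distrib, hgsum]; rw [hDdef]; ring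
  have hS : s + Δ / 2 ≤ S := by
    have hsplit := Finset.sum_filter_add_sum_filter_not Finset.univ
      (fun l => δ₁ ≤ M.c l - g l) (fun l => M.c l - g l)
    have hother : ∑ l ∈ Finset.univ.filter (fun l => ¬ (δ₁ ≤ M.c l - g l)), (M.c l - g l)
        ≤ ∑ l ∈ Finset.univ.filter (fun l => ¬ (δ₁ ≤ M.c l - g l)), δ₁ := by
      apply Finset.sum_le_sum
      intro l hl
      have := (Finset.mem_filter.mp hl).2
      linarith [lt_of_not_ge this]
    have hcard : ∑ l ∈ Finset.univ.filter (fun l => ¬ (δ₁ ≤ M.c l - g l)), δ₁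
        ≤ (L:ℝ) * δ₁ := by
      rw [Finset.sum_const, nsmul_eq_mul]
      have hcl : ((Finset.univ.filter (fun l => ¬ (δ₁ ≤ M.c l - g l))).card : ℝ) ≤ (L:ℝ) := by
        have h1 := Finset.card_filter_le Finset.univ (fun l => ¬ (δ₁ ≤ M.c l - g l))
        have h2 : (Finset.univ : Finset (Fin L)).card = L := by simp
        exact_mod_cast le_trans h1 (le_of_eq h2)
      nlinarith [hδ₁]
    have hLδ : (L:ℝ) * δ₁ = Δ / 2 := by
      rw [hd1def]; field_simp
    rw [hSdef]
    nlinarith [hsplit, hother, hcard, hsumall]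
  have hSpos : 0 < S := by nlinarith [hs, hΔ]
  have hSΓ : S ≤ Γ := by
    have h1 : S ≤ ∑ l ∈ P, M.c l := by
      apply Finset.sum_le_sum; intro l _; linarith [hg0 l]
    have h2 : ∑ l ∈ P, M.c l ≤ Γ := by
      rw [hGdef]
      apply Finset.sum_le_sum_of_subset_of_nonneg (Finset.subset_univ P)
      intro l _ _; exact (M.c_pos l).le
    linarith
  set f : Fin L → ℝ := fun l => if l ∈ P then s / S * (M.c l - g l) else 0 with hfdef
  have hmemP : ∀ l ∈ P, δ₁ ≤ M.c l - g l := by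
    intro l hl; exact (Finset.mem_filter.mp hl).2
  have hf0 : ∀ l, 0 ≤ f l := by
    intro l
    rw [hfdef]; dsimp only
    split
    · rename_i hl
      have h := hmemP l hl
      have : 0 ≤ M.c l - g l := by linarith
      positivity
    · exact le_rfl
  have hfsum : ∑ l, f l = s := by
    rw [hfdef]
    rw [Finset.sum_ite_mem, Finset.univ_inter, ← Finset.mul_sum, ← hSdef]
    field_simp
  have hslack : ∀ l ∈ P, δ₂ ≤ M.c l - g l - f l := by
    intro l hl
    have ha := hmemP l hl
    have hfl : f l = s / S * (M.c l - g l) := by rw [hfdef]; simp [hl]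
    rw [hfl]
    have key : δ₁ * (Δ / 2) / Γ ≤ (M.c l - g l) * (S - s) / S := by
      apply div_le_div₀ (by nlinarith) (by nlinarith) hSpos hSΓ
    have he : (M.c l - g l) * (S - s) / S = M.c l - g l - s / S * (M.c l - g l) := by
      field_simp
    rw [he] at key
    rw [← hd2def] at key
    exact key
  have hslack2 : ∀ l ∈ P, M.c l - g l - f l ≤ M.c l - g l := by
    intro l hl; have := hf0 l; linarith
  have hfeas : ∀ l, 0 < f l → g l + f l < M.c l := by
    intro l hfl
    have hl : l ∈ P := by
      by_contra h
      rw [hfdef] at hfl; simp [h] at hfl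
    have := hslack l hl
    linarith [hδ₂]
  refine ⟨f, ⟨hf0, hfsum⟩, hfeas, ?_⟩
  have hbnd : ∀ l, f l * M.T (M.c l - g l - f l) ≤ f l * M.T δ₂ := by
    intro l
    by_cases hl : l ∈ P
    · have h1 := hslack l hl
      have h2 := hslack2 l hl
      have hfl0 := hf0 l
      have hga : g l + f l ∈ Set.Ico (0:ℝ) (M.c l) := by
        constructor
        · have := hg0 l; linarith
        · have := hslack l hl; linarith [hδ₂]
      have hgb : M.c l - δ₂ ∈ Set.Ico (0:ℝ) (M.c l) := by
        constructor
        · have hga2 := hg0 l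
          have : δ₂ ≤ M.c l := by linarith
          linarith
        · linarith [hδ₂]
      have hle : g l + f l ≤ M.c l - δ₂ := by linarith
      have := aux_T_anti M l hga hgb hle
      have he1 : M.c l - (g l + f l) = M.c l - g l - f l := by ring
      have he2 : M.c l - (M.c l - δ₂) = δ₂ := by ring
      rw [he1, he2] at this
      exact mul_le_mul_of_nonneg_left this hfl0
    · rw [hfdef]; simp [hl]
  calc M.cost g f ≤ ∑ l, f l * M.T δ₂ := Finset.sum_le_sum (fun l _ => hbnd l)
    _ = s * M.T δ₂ := by rw [← Finset.sum_mul, hfsum]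
    _ = s * M.T ((∑ l, M.c l - R) / (2 * L) * ((∑ l, M.c l - R) / 2) / (∑ l, M.c l)) := by
        rw [hd2def, hd1def, hDdef, hGdef]


lemma aux_psi_deriv (M : Model L) (l : Fin L) (σ b : ℝ) (hb : 0 < b) (hbc : b < M.c l)
    {x : ℝ} (hx : x ∈ Set.Icc (0:ℝ) b) :
    HasDerivWithinAt
      (fun y => (1 - σ) * (∫ u in (0:ℝ)..y, M.T (M.c l - min (max u 0) b)) +
        σ * (y * M.T (M.c l - y)))
      (M.T (M.c l - x) + σ * (x * M.Tl' l x)) (Set.Icc 0 b) x := by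
  have hTl : ContinuousOn (fun x => M.T (M.c l - x)) (Set.Ico 0 (M.c l)) :=
    (M.T_smooth l).continuousOn
  have hclamp : Continuous (fun u : ℝ => min (max u 0) b) :=
    (continuous_id.max continuous_const).min continuous_const
  have hmem : ∀ u : ℝ, min (max u 0) b ∈ Set.Ico (0:ℝ) (M.c l) := by
    intro u
    constructor
    · exact le_min (le_max_right u 0) hb.le
    · exact lt_of_le_of_lt (min_le_right _ _) hbc
  have hGcont : Continuous (fun u : ℝ => M.T (M.c l - min (max u 0) b)) :=
    hTl.comp_continuous hclamp hmem
  have hInt : HasDerivAt (fun y : ℝ => ∫ u in (0:ℝ)..y, M.T (M.c l - min (max u 0) b))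
      (M.T (M.c l - min (max x 0) b)) x :=
    (hGcont.integral_hasStrictDerivAt 0 x).hasDerivAt
  have hGx : M.T (M.c l - min (max x 0) b) = M.T (M.c l - x) := by
    rw [max_eq_left hx.1, min_eq_left hx.2]
  rw [hGx] at hInt
  have hPart1 : HasDerivWithinAt
      (fun y : ℝ => (1 - σ) * (∫ u in (0:ℝ)..y, M.T (M.c l - min (max u 0) b)))
      ((1 - σ) * M.T (M.c l - x)) (Set.Icc 0 b) x :=
    (hInt.const_mul (1 - σ)).hasDerivWithinAt
  rcases eq_or_lt_of_le hx.1 with h0 | h0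
  · -- x = 0
    subst h0
    have hcw : ContinuousWithinAt (fun x => M.T (M.c l - x)) (Set.Icc (0:ℝ) b \ {0}) 0 := by
      apply (hTl 0 ⟨le_rfl, M.c_pos l⟩).mono
      intro y hy
      exact ⟨hy.1.1, lt_of_le_of_lt hy.1.2 hbc⟩
    have hmul0 : HasDerivWithinAt (fun y : ℝ => y * M.T (M.c l - y))
        (M.T (M.c l - 0)) (Set.Icc 0 b) 0 := by
      rw [hasDerivWithinAt_iff_tendsto_slope]
      apply Filter.Tendsto.congr' _ hcw
      filter_upwards [self_mem_nhdsWithin] with y hy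
      have hy0 : y ≠ 0 := hy.2
      rw [slope_def_field]
      field_simp
      ring
    have := hPart1.add (hmul0.const_mul σ)
    exact this.congr_deriv (by ring)
  · -- 0 < x
    have hTd := aux_Tl_hasDerivAt M l h0 (lt_of_le_of_lt hx.2 hbc)
    have hmul : HasDerivAt (fun y : ℝ => y * M.T (M.c l - y))
        (1 * M.T (M.c l - x) + x * M.Tl' l x) x := (hasDerivAt_id x).mul hTd
    have := hPart1.add ((hmul.hasDerivWithinAt).const_mul σ)
    exact this.congr_deriv (by ring)


set_option maxHeartbeats 2000000 in
lemma aux_core (M : Model L) (R s ε B : ℝ) (hR : 0 < R) (hRc : R < ∑ l, M.c l)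
    (hs : 0 < s) (hsR : s ≤ R) (hε : 0 < ε) (hεc : ∀ l, ε < M.c l)
    (hεΔ : ε ≤ (∑ l, M.c l - R) / (2 * L)) (hB0 : 0 ≤ B)
    (hB : ∀ l : Fin L, ∀ x : ℝ, 0 ≤ x → x ≤ M.c l - (∑ l', M.c l' - R) / L →
      M.T (M.c l - x) + s / R * (x * M.Tl' l x) ≤ B) :
    ∃ g t : Fin L → ℝ, IsFlow (R - s) g ∧ IsFlow R t ∧ (∀ l, t l < M.c l) ∧
      s / R * (∑ l, t l * M.T (M.c l - t l)) - L * B * ε ≤ M.Phi s g := by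
  classical
  have hnL : Nonempty (Fin L) := ⟨⟨0, M.hL⟩⟩
  have hL : (0:ℝ) < (L:ℝ) := by exact_mod_cast M.hL
  have hΓ : 0 < ∑ l, M.c l := lt_trans hR hRc
  set Γ := ∑ l, M.c l with hGdef
  set Δ := Γ - R with hDdef
  have hΔ : 0 < Δ := by rw [hDdef]; linarith
  set σ := s / R with hsig
  have hσ0 : 0 < σ := by positivity
  have hσ1 : σ ≤ 1 := by rw [hsig]; exact div_le_one_of_le₀ hsR hR.le
  have hσR : σ * R = s := by rw [hsig]; field_simp
  set b : Fin L → ℝ := fun l => M.c l - ε with hbdef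
  have hb : ∀ l, 0 < b l := fun l => by rw [hbdef]; dsimp only; linarith [hεc l]
  have hbc : ∀ l, b l < M.c l := fun l => by rw [hbdef]; dsimp only; linarith
  set ψ : Fin L → ℝ → ℝ := fun l y =>
    (1 - σ) * (∫ u in (0:ℝ)..y, M.T (M.c l - min (max u 0) (b l))) +
      σ * (y * M.T (M.c l - y)) with hψdef
  set ρ : Fin L → ℝ → ℝ := fun l x => M.T (M.c l - x) + σ * (x * M.Tl' l x) with hρdef
  have hψd : ∀ l : Fin L, ∀ x ∈ Set.Icc (0:ℝ) (b l),
      HasDerivWithinAt (ψ l) (ρ l x) (Set.Icc 0 (b l)) x :=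
    fun l x hx => aux_psi_deriv M l σ (b l) (hb l) (hbc l) hx
  set K : Set (Fin L → ℝ) :=
    {t | (∀ l, t l ∈ Set.Icc (0:ℝ) (b l)) ∧ ∑ l, t l = R} with hKdef
  have hbsum : R ≤ ∑ l, b l := by
    have : ∑ l, b l = Γ - L * ε := by
      rw [hbdef, hGdef]; rw [Finset.sum_sub_distrib]; simp [Finset.card_univ]
    rw [this]
    have h2 : (L:ℝ) * ε ≤ (L:ℝ) * (Δ / (2 * L)) := mul_le_mul_of_nonneg_left hεΔ hL.le
    have h3 : (L:ℝ) * (Δ / (2 * L)) = Δ / 2 := by field_simp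
    linarith
  have hbsumpos : 0 < ∑ l, b l := lt_of_lt_of_le hR hbsum
  have hKne : K.Nonempty := by
    refine ⟨fun l => R * b l / (∑ l', b l'), ?_, ?_⟩
    · intro l
      constructor
      · exact div_nonneg (by nlinarith [hb l]) hbsumpos.le
      · rw [div_le_iff₀ hbsumpos]
        nlinarith [hb l, hbsum]
    · rw [← Finset.sum_div, ← Finset.mul_sum]
      field_simp
  have hKcomp : IsCompact K := by
    have hKeq : K = (Set.pi Set.univ (fun l => Set.Icc (0:ℝ) (b l))) ∩
        {t | ∑ l, t l = R} := by
      ext u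
      simp only [hKdef, Set.mem_inter_iff, Set.mem_setOf_eq, Set.mem_univ_pi]
    rw [hKeq]
    apply IsCompact.inter_right (isCompact_univ_pi (fun l => isCompact_Icc))
    exact isClosed_eq (continuous_finset_sum _ (fun l _ => continuous_apply l))
      continuous_const
  set Ψ : (Fin L → ℝ) → ℝ := fun t => ∑ l, ψ l (t l) with hΨdef
  have hΨcont : ContinuousOn Ψ K := by
    apply continuousOn_finset_sum
    intro l _
    have h1 : ContinuousOn (ψ l) (Set.Icc 0 (b l)) :=
      fun x hx => (hψd l x hx).continuousWithinAt
    exact h1.comp (continuous_apply l).continuousOn (fun t ht => ht.1 l)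
  obtain ⟨t, htK, htmin⟩ := hKcomp.exists_isMinOn hKne hΨcont
  have htmem := htK.1
  have htsum := htK.2
  -- exchange inequality
  have hexch : ∀ i j : Fin L, i ≠ j → 0 < t i → t j < b j →
      ρ i (t i) ≤ ρ j (t j) := by
    intro i j hij hti htj
    have hji : j ≠ i := hij.symm
    set δm := min (t i) (b j - t j) with hδmdef
    have hδm : 0 < δm := lt_min hti (by linarith)
    set Pt : ℝ → Fin L → ℝ :=
      fun δ l => if l = j then t j + δ else if l = i then t i - δ else t l with hPtdef
    have hPtK : ∀ δ ∈ Set.Icc (0:ℝ) δm, Pt δ ∈ K := by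
      intro δ hδ
      have hδ0 := hδ.1
      have hδ1 : δ ≤ t i := le_trans hδ.2 (min_le_left _ _)
      have hδ2 : δ ≤ b j - t j := le_trans hδ.2 (min_le_right _ _)
      constructor
      · intro l
        rw [hPtdef]; dsimp only
        by_cases hlj : l = j
        · rw [if_pos hlj]
          subst hlj
          exact ⟨by linarith [(htmem l).1], by linarith⟩
        · rw [if_neg hlj]
          by_cases hli : l = i
          · rw [if_pos hli]
            subst hli
            exact ⟨by linarith, by linarith [(htmem l).2]⟩
          · rw [if_neg hli]
            exact htmem l
      · have hPval : ∀ l, Pt δ l = t l + ((if l = j then δ else 0) -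
            (if l = i then δ else 0)) := by
          intro l
          rw [hPtdef]; dsimp only
          by_cases hlj : l = j
          · subst hlj
            rw [if_pos rfl, if_pos rfl, if_neg hji]
            ring
          · rw [if_neg hlj, if_neg hlj]
            by_cases hli : l = i
            · subst hli
              rw [if_pos rfl, if_pos rfl]
              ring
            · rw [if_neg hli, if_neg hli]
              ring
        rw [Finset.sum_congr rfl (fun l _ => hPval l), Finset.sum_add_distrib,
          Finset.sum_sub_distrib, htsum]
        simp [Finset.sum_ite_eq']
    have hmaps_j : Set.MapsTo (fun δ : ℝ => t j + δ) (Set.Icc 0 δm) (Set.Icc 0 (b j)) := by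
      intro δ hδ
      simp only [Set.mem_Icc] at hδ ⊢
      have hδ2 : δ ≤ b j - t j := le_trans hδ.2 (min_le_right _ _)
      constructor
      · linarith [(htmem j).1]
      · linarith
    have hmaps_i : Set.MapsTo (fun δ : ℝ => t i - δ) (Set.Icc 0 δm) (Set.Icc 0 (b i)) := by
      intro δ hδ
      simp only [Set.mem_Icc] at hδ ⊢
      have hδ1 : δ ≤ t i := le_trans hδ.2 (min_le_left _ _)
      constructor
      · linarith
      · linarith [(htmem i).2]
    have hterm : ∀ l : Fin L, HasDerivWithinAt (fun δ => ψ l (Pt δ l))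
        (if l = j then ρ j (t j) else if l = i then -(ρ i (t i)) else 0)
        (Set.Icc 0 δm) 0 := by
      intro l
      by_cases hlj : l = j
      · subst hlj
        rw [if_pos rfl]
        have hfun : (fun δ => ψ l (Pt δ l)) = fun δ => ψ l (t l + δ) := by
          funext δ; rw [hPtdef]; simp
        have hinner : HasDerivWithinAt (fun δ : ℝ => t l + δ) 1 (Set.Icc 0 δm) 0 := by
          simpa using (hasDerivWithinAt_id (0:ℝ) (Set.Icc 0 δm)).const_add (t l)
        have houter : HasDerivWithinAt (ψ l) (ρ l (t l)) (Set.Icc 0 (b l)) ((fun δ : ℝ => t l + δ) 0) := by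
          simpa using hψd l (t l) ⟨(htmem l).1, le_of_lt htj⟩
        have hcomp := HasDerivWithinAt.comp (0:ℝ) houter hinner hmaps_j
        rw [hfun]
        exact hcomp.congr_deriv (mul_one _)
      · rw [if_neg hlj]
        by_cases hli : l = i
        · subst hli
          rw [if_pos rfl]
          have hfun : (fun δ => ψ l (Pt δ l)) = fun δ => ψ l (t l - δ) := by
            funext δ; rw [hPtdef]; simp [hlj]
          have hinner : HasDerivWithinAt (fun δ : ℝ => t l - δ) (-1) (Set.Icc 0 δm) 0 := by
            simpa using (hasDerivWithinAt_id (0:ℝ) (Set.Icc 0 δm)).const_sub (t l)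
          have houter : HasDerivWithinAt (ψ l) (ρ l (t l)) (Set.Icc 0 (b l)) ((fun δ : ℝ => t l - δ) 0) := by
            simpa using hψd l (t l) (htmem l)
          have hcomp := HasDerivWithinAt.comp (0:ℝ) houter hinner hmaps_i
          rw [hfun]
          exact hcomp.congr_deriv (by ring)
        · rw [if_neg hli]
          have hfun : (fun δ => ψ l (Pt δ l)) = fun _ => ψ l (t l) := by
            funext δ; rw [hPtdef]; simp [hlj, hli]
          rw [hfun]
          exact hasDerivWithinAt_const _ _ _
    have hsum := HasDerivWithinAt.fun_sum (fun l (_ : l ∈ Finset.univ) => hterm l)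
    have hval : ∑ l, (if l = j then ρ j (t j) else if l = i then -(ρ i (t i)) else 0) =
        ρ j (t j) - ρ i (t i) := by
      have hsplit : ∀ l : Fin L, (if l = j then ρ j (t j) else if l = i then -(ρ i (t i)) else 0) =
          (if l = j then ρ j (t j) else 0) + (if l = i then -(ρ i (t i)) else 0) := by
        intro l
        by_cases hlj : l = j
        · subst hlj; simp [hji]
        · by_cases hli : l = i
          · subst hli; simp [hlj]
          · simp [hlj, hli]
      rw [Finset.sum_congr rfl (fun l _ => hsplit l), Finset.sum_add_distrib]
      simp [Finset.sum_ite_eq']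
      ring
    rw [hval] at hsum
    have hγ : HasDerivWithinAt (fun δ => Ψ (Pt δ)) (ρ j (t j) - ρ i (t i))
        (Set.Icc 0 δm) 0 := hsum
    have hPt0 : Pt 0 = t := by
      funext l
      rw [hPtdef]; dsimp only
      by_cases hlj : l = j
      · subst hlj; rw [if_pos rfl]; ring
      · rw [if_neg hlj]
        by_cases hli : l = i
        · subst hli; rw [if_pos rfl]; ring
        · rw [if_neg hli]
    have hmin : ∀ δ ∈ Set.Icc (0:ℝ) δm, (fun δ => Ψ (Pt δ)) 0 ≤ (fun δ => Ψ (Pt δ)) δ := by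
      intro δ hδ
      dsimp only
      rw [hPt0]
      exact isMinOn_iff.mp htmin (Pt δ) (hPtK δ hδ)
    have := aux_rdn hδm hγ hmin
    linarith
  -- a link with large slack
  have hjstar : ∃ j : Fin L, Δ / L ≤ M.c j - t j := by
    by_contra hcon
    push_neg at hcon
    have h1 : ∑ l, (M.c l - t l) < ∑ l : Fin L, Δ / (L:ℝ) :=
      Finset.sum_lt_sum_of_nonempty Finset.univ_nonempty (fun l _ => hcon l)
    rw [Finset.sum_sub_distrib, htsum, Finset.sum_const, Finset.card_univ] at h1
    simp only [Fintype.card_fin, nsmul_eq_mul] at h1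
    rw [← hGdef] at h1
    have : (L:ℝ) * (Δ / L) = Δ := by field_simp
    rw [this] at h1
    rw [hDdef] at h1
    linarith
  obtain ⟨js, hjs⟩ := hjstar
  set N : Finset (Fin L) := Finset.univ.filter (fun l => t l < b l) with hNdef
  have hjsN : js ∈ N := by
    rw [hNdef]
    simp only [Finset.mem_filter, Finset.mem_univ, true_and]
    rw [hbdef]
    have : ε < Δ / L := lt_of_le_of_lt hεΔ (by rw [div_lt_div_iff₀ (by positivity) hL]; nlinarith)
    dsimp only
    linarith
  have hNne : N.Nonempty := ⟨js, hjsN⟩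
  set μ := N.inf' hNne (fun l => ρ l (t l)) with hμdef
  have hμ_le : ∀ l ∈ N, μ ≤ ρ l (t l) := fun l hl => Finset.inf'_le _ hl
  have hpos_le_μ : ∀ l, 0 < t l → ρ l (t l) ≤ μ := by
    intro l hl
    apply Finset.le_inf'
    intro j hj
    rcases eq_or_ne l j with rfl | hne
    · exact le_rfl
    · exact hexch l j hne hl ((Finset.mem_filter.mp hj).2)
  have hμB : μ ≤ B := by
    refine le_trans (Finset.inf'_le _ hjsN) ?_
    have := hB js (t js) (htmem js).1 (by linarith)
    rw [hρdef]
    exact this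
  have hρ0 : ∀ l, 0 ≤ ρ l (t l) := by
    intro l
    clear_value ψ Ψ K
    clear htmin hΨcont hψd hKcomp hKne htK hΨdef hKdef hψdef Ψ K ψ
    have htl := htmem l
    have htlc : t l < M.c l := lt_of_le_of_lt htl.2 (hbc l)
    have hTpos := M.T_pos l (t l) ⟨htl.1, htlc⟩
    rw [hρdef]; dsimp only
    rcases eq_or_lt_of_le htl.1 with h0 | h0
    · rw [← h0]
      simp only [zero_mul, mul_zero, add_zero]
      rw [← h0] at hTpos
      linarith
    · have hD := aux_deriv_nonneg M l h0 htlc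
      nlinarith [mul_nonneg (mul_nonneg hσ0.le htl.1) hD]
  set g : Fin L → ℝ := fun l => (1 - σ) * t l with hgdef
  have hg0 : ∀ l, 0 ≤ g l := by
    intro l; rw [hgdef]; dsimp only
    have := (htmem l).1
    nlinarith
  have hgsum : ∑ l, g l = R - s := by
    rw [hgdef, ← Finset.mul_sum, htsum]
    nlinarith [hσR]
  have htltc : ∀ l, t l < M.c l := fun l => lt_of_le_of_lt (htmem l).2 (hbc l)
  refine ⟨g, t, ⟨hg0, hgsum⟩, ⟨fun l => (htmem l).1, htsum⟩, htltc, ?_⟩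
  -- lower bound on Phi
  apply le_csInf
  · obtain ⟨f₁, hf₁, hfc₁, _⟩ := aux_feasible M R s hR hRc hs hsR g hg0 hgsum
    exact ⟨M.cost g f₁, f₁, hf₁, hfc₁, rfl⟩
  rintro J ⟨f, hf, hfc, rfl⟩
  have key1 : ∀ l, σ * t l * M.T (M.c l - t l) + ρ l (t l) * (f l - σ * t l) ≤
      f l * M.T (M.c l - g l - f l) := by
    intro l
    clear_value ψ Ψ K
    clear htmin hΨcont hψd hKcomp hKne htK hΨdef hKdef hψdef Ψ K ψ
    have htl := htmem l
    have htlc : t l < M.c l := lt_of_le_of_lt htl.2 (hbc l)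
    have hgl : g l = (1 - σ) * t l := rfl
    have hfl0 := hf.1 l
    rw [hρdef]; dsimp only
    rcases eq_or_lt_of_le htl.1 with h0 | h0
    · -- t l = 0
      rw [← h0]
      have hgl0 : g l = 0 := by rw [hgl, ← h0]; ring
      rw [hgl0]
      simp only [mul_zero, zero_mul, add_zero, sub_zero, zero_add, zero_sub, sub_neg_eq_add]
      rcases eq_or_lt_of_le hfl0 with hf0 | hf0
      · rw [← hf0]; simp
      · have hflc : f l < M.c l := by
          have := hfc l hf0; rw [hgl0] at this; linarith
        have h1 : M.T (M.c l - 0) ≤ M.T (M.c l - f l) :=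
          aux_T_anti M l ⟨le_rfl, M.c_pos l⟩ ⟨hfl0, hflc⟩ hfl0
        rw [sub_zero] at h1
        nlinarith [h1]
    · -- 0 < t l
      have hD : 0 ≤ M.Tl' l (t l) := aux_deriv_nonneg M l h0 htlc
      have hv : g l + f l ∈ Set.Ico (0:ℝ) (M.c l) := by
        constructor
        · have := hg0 l; linarith
        · rcases eq_or_lt_of_le hfl0 with hf0 | hf0
          · rw [← hf0, add_zero, hgl]
            nlinarith [htl.1]
          · exact hfc l hf0
      have htan := aux_tangent M l h0 htlc hv
      have hvu : g l + f l - t l = f l - σ * t l := by rw [hgl]; ring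
      rw [hvu] at htan
      have hTv : M.c l - g l - f l = M.c l - (g l + f l) := by ring
      rw [hTv]
      have h1 : f l * (M.T (M.c l - t l) + M.Tl' l (t l) * (f l - σ * t l)) ≤
          f l * M.T (M.c l - (g l + f l)) := mul_le_mul_of_nonneg_left htan hfl0
      nlinarith [h1, mul_nonneg hD (sq_nonneg (f l - σ * t l))]
  have key2 : ∀ l, μ * (f l - σ * t l) - B * ε ≤ ρ l (t l) * (f l - σ * t l) := by
    intro l
    clear_value ψ Ψ K
    clear htmin hΨcont hψd hKcomp hKne htK hΨdef hKdef hψdef Ψ K ψ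
    have htl := htmem l
    have hexpand : ρ l (t l) * (f l - σ * t l) - μ * (f l - σ * t l) =
        (ρ l (t l) - μ) * (f l - σ * t l) := by ring
    rcases lt_or_eq_of_le htl.2 with hlt | hsat
    · have hlN : l ∈ N := by
        rw [hNdef]; simp only [Finset.mem_filter, Finset.mem_univ, true_and]; exact hlt
      have h1 := hμ_le l hlN
      rcases eq_or_lt_of_le htl.1 with h0 | h0
      · have hfx : 0 ≤ f l - σ * t l := by rw [← h0]; simp [hf.1 l]
        have h2 : 0 ≤ (ρ l (t l) - μ) * (f l - σ * t l) :=
          mul_nonneg (by linarith) hfx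
        nlinarith [mul_nonneg hB0 hε.le]
      · have h2 := hpos_le_μ l h0
        have heq : ρ l (t l) = μ := le_antisymm h2 h1
        rw [heq]
        nlinarith [mul_nonneg hB0 hε.le]
    · -- saturated
      have hpos : 0 < t l := by rw [hsat]; exact hb l
      have h2 := hpos_le_μ l hpos
      have hbl : b l = M.c l - ε := rfl
      have hub : f l - σ * t l ≤ ε := by
        rcases eq_or_lt_of_le (hf.1 l) with hf0 | hf0
        · rw [← hf0]
          nlinarith [mul_nonneg hσ0.le htl.1, hε]
        · have hflt := hfc l hf0
          have hglv : g l = (1 - σ) * t l := rfl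
          rw [hglv] at hflt
          have : t l = M.c l - ε := by rw [hsat, hbl]
          nlinarith [this]
      have h3 : (ρ l (t l) - μ) * ε ≤ (ρ l (t l) - μ) * (f l - σ * t l) :=
        mul_le_mul_of_nonpos_left hub (by linarith)
      have h4 : (0 - B) * ε ≤ (ρ l (t l) - μ) * ε :=
        mul_le_mul_of_nonneg_right (by linarith [hρ0 l, hμB]) hε.le
      nlinarith [h3, h4]
  have hsumA : ∑ l, (σ * t l * M.T (M.c l - t l) + ρ l (t l) * (f l - σ * t l)) ≤
      M.cost g f := Finset.sum_le_sum (fun l _ => key1 l)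
  have hsumB : ∑ l, (μ * (f l - σ * t l) - B * ε) ≤
      ∑ l, ρ l (t l) * (f l - σ * t l) := Finset.sum_le_sum (fun l _ => key2 l)
  have hzero : ∑ l, (f l - σ * t l) = 0 := by
    rw [Finset.sum_sub_distrib, hf.2, ← Finset.mul_sum, htsum, hσR]
    ring
  have hconst : ∑ l, (μ * (f l - σ * t l) - B * ε) = -((L:ℝ) * B * ε) := by
    rw [Finset.sum_sub_distrib, ← Finset.mul_sum, hzero, Finset.sum_const,
      Finset.card_univ]
    simp [Fintype.card_fin]
    ring
  have hsplit : ∑ l, (σ * t l * M.T (M.c l - t l) + ρ l (t l) * (f l - σ * t l)) =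
      σ * (∑ l, t l * M.T (M.c l - t l)) + ∑ l, ρ l (t l) * (f l - σ * t l) := by
    rw [Finset.sum_add_distrib, Finset.mul_sum]
    congr 1
    apply Finset.sum_congr rfl
    intro l _
    ring
  have := hconst ▸ hsumB
  rw [hsplit] at hsumA
  linarith


set_option maxHeartbeats 2000000

/-- The per-unit worst-case cost of any coalition is at least the
per-unit optimal system cost: for every `0 < s ≤ R`,
`(1/R) * J*_sys ≤ (1/s) * W(s)`. -/
theorem per_unit_worst_case_ge_per_unit_optimum
    {L : ℕ} (M : Model L) (R : ℝ)
    (hR : 0 < R) (hRc : R < ∑ l, M.c l)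
    (s : ℝ) (hs : 0 < s) (hsR : s ≤ R) :
    (1 / R) * sInf { J | ∃ f : Fin L → ℝ, IsFlow R f ∧ (∀ l, f l < M.c l) ∧
        J = ∑ l, f l * M.T (M.c l - f l) }
      ≤ (1 / s) * M.W R s := by
  classical
  have hnL : Nonempty (Fin L) := ⟨⟨0, M.hL⟩⟩
  have hL : (0:ℝ) < (L:ℝ) := by exact_mod_cast M.hL
  have hΓ : 0 < ∑ l, M.c l := lt_trans hR hRc
  set Γ := ∑ l, M.c l with hGdef
  set Δ := Γ - R with hDdef
  have hΔ : 0 < Δ := by rw [hDdef]; linarith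
  set Jset := { J | ∃ f : Fin L → ℝ, IsFlow R f ∧ (∀ l, f l < M.c l) ∧
      J = ∑ l, f l * M.T (M.c l - f l) } with hJsetdef
  set Jstar := sInf Jset with hJstardef
  -- Jset is nonempty and bounded below
  have hJne : Jset.Nonempty := by
    refine ⟨∑ l, (R * M.c l / Γ) * M.T (M.c l - R * M.c l / Γ), fun l => R * M.c l / Γ,
      ⟨?_, ?_⟩, ?_, rfl⟩
    · intro l
      have := (M.c_pos l).le
      positivity
    · rw [← Finset.sum_div, ← Finset.mul_sum, ← hGdef]
      field_simp
    · intro l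
      rw [div_lt_iff₀ hΓ]
      nlinarith [M.c_pos l]
  have hJbdd : BddBelow Jset := by
    refine ⟨0, ?_⟩
    rintro J ⟨f, hf, hfc, rfl⟩
    apply Finset.sum_nonneg
    intro l _
    have := M.T_pos l (f l) ⟨hf.1 l, hfc l⟩
    nlinarith [hf.1 l]
  -- the W set is bounded above
  set Wset := { J | ∃ g : Fin L → ℝ, IsFlow (R - s) g ∧ J = M.Phi s g } with hWsetdef
  have hWbdd : BddAbove Wset := by
    refine ⟨s * M.T (Δ / (2 * L) * (Δ / 2) / Γ), ?_⟩
    rintro J ⟨g, hg, rfl⟩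
    obtain ⟨f₁, hf₁, hfc₁, hcost₁⟩ := aux_feasible M R s hR hRc hs hsR g hg.1 hg.2
    refine le_trans (csInf_le (aux_phi_bddBelow M s g hg.1) ⟨f₁, hf₁, hfc₁, rfl⟩) ?_
    rw [hDdef, hGdef]
    exact hcost₁
  -- construct the uniform bound B
  have hBex : ∀ l : Fin L, ∃ bl : ℝ, ∀ x : ℝ, 0 ≤ x → x ≤ M.c l - Δ / L →
      M.T (M.c l - x) + s / R * (x * M.Tl' l x) ≤ bl := by
    intro l
    rcases lt_or_ge (M.c l - Δ / L) 0 with hneg | hpos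
    · exact ⟨0, fun x hx1 hx2 => absurd (le_trans hx1 hx2) (not_le.mpr hneg)⟩
    · have hsub : Set.Icc (0:ℝ) (M.c l - Δ / L) ⊆ Set.Ico 0 (M.c l) := by
        intro x hx
        refine ⟨hx.1, lt_of_le_of_lt hx.2 ?_⟩
        have : 0 < Δ / L := by positivity
        linarith
      have hcont : ContinuousOn
          (fun x => M.T (M.c l - x) + s / R * (x * M.Tl' l x))
          (Set.Icc 0 (M.c l - Δ / L)) := by
        have hTc : ContinuousOn (fun x => M.T (M.c l - x)) (Set.Ico 0 (M.c l)) :=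
          (M.T_smooth l).continuousOn
        have hDc : ContinuousOn (derivWithin (fun x => M.T (M.c l - x)) (Set.Ico 0 (M.c l)))
            (Set.Ico 0 (M.c l)) :=
          (M.T_smooth l).continuousOn_derivWithin (uniqueDiffOn_Ico 0 (M.c l)) le_rfl
        have hcont2 : ContinuousOn
            (fun x => M.T (M.c l - x) +
              s / R * (x * derivWithin (fun x => M.T (M.c l - x)) (Set.Ico 0 (M.c l)) x))
            (Set.Icc 0 (M.c l - Δ / L)) := by
          apply ContinuousOn.add (hTc.mono hsub)
          apply ContinuousOn.mul continuousOn_const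
          exact (continuousOn_id.mul (hDc.mono hsub))
        apply hcont2.congr
        intro x hx
        dsimp only
        rcases eq_or_lt_of_le hx.1 with h0 | h0
        · rw [← h0]; ring
        · have hmem : Set.Ico (0:ℝ) (M.c l) ∈ nhds x :=
            Ico_mem_nhds h0 (hsub hx).2
          rw [derivWithin_of_mem_nhds hmem]
          rfl
      obtain ⟨x0, _, hx0⟩ := isCompact_Icc.exists_isMaxOn (Set.nonempty_Icc.mpr hpos) hcont
      refine ⟨M.T (M.c l - x0) + s / R * (x0 * M.Tl' l x0), ?_⟩
      intro x hx1 hx2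
      exact isMaxOn_iff.mp hx0 x ⟨hx1, hx2⟩
  choose Bf hBf using hBex
  set B := ∑ l, max 0 (Bf l) with hBdef
  have hB0 : 0 ≤ B := Finset.sum_nonneg (fun l _ => le_max_left 0 (Bf l))
  have hBle : ∀ l, Bf l ≤ B := by
    intro l
    refine le_trans (le_max_right 0 (Bf l)) ?_
    exact Finset.single_le_sum (fun l' (_ : l' ∈ Finset.univ) => le_max_left 0 (Bf l'))
      (Finset.mem_univ l)
  have hB : ∀ l : Fin L, ∀ x : ℝ, 0 ≤ x → x ≤ M.c l - (∑ l', M.c l' - R) / L →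
      M.T (M.c l - x) + s / R * (x * M.Tl' l x) ≤ B := by
    intro l x hx1 hx2
    rw [← hGdef, ← hDdef] at hx2
    exact le_trans (hBf l x hx1 hx2) (hBle l)
  -- epsilon bound
  set cmin := Finset.univ.inf' (Finset.univ_nonempty) M.c with hcmindef
  have hcmin : 0 < cmin := by
    rw [hcmindef]
    apply (Finset.lt_inf'_iff _).mpr
    exact fun l _ => M.c_pos l
  have hcminle : ∀ l, cmin ≤ M.c l := fun l => Finset.inf'_le _ (Finset.mem_univ l)
  set ε₀ := min (Δ / (2 * L)) (cmin / 2) with hε₀def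
  have hε₀ : 0 < ε₀ := lt_min (by positivity) (by positivity)
  have hcore : ∀ ε : ℝ, 0 < ε → ε ≤ ε₀ → s / R * Jstar ≤ M.W R s + L * B * ε := by
    intro ε hε hεle
    have hεc : ∀ l, ε < M.c l := fun l =>
      lt_of_le_of_lt (le_trans hεle (min_le_right _ _))
        (lt_of_lt_of_le (by linarith) (hcminle l))
    have hεΔ : ε ≤ (∑ l, M.c l - R) / (2 * L) := by
      rw [← hGdef, ← hDdef]
      exact le_trans hεle (min_le_left _ _)
    obtain ⟨g, t, hg, ht, htc, hbound⟩ :=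
      aux_core M R s ε B hR hRc hs hsR hε hεc hεΔ hB0 hB
    have hJle : Jstar ≤ ∑ l, t l * M.T (M.c l - t l) :=
      csInf_le hJbdd ⟨t, ht, htc, rfl⟩
    have hPhiW : M.Phi s g ≤ M.W R s := by
      apply le_csSup hWbdd
      exact ⟨g, hg, rfl⟩
    have hmul : s / R * Jstar ≤ s / R * ∑ l, t l * M.T (M.c l - t l) :=
      mul_le_mul_of_nonneg_left hJle (by positivity)
    linarith
  have hmain : s / R * Jstar ≤ M.W R s := by
    by_contra hcon
    push_neg at hcon
    set q := s / R * Jstar - M.W R s with hqdef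
    have hq : 0 < q := by rw [hqdef]; linarith
    set a := (L:ℝ) * B with hadef
    have ha : 0 ≤ a := by positivity
    set ε := min ε₀ (q / (2 * (a + 1))) with hεdef
    have hε : 0 < ε := lt_min hε₀ (by positivity)
    have h1 := hcore ε hε (min_le_left _ _)
    have h2 : ε ≤ q / (2 * (a + 1)) := min_le_right _ _
    have h3 : a * ε ≤ a * (q / (2 * (a + 1))) := mul_le_mul_of_nonneg_left h2 ha
    have h4 : a * (q / (2 * (a + 1))) ≤ q / 2 := by
      rw [← mul_div_assoc]
      rw [div_le_div_iff₀ (by positivity) (by norm_num : (0:ℝ) < 2)]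
      nlinarith
    linarith
  have h5 : (1 / s) * (s / R * Jstar) ≤ (1 / s) * M.W R s :=
    mul_le_mul_of_nonneg_left hmain (by positivity)
  have h6 : (1 / s) * (s / R * Jstar) = (1 / R) * Jstar := by
    field_simp
  linarith
end

section
/- The Core of the worst-case NTU coalitional game is not a singleton: if N ≥ 2 and the Wardrop equilibrium is not system optimal, then there exists a cost vector J ∈ V(N), different from the Proportional Allocation, such that for every nonempty proper coalition S and every cost vector (J′^i)_{i∈S} ∈ V(S) there exists i ∈ S with J′^i ≥ J^i. -/
open scoped BigOperators

lemma T_mono_le {L : ℕ} (M : Model L) (l : Fin L) {x y : ℝ}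
    (hx0 : 0 ≤ x) (hy : y < M.c l) (hxy : x ≤ y) :
    M.T (M.c l - x) ≤ M.T (M.c l - y) :=
  (M.T_mono l).monotoneOn ⟨hx0, lt_of_le_of_lt hxy hy⟩ ⟨le_trans hx0 hxy, hy⟩ hxy

lemma mid_ineq {L : ℕ} (M : Model L) (l : Fin L) {x y : ℝ}
    (hx0 : 0 ≤ x) (hx : x < M.c l) (hy0 : 0 ≤ y) (hy : y < M.c l) :
    ((x + y) / 2) * M.T (M.c l - (x + y) / 2) ≤
      (x * M.T (M.c l - x) + y * M.T (M.c l - y)) / 2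
        - (y - x) * (M.T (M.c l - y) - M.T (M.c l - x)) / 4 := by
  have hconv := M.T_convex l
  have h2 := hconv.2 (x := x) (y := y) ⟨hx0, hx⟩ ⟨hy0, hy⟩
    (by norm_num : (0:ℝ) ≤ 1/2) (by norm_num : (0:ℝ) ≤ 1/2) (by norm_num)
  simp only [smul_eq_mul] at h2
  have hxy : (1/2 : ℝ) * x + (1/2) * y = (x+y)/2 := by ring
  rw [hxy] at h2
  have hz0 : 0 ≤ (x + y)/2 := by linarith
  have h3 := mul_le_mul_of_nonneg_left h2 hz0
  have hid : (x+y)/2 * ((1/2) * M.T (M.c l - x) + (1/2) * M.T (M.c l - y)) =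
      (x * M.T (M.c l - x) + y * M.T (M.c l - y)) / 2
        - (y - x) * (M.T (M.c l - y) - M.T (M.c l - x)) / 4 := by ring
  linarith [hid ▸ h3]

lemma opt_unique {L : ℕ} (M : Model L) (R : ℝ)
    (fstar : Fin L → ℝ) (hfs : IsFlow R fstar) (hfs_lt : ∀ l, fstar l < M.c l)
    (hfs_opt : ∀ f : Fin L → ℝ, IsFlow R f → (∀ l, f l < M.c l) →
      ∑ l, fstar l * M.T (M.c l - fstar l) ≤ ∑ l, f l * M.T (M.c l - f l))
    (x : Fin L → ℝ) (hx0 : ∀ l, 0 ≤ x l) (hxc : ∀ l, x l < M.c l)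
    (hxs : ∑ l, x l = R)
    (hCx : ∑ l, x l * M.T (M.c l - x l) ≤ ∑ l, fstar l * M.T (M.c l - fstar l)) :
    x = fstar := by
  by_contra hne
  obtain ⟨l0, hl0⟩ : ∃ l0, x l0 ≠ fstar l0 := by
    by_contra h; push_neg at h; exact hne (funext h)
  set m : Fin L → ℝ := fun l => (x l + fstar l)/2 with hm
  have key : ∀ l : Fin L, m l * M.T (M.c l - m l) ≤
      (x l * M.T (M.c l - x l) + fstar l * M.T (M.c l - fstar l)) / 2
        - (fstar l - x l) * (M.T (M.c l - fstar l) - M.T (M.c l - x l)) / 4 :=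
    fun l => mid_ineq M l (hx0 l) (hxc l) (hfs.1 l) (hfs_lt l)
  have hrem0 : ∀ l : Fin L,
      0 ≤ (fstar l - x l) * (M.T (M.c l - fstar l) - M.T (M.c l - x l)) / 4 := by
    intro l
    rcases le_total (x l) (fstar l) with h | h
    · have := T_mono_le M l (hx0 l) (hfs_lt l) h
      have h1 : 0 ≤ fstar l - x l := by linarith
      have h2 : 0 ≤ M.T (M.c l - fstar l) - M.T (M.c l - x l) := by linarith
      have := mul_nonneg h1 h2
      linarith
    · have := T_mono_le M l (hfs.1 l) (hxc l) h
      nlinarith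
  have hrem : 0 < (fstar l0 - x l0) * (M.T (M.c l0 - fstar l0) - M.T (M.c l0 - x l0)) / 4 := by
    rcases lt_or_gt_of_ne hl0 with h | h
    · have := (M.T_mono l0) ⟨hx0 l0, hxc l0⟩ ⟨hfs.1 l0, hfs_lt l0⟩ h
      simp only at this
      nlinarith
    · have := (M.T_mono l0) ⟨hfs.1 l0, hfs_lt l0⟩ ⟨hx0 l0, hxc l0⟩ h
      simp only at this
      nlinarith
  have hmflow : IsFlow R m := by
    constructor
    · intro l; have := hx0 l; have := hfs.1 l; simp only [hm]; linarith
    · simp only [hm]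
      have e : ∑ l, (x l + fstar l) / 2 = (∑ l, (x l + fstar l)) * (1/2) := by
        rw [Finset.sum_mul]; exact Finset.sum_congr rfl (fun l _ => by ring)
      rw [e, Finset.sum_add_distrib, hxs, hfs.2]; ring
  have hmc : ∀ l, m l < M.c l := by
    intro l; have := hxc l; have := hfs_lt l; simp only [hm]; linarith
  have hsum := Finset.sum_le_sum (fun l (_ : l ∈ Finset.univ) => key l)
  have hsplit : ∑ l, ((x l * M.T (M.c l - x l) + fstar l * M.T (M.c l - fstar l)) / 2
        - (fstar l - x l) * (M.T (M.c l - fstar l) - M.T (M.c l - x l)) / 4)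
      = ((∑ l, x l * M.T (M.c l - x l)) + ∑ l, fstar l * M.T (M.c l - fstar l)) / 2
        - ∑ l, (fstar l - x l) * (M.T (M.c l - fstar l) - M.T (M.c l - x l)) / 4 := by
    rw [Finset.sum_sub_distrib, ← Finset.sum_div, Finset.sum_add_distrib]
  have hsingle : (fstar l0 - x l0) * (M.T (M.c l0 - fstar l0) - M.T (M.c l0 - x l0)) / 4
      ≤ ∑ l, (fstar l - x l) * (M.T (M.c l - fstar l) - M.T (M.c l - x l)) / 4 :=
    Finset.single_le_sum (fun l _ => hrem0 l) (Finset.mem_univ l0)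
  have hopt := hfs_opt m hmflow hmc
  rw [hsplit] at hsum
  linarith
lemma exists_links {L : ℕ} (M : Model L) (R : ℝ) (hR : 0 < R)
    (fstar : Fin L → ℝ) (hfs : IsFlow R fstar) (hfs_lt : ∀ l, fstar l < M.c l)
    (hfs_opt : ∀ f : Fin L → ℝ, IsFlow R f → (∀ l, f l < M.c l) →
      ∑ l, fstar l * M.T (M.c l - fstar l) ≤ ∑ l, f l * M.T (M.c l - f l))
    (hNW : ¬ ∀ l n : Fin L, fstar n < M.c n → 0 < fstar l →
      M.T (M.c l - fstar l) ≤ M.T (M.c n - fstar n)) :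
    ∃ a b : Fin L, 0 < fstar a ∧ 0 < fstar b ∧
      M.T (M.c b - fstar b) < M.T (M.c a - fstar a) ∧
      R * M.T (M.c b - fstar b) < ∑ l, fstar l * M.T (M.c l - fstar l) := by
  push_neg at hNW
  obtain ⟨l, n, hn_lt, hl_pos, hTln⟩ := hNW
  -- First: both endpoints of a strict latency gap can be taken used.
  have hpair : ∃ a' b' : Fin L, 0 < fstar a' ∧ 0 < fstar b' ∧
      M.T (M.c b' - fstar b') < M.T (M.c a' - fstar a') := by
    rcases lt_or_ge 0 (fstar n) with hn_pos | hn_le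
    · exact ⟨l, n, hl_pos, hn_pos, hTln⟩
    · exfalso
      have hn0 : fstar n = 0 := le_antisymm hn_le (hfs.1 n)
      have hnl : n ≠ l := by
        intro h; rw [h] at hn0; rw [hn0] at hl_pos; exact lt_irrefl _ hl_pos
      set A := M.T (M.c l - fstar l) with hA
      have hTn : M.T (M.c n - 0) < A := by rw [← hn0]; exact hTln
      have hcw : ContinuousWithinAt (fun x => M.T (M.c n - x)) (Set.Ico 0 (M.c n)) 0 :=
        (M.T_smooth n).continuousOn.continuousWithinAt ⟨le_refl 0, M.c_pos n⟩
      set mδ := min (fstar l) (M.c n) with hmδ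
      have hmpos : 0 < mδ := lt_min hl_pos (M.c_pos n)
      have hseq : Filter.Tendsto (fun k : ℕ => mδ / (k + 2)) Filter.atTop (nhds 0) := by
        have h1 : Filter.Tendsto (fun k : ℕ => mδ * (1 / (k + 1))) Filter.atTop (nhds (mδ * 0)) :=
          tendsto_one_div_add_atTop_nhds_zero_nat.const_mul mδ
        rw [mul_zero] at h1
        apply squeeze_zero (fun k => by positivity) (fun k => ?_) h1
        rw [mul_one_div]
        apply div_le_div_of_nonneg_left hmpos.le (by positivity)
        push_cast; linarith
      have hmem : ∀ k : ℕ, mδ / (k + 2) ∈ Set.Ico (0:ℝ) (M.c n) := by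
        intro k
        constructor
        · positivity
        · have h1 : mδ / (k + 2) ≤ mδ / 2 :=
            div_le_div_of_nonneg_left hmpos.le (by norm_num) (by push_cast; linarith)
          have h2 : mδ / 2 < mδ := by linarith
          exact lt_of_le_of_lt h1 (lt_of_lt_of_le h2 (min_le_right _ _))
      have htend : Filter.Tendsto (fun k : ℕ => mδ / (k + 2)) Filter.atTop
          (nhdsWithin 0 (Set.Ico (0:ℝ) (M.c n))) :=
        tendsto_nhdsWithin_of_tendsto_nhds_of_eventually_within _ hseq
          (Filter.Eventually.of_forall hmem)
      have hev : ∀ᶠ x in nhdsWithin 0 (Set.Ico (0:ℝ) (M.c n)), M.T (M.c n - x) < A := by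
        have : M.T (M.c n - 0) < A := hTn
        exact hcw.eventually_lt_const this
      obtain ⟨k, hk⟩ := (htend.eventually hev).exists
      set δ := mδ / (k + 2) with hδdef
      have hδpos : 0 < δ := by positivity
      have hδcn : δ < M.c n := (hmem k).2
      have hδfl : δ ≤ fstar l := by
        have h1 : δ ≤ mδ := by
          rw [hδdef]
          apply div_le_self hmpos.le
          push_cast; linarith
        exact le_trans h1 (min_le_left _ _)
      -- the improved flow
      set f' : Fin L → ℝ :=
        fun m => fstar m + (if m = n then δ else 0) - (if m = l then δ else 0) with hf'
      have hf'n : f' n = δ := by simp [hf', hn0, hnl]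
      have hf'l : f' l = fstar l - δ := by simp [hf', hnl.symm]
      have hf'other : ∀ m : Fin L, m ≠ n → m ≠ l → f' m = fstar m := by
        intro m h1 h2; simp [hf', h1, h2]
      have hf'flow : IsFlow R f' := by
        constructor
        · intro m
          by_cases h1 : m = n
          · rw [h1, hf'n]; linarith
          · by_cases h2 : m = l
            · rw [h2, hf'l]; linarith
            · rw [hf'other m h1 h2]; exact hfs.1 m
        · simp only [hf']
          rw [Finset.sum_sub_distrib, Finset.sum_add_distrib]
          simp [Finset.sum_ite_eq', hfs.2]
      have hf'lt : ∀ m, f' m < M.c m := by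
        intro m
        by_cases h1 : m = n
        · rw [h1, hf'n]; exact hδcn
        · by_cases h2 : m = l
          · rw [h2, hf'l]; have := hfs_lt l; linarith
          · rw [hf'other m h1 h2]; exact hfs_lt m
      have hl_mem : l ∈ Finset.univ.erase n :=
        Finset.mem_erase.2 ⟨fun h => hnl h.symm, Finset.mem_univ l⟩
      have key : ∀ h : Fin L → ℝ, ∑ m, h m =
          h n + (h l + ∑ m ∈ (Finset.univ.erase n).erase l, h m) := by
        intro h
        rw [← Finset.add_sum_erase _ h (Finset.mem_univ n), ← Finset.add_sum_erase _ h hl_mem]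
      have hrest : ∑ m ∈ (Finset.univ.erase n).erase l, f' m * M.T (M.c m - f' m)
          = ∑ m ∈ (Finset.univ.erase n).erase l, fstar m * M.T (M.c m - fstar m) := by
        apply Finset.sum_congr rfl
        intro m hm
        have hml : m ≠ l := (Finset.mem_erase.1 hm).1
        have hmn : m ≠ n := (Finset.mem_erase.1 (Finset.mem_erase.1 hm).2).1
        rw [hf'other m hmn hml]
      have hmono : M.T (M.c l - (fstar l - δ)) ≤ M.T (M.c l - fstar l) :=
        T_mono_le M l (by linarith) (hfs_lt l) (by linarith)
      have hopt := hfs_opt f' hf'flow hf'lt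
      rw [key (fun m => f' m * M.T (M.c m - f' m)),
          key (fun m => fstar m * M.T (M.c m - fstar m))] at hopt
      simp only [hf'n, hf'l, hrest, hn0] at hopt
      have hTlA : M.T (M.c l - fstar l) = A := rfl
      nlinarith [hk, hδpos, hmono, hδfl]
  obtain ⟨a', b', ha', hb', hab'⟩ := hpair
  have hbmem : b' ∈ Finset.univ.filter (fun l => 0 < fstar l) := by
    simp [hb']
  obtain ⟨b, hbmem', hbmin⟩ := Finset.exists_min_image
    (Finset.univ.filter (fun l => 0 < fstar l)) (fun l => M.T (M.c l - fstar l)) ⟨b', hbmem⟩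
  have hb_pos : 0 < fstar b := (Finset.mem_filter.1 hbmem').2
  have hbb' : M.T (M.c b - fstar b) ≤ M.T (M.c b' - fstar b') := hbmin b' hbmem
  refine ⟨a', b, ha', hb_pos, lt_of_le_of_lt hbb' hab', ?_⟩
  have hsum : ∑ l, fstar l * M.T (M.c b - fstar b) < ∑ l, fstar l * M.T (M.c l - fstar l) := by
    apply Finset.sum_lt_sum
    · intro i _
      rcases lt_or_ge 0 (fstar i) with hpos | hle
      · have : i ∈ Finset.univ.filter (fun l => 0 < fstar l) := by simp [hpos]
        exact mul_le_mul_of_nonneg_left (hbmin i this) hpos.le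
      · have : fstar i = 0 := le_antisymm hle (hfs.1 i)
        rw [this]; simp
    · exact ⟨a', Finset.mem_univ a',
        mul_lt_mul_of_pos_left (lt_of_le_of_lt hbb' hab') ha'⟩
  calc R * M.T (M.c b - fstar b) = ∑ l, fstar l * M.T (M.c b - fstar b) := by
        rw [← Finset.sum_mul, hfs.2]
    _ < _ := hsum
lemma gap_lemma {L : ℕ} (M : Model L) (R : ℝ) (hR : 0 < R)
    (fstar : Fin L → ℝ) (hfs : IsFlow R fstar) (hfs_lt : ∀ l, fstar l < M.c l)
    (hfs_opt : ∀ f : Fin L → ℝ, IsFlow R f → (∀ l, f l < M.c l) →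
      ∑ l, fstar l * M.T (M.c l - fstar l) ≤ ∑ l, f l * M.T (M.c l - f l))
    (b : Fin L)
    (hG : R * M.T (M.c b - fstar b) < ∑ l, fstar l * M.T (M.c l - fstar l))
    (s : ℝ) (hs0 : 0 < s) (hsR : s < R) :
    ∃ δ : ℝ, 0 < δ ∧ ∀ t : Fin L → ℝ, (∀ l, 0 ≤ t l) → (∀ l, t l < M.c l) →
      ∑ l, t l = R →
      (s / R * (∑ l, fstar l * M.T (M.c l - fstar l)) + δ ≤
          s / R * (∑ l, t l * M.T (M.c l - t l)) ∨
        s / R * (∑ l, fstar l * M.T (M.c l - fstar l)) + δ ≤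
          (∑ l, t l * M.T (M.c l - t l)) - (R - s) * M.T (M.c b - t b)) := by
  set Jstar := ∑ l, fstar l * M.T (M.c l - fstar l) with hJstar
  by_contra hcon
  push_neg at hcon
  have hk : ∀ k : ℕ, ∃ t : Fin L → ℝ, (∀ l, 0 ≤ t l) ∧ (∀ l, t l < M.c l) ∧
      (∑ l, t l = R) ∧
      s / R * (∑ l, t l * M.T (M.c l - t l)) < s / R * Jstar + 1/(k+1) ∧
      (∑ l, t l * M.T (M.c l - t l)) - (R - s) * M.T (M.c b - t b)
        < s / R * Jstar + 1/(k+1) := by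
    intro k
    obtain ⟨t, h1, h2, h3, h4, h5⟩ := hcon (1/(k+1)) (by positivity)
    exact ⟨t, h1, h2, h3, h4, h5⟩
  choose t ht using hk
  set C : (Fin L → ℝ) → ℝ := fun x => ∑ l, x l * M.T (M.c l - x l) with hC
  have ht0 : ∀ k, ∀ l, 0 ≤ t k l := fun k => (ht k).1
  have htc : ∀ k, ∀ l, t k l < M.c l := fun k => (ht k).2.1
  have hts : ∀ k, ∑ l, t k l = R := fun k => (ht k).2.2.1
  have htflow : ∀ k, IsFlow R (t k) := fun k => ⟨ht0 k, hts k⟩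
  have hClb : ∀ k, Jstar ≤ C (t k) := fun k => hfs_opt (t k) (htflow k) (htc k)
  have hCub : ∀ k, C (t k) ≤ Jstar + (R/s) * (1/(k+1)) := by
    intro k
    have h4 := (ht k).2.2.2.1
    have h0 : (0:ℝ) < R / s := by positivity
    have := mul_lt_mul_of_pos_left h4 h0
    have e1 : R / s * (s / R * C (t k)) = C (t k) := by field_simp
    have e2 : R / s * (s / R * Jstar + 1/(k+1)) = Jstar + (R/s) * (1/(k+1)) := by
      field_simp
    rw [e1, e2] at this
    exact this.le
  have hone : Filter.Tendsto (fun k : ℕ => (1:ℝ)/(k+1)) Filter.atTop (nhds 0) :=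
    tendsto_one_div_add_atTop_nhds_zero_nat
  have hCt : Filter.Tendsto (fun k => C (t k)) Filter.atTop (nhds Jstar) := by
    have hup : Filter.Tendsto (fun k : ℕ => Jstar + (R/s) * (1/(k+1))) Filter.atTop
        (nhds (Jstar + (R/s) * 0)) :=
      Filter.Tendsto.add tendsto_const_nhds (hone.const_mul (R/s))
    rw [mul_zero, add_zero] at hup
    exact tendsto_of_tendsto_of_tendsto_of_le_of_le tendsto_const_nhds hup hClb hCub
  -- midpoints
  set m : ℕ → Fin L → ℝ := fun k l => (t k l + fstar l) / 2 with hm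
  set K : Set (Fin L → ℝ) := Set.pi Set.univ (fun l => Set.Icc 0 ((M.c l + fstar l)/2)) with hK
  have hmK : ∀ k, m k ∈ K := by
    intro k
    rw [hK, Set.mem_univ_pi]
    intro l
    have h1 := ht0 k l; have h2 := htc k l; have h3 := hfs.1 l
    exact ⟨by simp only [hm]; linarith, by simp only [hm]; linarith⟩
  have hKcomp : IsCompact K := isCompact_univ_pi (fun l => isCompact_Icc)
  obtain ⟨mbar, hmbarK, φ, hφ, hconv⟩ := hKcomp.tendsto_subseq hmK
  have hcoord : ∀ l, Filter.Tendsto (fun k => m (φ k) l) Filter.atTop (nhds (mbar l)) :=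
    fun l => tendsto_pi_nhds.1 hconv l
  have hmbar_mem : ∀ l, mbar l ∈ Set.Icc (0:ℝ) ((M.c l + fstar l)/2) := by
    rw [hK, Set.mem_univ_pi] at hmbarK; exact hmbarK
  have hmbar0 : ∀ l, 0 ≤ mbar l := fun l => (hmbar_mem l).1
  have hmbarc : ∀ l, mbar l < M.c l := by
    intro l; have := (hmbar_mem l).2; have := hfs_lt l; linarith
  -- C (m k) squeeze
  have hmflow : ∀ k, IsFlow R (m k) := by
    intro k
    constructor
    · intro l; have := ht0 k l; have := hfs.1 l; simp only [hm]; linarith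
    · simp only [hm]
      have e : ∑ l, (t k l + fstar l) / 2 = (∑ l, (t k l + fstar l)) * (1/2) := by
        rw [Finset.sum_mul]; exact Finset.sum_congr rfl (fun l _ => by ring)
      rw [e, Finset.sum_add_distrib, hts k, hfs.2]; ring
  have hmc : ∀ k, ∀ l, m k l < M.c l := by
    intro k l; have := htc k l; have := hfs_lt l; simp only [hm]; linarith
  have hCm_lb : ∀ k, Jstar ≤ C (m k) := fun k => hfs_opt (m k) (hmflow k) (hmc k)
  have hCm_ub : ∀ k, C (m k) ≤ (C (t k) + Jstar) / 2 := by
    intro k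
    have key : ∀ l : Fin L, m k l * M.T (M.c l - m k l) ≤
        (t k l * M.T (M.c l - t k l) + fstar l * M.T (M.c l - fstar l)) / 2 := by
      intro l
      have h := mid_ineq M l (ht0 k l) (htc k l) (hfs.1 l) (hfs_lt l)
      have hrem : 0 ≤ (fstar l - t k l) * (M.T (M.c l - fstar l) - M.T (M.c l - t k l)) / 4 := by
        rcases le_total (t k l) (fstar l) with hle | hle
        · have := T_mono_le M l (ht0 k l) (hfs_lt l) hle
          have h1 : 0 ≤ fstar l - t k l := by linarith
          have h2 : 0 ≤ M.T (M.c l - fstar l) - M.T (M.c l - t k l) := by linarith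
          have := mul_nonneg h1 h2; linarith
        · have := T_mono_le M l (hfs.1 l) (htc k l) hle
          nlinarith
      simp only [hm]
      linarith
    have hsum := Finset.sum_le_sum (fun l (_ : l ∈ Finset.univ) => key l)
    have e : ∑ l, (t k l * M.T (M.c l - t k l) + fstar l * M.T (M.c l - fstar l)) / 2
        = (C (t k) + Jstar) / 2 := by
      rw [hC, hJstar, ← Finset.sum_add_distrib, Finset.sum_div]
    rw [e] at hsum
    exact hsum
  have hCmφ : Filter.Tendsto (fun k => C (m (φ k))) Filter.atTop (nhds Jstar) := by
    have hCtφ : Filter.Tendsto (fun k => C (t (φ k))) Filter.atTop (nhds Jstar) :=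
      hCt.comp hφ.tendsto_atTop
    have hup : Filter.Tendsto (fun k => (C (t (φ k)) + Jstar)/2) Filter.atTop
        (nhds ((Jstar + Jstar)/2)) := (hCtφ.add tendsto_const_nhds).div_const 2
    have : (Jstar + Jstar)/2 = Jstar := by ring
    rw [this] at hup
    exact tendsto_of_tendsto_of_tendsto_of_le_of_le tendsto_const_nhds hup
      (fun k => hCm_lb (φ k)) (fun k => hCm_ub (φ k))
  -- continuity: C (m (φ k)) → C mbar
  have hTtend : ∀ (l : Fin L) (u : ℕ → ℝ) (p : ℝ), (∀ k, u k ∈ Set.Ico (0:ℝ) (M.c l)) →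
      p ∈ Set.Ico (0:ℝ) (M.c l) → Filter.Tendsto u Filter.atTop (nhds p) →
      Filter.Tendsto (fun k => M.T (M.c l - u k)) Filter.atTop (nhds (M.T (M.c l - p))) := by
    intro l u p hu hp hup
    have hcw : ContinuousWithinAt (fun x => M.T (M.c l - x)) (Set.Ico 0 (M.c l)) p :=
      (M.T_smooth l).continuousOn.continuousWithinAt hp
    exact hcw.tendsto.comp
      (tendsto_nhdsWithin_of_tendsto_nhds_of_eventually_within _ hup
        (Filter.Eventually.of_forall hu))
  have hCmbar : Filter.Tendsto (fun k => C (m (φ k))) Filter.atTop (nhds (C mbar)) := by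
    rw [hC]
    apply tendsto_finset_sum
    intro l _
    exact (hcoord l).mul (hTtend l _ _ (fun k => ⟨(hmflow (φ k)).1 l, hmc (φ k) l⟩)
      ⟨hmbar0 l, hmbarc l⟩ (hcoord l))
  have hCmbar_eq : C mbar = Jstar := tendsto_nhds_unique hCmbar hCmφ
  have hmbar_sum : ∑ l, mbar l = R := by
    have h1 : Filter.Tendsto (fun k => ∑ l, m (φ k) l) Filter.atTop (nhds (∑ l, mbar l)) :=
      tendsto_finset_sum _ (fun l _ => hcoord l)
    have h2 : (fun k => ∑ l, m (φ k) l) = fun _ => R := by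
      funext k; exact (hmflow (φ k)).2
    rw [h2] at h1
    exact (tendsto_nhds_unique tendsto_const_nhds h1).symm
  have hmbar_eq : mbar = fstar :=
    opt_unique M R fstar hfs hfs_lt hfs_opt mbar hmbar0 hmbarc hmbar_sum (le_of_eq hCmbar_eq)
  -- t (φ k) b → fstar b
  have htb : Filter.Tendsto (fun k => t (φ k) b) Filter.atTop (nhds (fstar b)) := by
    have h1 : Filter.Tendsto (fun k => 2 * m (φ k) b - fstar b) Filter.atTop
        (nhds (2 * mbar b - fstar b)) := ((hcoord b).const_mul 2).sub_const (fstar b)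
    have h2 : (fun k => 2 * m (φ k) b - fstar b) = fun k => t (φ k) b := by
      funext k; simp only [hm]; ring
    have h3 : 2 * mbar b - fstar b = fstar b := by rw [hmbar_eq]; ring
    rw [h2, h3] at h1
    exact h1
  have hTb : Filter.Tendsto (fun k => M.T (M.c b - t (φ k) b)) Filter.atTop
      (nhds (M.T (M.c b - fstar b))) :=
    hTtend b _ _ (fun k => ⟨ht0 (φ k) b, htc (φ k) b⟩) ⟨hfs.1 b, hfs_lt b⟩ htb
  -- final contradiction
  have hA : Filter.Tendsto (fun k => C (t (φ k)) - (R - s) * M.T (M.c b - t (φ k) b))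
      Filter.atTop (nhds (Jstar - (R - s) * M.T (M.c b - fstar b))) :=
    (hCt.comp hφ.tendsto_atTop).sub (hTb.const_mul (R - s))
  have hB : Filter.Tendsto (fun k : ℕ => s / R * Jstar + 1/(k+1)) Filter.atTop
      (nhds (s / R * Jstar + 0)) := Filter.Tendsto.add tendsto_const_nhds hone
  rw [add_zero] at hB
  have hle : ∀ k : ℕ, C (t (φ k)) - (R - s) * M.T (M.c b - t (φ k) b)
      ≤ s / R * Jstar + 1/(k+1) := by
    intro k
    have h5 := (ht (φ k)).2.2.2.2
    have hk' : k ≤ φ k := hφ.le_apply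
    have hk1 : (1:ℝ)/(φ k + 1) ≤ 1/(k+1) := by
      apply one_div_le_one_div_of_le (by positivity)
      have : (k:ℝ) ≤ (φ k : ℝ) := by exact_mod_cast hk'
      linarith
    linarith
  have hfinal : Jstar - (R - s) * M.T (M.c b - fstar b) ≤ s / R * Jstar :=
    le_of_tendsto_of_tendsto' hA hB hle
  -- but hG says strict other way
  have hlast : s / R * Jstar < Jstar - (R - s) * M.T (M.c b - fstar b) := by
    rw [div_mul_eq_mul_div, div_lt_iff₀ hR]
    nlinarith [mul_pos (sub_pos.2 hsR) (sub_pos.2 hG)]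
  linarith


theorem core_not_singleton'
    {L N : ℕ} (M : Model L) (hN : 2 ≤ N) (r : Fin N → ℝ) (R : ℝ)
    (hr : ∀ i, 0 < r i) (hrsum : ∑ i, r i = R)
    (hR : 0 < R) (hRc : R < ∑ l, M.c l)
    (fstar : Fin L → ℝ)
    (hfs : IsFlow R fstar) (hfs_lt : ∀ l, fstar l < M.c l)
    (hfs_opt : ∀ f : Fin L → ℝ, IsFlow R f → (∀ l, f l < M.c l) →
      ∑ l, fstar l * M.T (M.c l - fstar l) ≤ ∑ l, f l * M.T (M.c l - f l))
    (hNW : ¬ ∀ l n : Fin L, fstar n < M.c n → 0 < fstar l →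
      M.T (M.c l - fstar l) ≤ M.T (M.c n - fstar n)) :
    ∃ J : Fin N → ℝ,
      VN M r fstar J ∧
      J ≠ (fun i => r i / R * ∑ l, fstar l * M.T (M.c l - fstar l)) ∧
      ∀ S : Finset (Fin N), S.Nonempty → S ≠ Finset.univ →
        ∀ J' : Fin N → ℝ, VS M r R S J' → ∃ i ∈ S, J i ≤ J' i := by
  classical
  haveI hLne : Nonempty (Fin L) := ⟨⟨0, M.hL⟩⟩
  set Jstar := ∑ l, fstar l * M.T (M.c l - fstar l) with hJstar
  obtain ⟨a, b, ha, hb, hab, hG⟩ := exists_links M R hR fstar hfs hfs_lt hfs_opt hNW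
  have hne_ab : a ≠ b := by
    intro h; rw [h] at hab; exact lt_irrefl _ hab
  set Ta := M.T (M.c a - fstar a) with hTa
  set Tb := M.T (M.c b - fstar b) with hTb
  set Δ := Ta - Tb with hΔ
  have hΔpos : 0 < Δ := sub_pos.2 hab
  -- demand of a proper nonempty coalition
  have hSdem : ∀ S : Finset (Fin N), S.Nonempty → S ≠ Finset.univ →
      0 < ∑ i ∈ S, r i ∧ ∑ i ∈ S, r i < R := by
    intro S hSne hSuniv
    constructor
    · exact Finset.sum_pos (fun i _ => hr i) hSne
    · rw [← hrsum]
      obtain ⟨j, _, hj⟩ := Finset.exists_of_ssubset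
        (lt_of_le_of_ne (Finset.subset_univ S) hSuniv)
      exact Finset.sum_lt_sum_of_subset (Finset.subset_univ S) (Finset.mem_univ j) hj
        (hr j) (fun i _ _ => (hr i).le)
  -- per-coalition uniform gap
  have hgapS : ∀ S : Finset (Fin N), ∃ δ : ℝ, 0 < δ ∧ (S.Nonempty → S ≠ Finset.univ →
      ∀ t : Fin L → ℝ, (∀ l, 0 ≤ t l) → (∀ l, t l < M.c l) → ∑ l, t l = R →
      ((∑ i ∈ S, r i) / R * Jstar + δ ≤
          (∑ i ∈ S, r i) / R * (∑ l, t l * M.T (M.c l - t l)) ∨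
        (∑ i ∈ S, r i) / R * Jstar + δ ≤
          (∑ l, t l * M.T (M.c l - t l)) - (R - ∑ i ∈ S, r i) * M.T (M.c b - t b))) := by
    intro S
    by_cases hSc : S.Nonempty ∧ S ≠ Finset.univ
    · obtain ⟨δ, hδ, h⟩ := gap_lemma M R hR fstar hfs hfs_lt hfs_opt b hG
        (∑ i ∈ S, r i) (hSdem S hSc.1 hSc.2).1 (hSdem S hSc.1 hSc.2).2
      exact ⟨δ, hδ, fun _ _ => h⟩
    · exact ⟨1, one_pos, fun h1 h2 => absurd ⟨h1, h2⟩ hSc⟩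
  choose δf hδf using hgapS
  set P := (Finset.univ : Finset (Fin N)).powerset with hP
  have hPne : P.Nonempty := ⟨∅, Finset.empty_mem_powerset _⟩
  set δmin := P.inf' hPne δf with hδmin
  have hδminpos : 0 < δmin := by
    rw [hδmin, Finset.lt_inf'_iff]
    exact fun S _ => (hδf S).1
  have hδminle : ∀ S : Finset (Fin N), δmin ≤ δf S := by
    intro S
    exact Finset.inf'_le _ (Finset.mem_powerset.2 (Finset.subset_univ S))
  -- two users
  set i₀ : Fin N := ⟨0, by omega⟩ with hi₀
  set i₁ : Fin N := ⟨1, by omega⟩ with hi₁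
  have hi01 : i₀ ≠ i₁ := by
    simp [hi₀, hi₁, Fin.ext_iff]
  set ε := min (min (r i₀ / R * fstar a) (r i₁ / R * fstar b)) (δmin / Δ) with hε
  have hεpos : 0 < ε :=
    lt_min (lt_min (mul_pos (div_pos (hr i₀) hR) ha) (mul_pos (div_pos (hr i₁) hR) hb))
      (div_pos hδminpos hΔpos)
  have hεa : ε ≤ r i₀ / R * fstar a := le_trans (min_le_left _ _) (min_le_left _ _)
  have hεb : ε ≤ r i₁ / R * fstar b := le_trans (min_le_left _ _) (min_le_right _ _)
  have hεδ : ε * Δ ≤ δmin := (le_div_iff₀ hΔpos).1 (min_le_right _ _)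
  -- the perturbed flows and allocation
  set e : Fin N → Fin L → ℝ := fun i l =>
    (if i = i₀ then ((if l = b then ε else 0) - (if l = a then ε else 0)) else 0)
    + (if i = i₁ then ((if l = a then ε else 0) - (if l = b then ε else 0)) else 0) with he
  set f : Fin N → Fin L → ℝ := fun i l => r i / R * fstar l + e i l with hf
  set J : Fin N → ℝ := fun i => r i / R * Jstar
    + ((if i = i₁ then ε * Δ else 0) - (if i = i₀ then ε * Δ else 0)) with hJ
  have hite : ∀ (c : Fin L) , ∑ l, (if l = c then ε else 0) = ε := by
    intro c
    rw [Finset.sum_ite_eq' Finset.univ c (fun _ => ε), if_pos (Finset.mem_univ c)]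
  have he_sum_l : ∀ i, ∑ l, e i l = 0 := by
    intro i
    have hev : ∀ l, e i l =
        (if i = i₀ then ((if l = b then ε else 0) - (if l = a then ε else 0)) else 0)
        + (if i = i₁ then ((if l = a then ε else 0) - (if l = b then ε else 0)) else 0) :=
      fun l => rfl
    rw [Finset.sum_congr rfl (fun l (_ : l ∈ Finset.univ) => hev l), Finset.sum_add_distrib]
    by_cases h0 : i = i₀ <;> by_cases h1 : i = i₁
    · exact absurd (h0.symm.trans h1) hi01
    all_goals simp [h0, h1, hi01, Ne.symm hi01, Finset.sum_sub_distrib, hite]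
  have he_sum_i : ∀ l, ∑ i, e i l = 0 := by
    intro l
    simp only [he]
    rw [Finset.sum_add_distrib]
    rw [Finset.sum_ite_eq' Finset.univ i₀
      (fun _ => ((if l = b then ε else 0) - (if l = a then ε else 0)))]
    rw [Finset.sum_ite_eq' Finset.univ i₁
      (fun _ => ((if l = a then ε else 0) - (if l = b then ε else 0)))]
    simp
  have he_val : ∀ i l, e i l =
      (if i = i₀ then ((if l = b then ε else 0) - (if l = a then ε else 0)) else 0)
      + (if i = i₁ then ((if l = a then ε else 0) - (if l = b then ε else 0)) else 0) := by
    intro i l; rfl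
  have hflow : ∀ i, IsFlow (r i) (f i) := by
    intro i
    constructor
    · intro l
      have hbase : 0 ≤ r i / R * fstar l :=
        mul_nonneg (div_pos (hr i) hR).le (hfs.1 l)
      have hfv : f i l = r i / R * fstar l + e i l := rfl
      rw [hfv, he_val]
      by_cases h0 : i = i₀
      · have h1 : i ≠ i₁ := by rw [h0]; exact hi01
        rw [if_pos h0, if_neg h1, add_zero]
        by_cases hla : l = a
        · have hlb : l ≠ b := by rw [hla]; exact hne_ab
          rw [if_pos hla, if_neg hlb]
          have : r i / R * fstar l = r i₀ / R * fstar a := by rw [h0, hla]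
          rw [this]
          linarith
        · rw [if_neg hla]
          by_cases hlb : l = b
          · rw [if_pos hlb]; linarith
          · rw [if_neg hlb]; linarith
      · rw [if_neg h0, zero_add]
        by_cases h1 : i = i₁
        · rw [if_pos h1]
          by_cases hlb : l = b
          · have hla : l ≠ a := by rw [hlb]; exact Ne.symm hne_ab
            rw [if_pos hlb, if_neg hla]
            have : r i / R * fstar l = r i₁ / R * fstar b := by rw [h1, hlb]
            rw [this]
            linarith
          · rw [if_neg hlb]
            by_cases hla : l = a
            · rw [if_pos hla]; linarith
            · rw [if_neg hla]; linarith
        · rw [if_neg h1]; linarith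
    · have hfv : ∀ l, f i l = r i / R * fstar l + e i l := fun l => rfl
      calc ∑ l, f i l = ∑ l, (r i / R * fstar l + e i l) :=
            Finset.sum_congr rfl (fun l _ => hfv l)
        _ = (∑ l, r i / R * fstar l) + ∑ l, e i l := Finset.sum_add_distrib
        _ = r i / R * R + 0 := by rw [he_sum_l i, ← Finset.mul_sum, hfs.2]
        _ = r i := by field_simp; ring
  have hagg : ∀ l, ∑ i, f i l = fstar l := by
    intro l
    simp only [hf]
    rw [Finset.sum_add_distrib, he_sum_i l]
    have h3 : ∑ i, r i / R * fstar l = (∑ i, r i) * (fstar l / R) := by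
      rw [Finset.sum_mul]
      exact Finset.sum_congr rfl (fun i _ => by ring)
    rw [h3, hrsum]
    field_simp
    ring
  have hJeq : ∀ i, J i = ∑ l, f i l * M.T (M.c l - fstar l) := by
    intro i
    have hsplit : ∑ l, f i l * M.T (M.c l - fstar l)
        = ∑ l, r i / R * fstar l * M.T (M.c l - fstar l)
          + ∑ l, e i l * M.T (M.c l - fstar l) := by
      rw [← Finset.sum_add_distrib]
      exact Finset.sum_congr rfl (fun l _ => by simp only [hf]; ring)
    have h1 : ∑ l, r i / R * fstar l * M.T (M.c l - fstar l) = r i / R * Jstar := by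
      rw [hJstar, Finset.mul_sum]
      exact Finset.sum_congr rfl (fun l _ => by ring)
    have h2 : ∑ l, e i l * M.T (M.c l - fstar l)
        = ((if i = i₁ then ε * Δ else 0) - (if i = i₀ then ε * Δ else 0)) := by
      have hitm : ∀ (c : Fin L), ∑ l, (if l = c then ε else 0) * M.T (M.c l - fstar l)
          = ε * M.T (M.c c - fstar c) := by
        intro c
        have h5 : ∀ l : Fin L, (if l = c then ε else 0) * M.T (M.c l - fstar l)
            = (if l = c then ε * M.T (M.c l - fstar l) else 0) := by
          intro l; by_cases h : l = c <;> simp [h]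
        rw [Finset.sum_congr rfl (fun l (_ : l ∈ Finset.univ) => h5 l),
          Finset.sum_ite_eq' Finset.univ c (fun l => ε * M.T (M.c l - fstar l)),
          if_pos (Finset.mem_univ c)]
      by_cases h0 : i = i₀ <;> by_cases h1' : i = i₁
      · exact absurd (h0.symm.trans h1') hi01
      · rw [Finset.sum_congr rfl (fun l (_ : l ∈ Finset.univ) => by
          rw [he_val i l, if_pos h0, if_neg h1', add_zero, sub_mul])]
        rw [Finset.sum_sub_distrib, hitm b, hitm a, if_neg (h0 ▸ h1'), if_pos h0]
        rw [hΔ, hTa, hTb]; ring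
      · rw [Finset.sum_congr rfl (fun l (_ : l ∈ Finset.univ) => by
          rw [he_val i l, if_neg h0, if_pos h1', zero_add, sub_mul])]
        rw [Finset.sum_sub_distrib, hitm a, hitm b, if_pos h1', if_neg h0]
        rw [hΔ, hTa, hTb]; ring
      · rw [Finset.sum_congr rfl (fun l (_ : l ∈ Finset.univ) => by
          rw [he_val i l, if_neg h0, if_neg h1', add_zero, zero_mul])]
        rw [Finset.sum_const, smul_zero, if_neg h1', if_neg h0, sub_zero]
    rw [hsplit, h1, h2, hJ]
  clear_value Jstar Ta Tb Δ ε δmin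
  refine ⟨J, ⟨f, hflow, hagg, hJeq⟩, ?_, ?_⟩
  · -- J ≠ PA
    intro hcontra
    have h2 := congrFun hcontra i₀
    simp only [hJ, if_neg hi01, if_pos rfl, if_true] at h2
    linarith [mul_pos hεpos hΔpos]
  · -- core property
    intro S hSne hSuniv J' hJ'
    obtain ⟨f', g, hf'S, hgflow, hltc, _hKKT, hWard, hJ'eq⟩ := hJ'
    set sS := ∑ i ∈ S, r i with hsS
    obtain ⟨hs0, hsR⟩ := hSdem S hSne hSuniv
    set F : Fin L → ℝ := fun l => ∑ i ∈ S, f' i l with hF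
    set t : Fin L → ℝ := fun l => g l + ∑ i ∈ S, f' i l with htdef
    have hF0 : ∀ l, 0 ≤ F l :=
      fun l => Finset.sum_nonneg (fun i hi => (hf'S i hi).1 l)
    have hg0 : ∀ l, 0 ≤ g l := hgflow.1
    have ht0 : ∀ l, 0 ≤ t l := fun l => add_nonneg (hg0 l) (hF0 l)
    have hFsum : ∑ l, F l = sS := by
      rw [hF, hsS, Finset.sum_comm]
      exact Finset.sum_congr rfl (fun i hi => (hf'S i hi).2)
    have htsum : ∑ l, t l = R := by
      have e1 : ∑ l, t l = (∑ l, g l) + ∑ l, F l := by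
        simp only [htdef, hF]
        exact Finset.sum_add_distrib
      rw [e1, hgflow.2, hFsum]; ring
    have hn0 : ∃ n0, t n0 < M.c n0 := by
      by_contra h
      push_neg at h
      have := Finset.sum_le_sum (fun l (_ : l ∈ Finset.univ) => h l)
      rw [htsum] at this
      linarith
    obtain ⟨n0, hn0lt⟩ := hn0
    have htc : ∀ l, t l < M.c l := by
      intro l
      rcases lt_or_ge 0 (F l) with hFl | hFl
      · exact hltc l hFl
      · have hFl0 : F l = 0 := le_antisymm hFl (hF0 l)
        rcases lt_or_ge 0 (g l) with hgl | hgl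
        · exact (hWard l n0 hn0lt hgl).1
        · have hgl0 : g l = 0 := le_antisymm hgl (hg0 l)
          have hte : t l = 0 := by
            have : t l = g l + F l := rfl
            rw [this, hgl0, hFl0]; ring
          rw [hte]; exact M.c_pos l
    obtain ⟨m0, _, hm0⟩ := Finset.exists_min_image Finset.univ
      (fun l => M.T (M.c l - t l)) Finset.univ_nonempty
    set lam := M.T (M.c m0 - t m0) with hlam
    set X := ∑ l, F l * M.T (M.c l - t l) with hX
    set GT := ∑ l, g l * M.T (M.c l - t l) with hGT
    set Ct := ∑ l, t l * M.T (M.c l - t l) with hCt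
    have hsplit : Ct = GT + X := by
      rw [hCt, hGT, hX, ← Finset.sum_add_distrib]
      exact Finset.sum_congr rfl (fun l _ => by simp only [htdef, hF]; ring)
    have hgT : GT ≤ (R - sS) * lam := by
      rw [hGT]
      have : ∀ l : Fin L, g l * M.T (M.c l - t l) ≤ g l * lam := by
        intro l
        rcases lt_or_ge 0 (g l) with hgl | hgl
        · exact mul_le_mul_of_nonneg_left ((hWard l m0 (htc m0) hgl).2) (hg0 l)
        · have : g l = 0 := le_antisymm hgl (hg0 l)
          rw [this]; simp
      calc ∑ l, g l * M.T (M.c l - t l) ≤ ∑ l, g l * lam :=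
            Finset.sum_le_sum (fun l _ => this l)
        _ = (R - sS) * lam := by rw [← Finset.sum_mul, hgflow.2, hsS]
    have hgTb : GT ≤ (R - sS) * M.T (M.c b - t b) := by
      rw [hGT]
      have : ∀ l : Fin L, g l * M.T (M.c l - t l) ≤ g l * M.T (M.c b - t b) := by
        intro l
        rcases lt_or_ge 0 (g l) with hgl | hgl
        · exact mul_le_mul_of_nonneg_left ((hWard l b (htc b) hgl).2) (hg0 l)
        · have : g l = 0 := le_antisymm hgl (hg0 l)
          rw [this]; simp
      calc ∑ l, g l * M.T (M.c l - t l) ≤ ∑ l, g l * M.T (M.c b - t b) :=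
            Finset.sum_le_sum (fun l _ => this l)
        _ = (R - sS) * M.T (M.c b - t b) := by rw [← Finset.sum_mul, hgflow.2, hsS]
    have hXlam : sS * lam ≤ X := by
      rw [hX]
      calc sS * lam = ∑ l, F l * lam := by rw [← Finset.sum_mul, hFsum]
        _ ≤ ∑ l, F l * M.T (M.c l - t l) :=
            Finset.sum_le_sum (fun l _ => mul_le_mul_of_nonneg_left
              (hm0 l (Finset.mem_univ l)) (hF0 l))
    have hbound1 : sS / R * Ct ≤ X := by
      rw [div_mul_eq_mul_div, div_le_iff₀ hR]
      have e1 : sS * ((R - sS) * lam) = (R - sS) * (sS * lam) := by ring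
      have e2 : sS * GT ≤ sS * ((R - sS) * lam) := mul_le_mul_of_nonneg_left hgT hs0.le
      have e3 : (R - sS) * (sS * lam) ≤ (R - sS) * X :=
        mul_le_mul_of_nonneg_left hXlam (by linarith)
      have e4 : sS * Ct = sS * GT + sS * X := by rw [hsplit]; ring
      nlinarith
    have hbound2 : Ct - (R - sS) * M.T (M.c b - t b) ≤ X := by
      have : Ct - X = GT := by rw [hsplit]; ring
      linarith
    have hXJ' : ∑ i ∈ S, J' i = X := by
      rw [hX]
      calc ∑ i ∈ S, J' i = ∑ i ∈ S, ∑ l, f' i l * M.T (M.c l - (g l + ∑ j ∈ S, f' j l)) :=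
            Finset.sum_congr rfl (fun i hi => hJ'eq i hi)
        _ = ∑ l, ∑ i ∈ S, f' i l * M.T (M.c l - (g l + ∑ j ∈ S, f' j l)) := Finset.sum_comm
        _ = ∑ l, F l * M.T (M.c l - t l) := by
            refine Finset.sum_congr rfl (fun l _ => ?_)
            rw [← Finset.sum_mul]
    have hgap := (hδf S).2 hSne hSuniv t ht0 htc htsum
    have hXlb : sS / R * Jstar + δf S ≤ X := by
      rcases hgap with h | h
      · calc sS / R * Jstar + δf S ≤ sS / R * Ct := h
          _ ≤ X := hbound1
      · calc sS / R * Jstar + δf S ≤ Ct - (R - sS) * M.T (M.c b - t b) := h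
          _ ≤ X := hbound2
    clear_value sS F t lam X GT Ct
    have hJS : ∑ i ∈ S, J i ≤ sS / R * Jstar + ε * Δ := by
      have h1 : ∑ i ∈ S, J i = sS / R * Jstar
          + ((if i₁ ∈ S then ε * Δ else 0) - (if i₀ ∈ S then ε * Δ else 0)) := by
        simp only [hJ]
        rw [Finset.sum_add_distrib, Finset.sum_sub_distrib]
        rw [Finset.sum_ite_eq' S i₁ (fun _ => ε * Δ), Finset.sum_ite_eq' S i₀ (fun _ => ε * Δ)]
        congr 1
        have h4 : ∑ i ∈ S, r i / R * Jstar = (∑ i ∈ S, r i) * (Jstar / R) := by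
          rw [Finset.sum_mul]
          exact Finset.sum_congr rfl (fun i _ => by ring)
        rw [h4, hsS]; ring
      rw [h1]
      have hεΔ : 0 ≤ ε * Δ := (mul_pos hεpos hΔpos).le
      have h6 : ((if i₁ ∈ S then ε * Δ else 0) - (if i₀ ∈ S then ε * Δ else 0)) ≤ ε * Δ := by
        by_cases h2 : i₁ ∈ S <;> by_cases h3 : i₀ ∈ S <;> simp [h2, h3] <;> linarith
      linarith
    by_contra hno
    push_neg at hno
    have hsumlt : ∑ i ∈ S, J' i < ∑ i ∈ S, J i :=
      Finset.sum_lt_sum_of_nonempty hSne (fun i hi => hno i hi)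
    have hchain : sS / R * Jstar + ε * Δ ≤ X := by
      have := hδminle S
      linarith
    rw [hXJ'] at hsumlt
    linarith


/-- The Core of the worst-case NTU coalitional game is not a singleton:
if `N ≥ 2` and the Wardrop equilibrium is not system optimal, then there is a cost
vector in `V(N)`, different from the Proportional Allocation, such that no coalition
deviating to its worst-case outcome makes all of its members strictly better off. -/
theorem core_not_singleton
    {L N : ℕ} (M : Model L) (hN : 2 ≤ N) (r : Fin N → ℝ) (R : ℝ)
    (hr : ∀ i, 0 < r i) (hrsum : ∑ i, r i = R)
    (hR : 0 < R) (hRc : R < ∑ l, M.c l)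
    (fstar : Fin L → ℝ)
    (hfs : IsFlow R fstar) (hfs_lt : ∀ l, fstar l < M.c l)
    (hfs_opt : ∀ f : Fin L → ℝ, IsFlow R f → (∀ l, f l < M.c l) →
      ∑ l, fstar l * M.T (M.c l - fstar l) ≤ ∑ l, f l * M.T (M.c l - f l))
    -- the Wardrop equilibrium is not system optimal
    (hNW : ¬ ∀ l n : Fin L, fstar n < M.c n → 0 < fstar l →
      M.T (M.c l - fstar l) ≤ M.T (M.c n - fstar n)) :
    ∃ J : Fin N → ℝ,
      VN M r fstar J ∧
      J ≠ (fun i => r i / R * ∑ l, fstar l * M.T (M.c l - fstar l)) ∧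
      ∀ S : Finset (Fin N), S.Nonempty → S ≠ Finset.univ →
        ∀ J' : Fin N → ℝ, VS M r R S J' → ∃ i ∈ S, J i ≤ J' i := by
  exact core_not_singleton' M hN r R hr hrsum hR hRc fstar hfs hfs_lt hfs_opt hNW
end

section
/- If the Wardrop equilibrium is not system optimal, the Proportional Allocation is strongly inhibitive (hence lies in the Inner Core): for every probability distribution η on the nonempty proper coalitions S ⊊ {1,…,N} (η(S) ≥ 0, ∑_S η(S) = 1) and every choice of cost vectors Y(S) ∈ V(S) for each such S, there exists a user i such that ∑_{S ∋ i} η(S)·Y^i(S) > ∑_{S ∋ i} η(S)·(r^i/R)·J*_sys. -/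
open scoped BigOperators

private lemma phi_mid_lt_aux {L : ℕ} (M : Model L) (l : Fin L) {x y : ℝ}
    (hx : x ∈ Set.Ico (0:ℝ) (M.c l)) (hy : y ∈ Set.Ico (0:ℝ) (M.c l)) (hxy : x < y) :
    (x + y) / 2 * M.T (M.c l - (x + y) / 2)
      < (x * M.T (M.c l - x) + y * M.T (M.c l - y)) / 2 := by
  have hm : (x + y) / 2 ∈ Set.Ico (0:ℝ) (M.c l) :=
    ⟨by linarith [hx.1, hy.1], by linarith [hx.2, hy.2]⟩
  have h1 : M.T (M.c l - x) < M.T (M.c l - (x + y) / 2) := M.T_mono l hx hm (by linarith)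
  have h2 : M.T (M.c l - (x + y) / 2) < M.T (M.c l - y) := M.T_mono l hm hy (by linarith)
  have hc := (M.T_convex l).2 hx hy (by norm_num : (0:ℝ) ≤ 1/2) (by norm_num : (0:ℝ) ≤ 1/2)
    (by norm_num : (1:ℝ)/2 + 1/2 = 1)
  simp only [smul_eq_mul] at hc
  rw [show (1:ℝ)/2 * x + 1/2 * y = (x + y) / 2 from by ring] at hc
  have hy0 : 0 < y := lt_of_le_of_lt hx.1 hxy
  nlinarith [mul_lt_mul_of_pos_right hxy (sub_pos.mpr h1),
    mul_le_mul_of_nonneg_left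
      (by linarith : M.T (M.c l - (x + y) / 2) - M.T (M.c l - x)
        ≤ M.T (M.c l - y) - M.T (M.c l - (x + y) / 2)) hy0.le]

private lemma phi_mid_lt {L : ℕ} (M : Model L) (l : Fin L) {x y : ℝ}
    (hx : x ∈ Set.Ico (0:ℝ) (M.c l)) (hy : y ∈ Set.Ico (0:ℝ) (M.c l)) (hne : x ≠ y) :
    (x + y) / 2 * M.T (M.c l - (x + y) / 2)
      < (x * M.T (M.c l - x) + y * M.T (M.c l - y)) / 2 := by
  rcases hne.lt_or_gt with h | h
  · exact phi_mid_lt_aux M l hx hy h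
  · have := phi_mid_lt_aux M l hy hx h
    rw [add_comm y x] at this
    linarith

private lemma phi_mid_le {L : ℕ} (M : Model L) (l : Fin L) {x y : ℝ}
    (hx : x ∈ Set.Ico (0:ℝ) (M.c l)) (hy : y ∈ Set.Ico (0:ℝ) (M.c l)) :
    (x + y) / 2 * M.T (M.c l - (x + y) / 2)
      ≤ (x * M.T (M.c l - x) + y * M.T (M.c l - y)) / 2 := by
  rcases eq_or_ne x y with h | h
  · subst h
    rw [show (x + x) / 2 = x from by ring]
    linarith
  · exact (phi_mid_lt M l hx hy h).le

private lemma cost_gt_of_ne {L : ℕ} (M : Model L) {R : ℝ} {fstar t : Fin L → ℝ}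
    (hfs_lt : ∀ l, fstar l < M.c l)
    (hfs_opt : ∀ f : Fin L → ℝ, IsFlow R f → (∀ l, f l < M.c l) →
      ∑ l, fstar l * M.T (M.c l - fstar l) ≤ ∑ l, f l * M.T (M.c l - f l))
    (hfs : IsFlow R fstar) (ht : IsFlow R t) (ht_lt : ∀ l, t l < M.c l)
    {l1 : Fin L} (hne : t l1 ≠ fstar l1) :
    ∑ l, fstar l * M.T (M.c l - fstar l) < ∑ l, t l * M.T (M.c l - t l) := by
  have hm0 : ∀ l, 0 ≤ (t l + fstar l) / 2 := fun l => by linarith [ht.1 l, hfs.1 l]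
  have hmsum : ∑ l, (t l + fstar l) / 2 = R := by
    rw [← Finset.sum_div, Finset.sum_add_distrib, ht.2, hfs.2]
    ring
  have hmlt : ∀ l, (t l + fstar l) / 2 < M.c l := fun l => by linarith [ht_lt l, hfs_lt l]
  have hopt : ∑ l, fstar l * M.T (M.c l - fstar l)
      ≤ ∑ l, (t l + fstar l) / 2 * M.T (M.c l - (t l + fstar l) / 2) :=
    hfs_opt (fun l => (t l + fstar l) / 2) ⟨hm0, hmsum⟩ hmlt
  have key : ∑ l, (t l + fstar l) / 2 * M.T (M.c l - (t l + fstar l) / 2)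
      < ∑ l, (t l * M.T (M.c l - t l) + fstar l * M.T (M.c l - fstar l)) / 2 :=
    Finset.sum_lt_sum (fun l _ => phi_mid_le M l ⟨ht.1 l, ht_lt l⟩ ⟨hfs.1 l, hfs_lt l⟩)
      ⟨l1, Finset.mem_univ _, phi_mid_lt M l1 ⟨ht.1 l1, ht_lt l1⟩ ⟨hfs.1 l1, hfs_lt l1⟩ hne⟩
  have hsplit : ∑ l, (t l * M.T (M.c l - t l) + fstar l * M.T (M.c l - fstar l)) / 2
      = (∑ l, t l * M.T (M.c l - t l) + ∑ l, fstar l * M.T (M.c l - fstar l)) / 2 := by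
    rw [← Finset.sum_div, Finset.sum_add_distrib]
  rw [hsplit] at key
  linarith

private lemma coalition_core {L : ℕ} (M : Model L) {R rS : ℝ} (fstar F g : Fin L → ℝ)
    (hfs : IsFlow R fstar) (hfs_lt : ∀ l, fstar l < M.c l)
    (hfs_opt : ∀ f : Fin L → ℝ, IsFlow R f → (∀ l, f l < M.c l) →
      ∑ l, fstar l * M.T (M.c l - fstar l) ≤ ∑ l, f l * M.T (M.c l - f l))
    (hNW : ¬ ∀ l n : Fin L, fstar n < M.c n → 0 < fstar l →
      M.T (M.c l - fstar l) ≤ M.T (M.c n - fstar n))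
    (hF0 : ∀ l, 0 ≤ F l) (hFsum : ∑ l, F l = rS)
    (hg0 : ∀ l, 0 ≤ g l) (hgsum : ∑ l, g l = R - rS)
    (hrS_pos : 0 < rS) (hrS_lt : rS < R) (hRc : R < ∑ l, M.c l)
    (hcap : ∀ l, 0 < F l → g l + F l < M.c l)
    (hW : ∀ l n, g n + F n < M.c n → 0 < g l →
      g l + F l < M.c l ∧ M.T (M.c l - (g l + F l)) ≤ M.T (M.c n - (g n + F n))) :
    rS * (∑ l, fstar l * M.T (M.c l - fstar l))
      < R * ∑ l, F l * M.T (M.c l - (g l + F l)) := by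
  have ht0 : ∀ l, 0 ≤ g l + F l := fun l => add_nonneg (hg0 l) (hF0 l)
  have htsum : ∑ l, (g l + F l) = R := by
    rw [Finset.sum_add_distrib, hgsum, hFsum]; ring
  have hexn : ∃ n, g n + F n < M.c n := by
    by_contra h
    push_neg at h
    have h2 : ∑ l, M.c l ≤ ∑ l, (g l + F l) := Finset.sum_le_sum fun l _ => h l
    rw [htsum] at h2
    linarith
  have htlt : ∀ l, g l + F l < M.c l := by
    intro l
    rcases (hF0 l).eq_or_lt with hF | hF
    · rcases (hg0 l).eq_or_lt with hgl | hgl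
      · rw [← hF, ← hgl]
        simpa using M.c_pos l
      · obtain ⟨n, hn⟩ := hexn
        exact (hW l n hn hgl).1
    · exact hcap l hF
  obtain ⟨l0, hl0⟩ : ∃ l0, 0 < g l0 := by
    by_contra h
    push_neg at h
    have h2 : ∑ l, g l ≤ 0 := Finset.sum_nonpos fun l _ => h l
    rw [hgsum] at h2
    linarith
  set lam := M.T (M.c l0 - (g l0 + F l0)) with hlamdef
  have hlam_le : ∀ n, lam ≤ M.T (M.c n - (g n + F n)) :=
    fun n => (hW l0 n (htlt n) hl0).2
  have hgcost : ∑ l, g l * M.T (M.c l - (g l + F l)) = (R - rS) * lam := by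
    rw [← hgsum, Finset.sum_mul]
    refine Finset.sum_congr rfl fun l _ => ?_
    rcases (hg0 l).eq_or_lt with h | h
    · rw [← h]; ring
    · rw [le_antisymm (hW l l0 (htlt l0) h).2 (hlam_le l)]
  have hdecomp : ∑ l, (g l + F l) * M.T (M.c l - (g l + F l))
      = (∑ l, F l * M.T (M.c l - (g l + F l))) + (R - rS) * lam := by
    rw [← hgcost, ← Finset.sum_add_distrib]
    exact Finset.sum_congr rfl fun l _ => by ring
  have hcost_ge : ∑ l, fstar l * M.T (M.c l - fstar l)
      ≤ ∑ l, (g l + F l) * M.T (M.c l - (g l + F l)) :=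
    hfs_opt (fun l => g l + F l) ⟨ht0, htsum⟩ htlt
  have hCS_ge : rS * lam ≤ ∑ l, F l * M.T (M.c l - (g l + F l)) := by
    rw [← hFsum, Finset.sum_mul]
    exact Finset.sum_le_sum fun l _ => mul_le_mul_of_nonneg_left (hlam_le l) (hF0 l)
  by_cases hteq : (fun l => g l + F l) = fstar
  · push_neg at hNW
    obtain ⟨l1, n1, hn1, hl1pos, hgt⟩ := hNW
    have htl : ∀ l, g l + F l = fstar l := fun l => congrFun hteq l
    rw [← htl n1] at hn1
    rw [← htl l1] at hl1pos
    rw [← htl n1, ← htl l1] at hgt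
    have hlt : lam < M.T (M.c l1 - (g l1 + F l1)) := lt_of_le_of_lt (hlam_le n1) hgt
    have hF1 : 0 < F l1 := by
      rcases (hF0 l1).eq_or_lt with h | h
      · exfalso
        have hgl1 : 0 < g l1 := by linarith
        have h3 := (hW l1 n1 hn1 hgl1).2
        linarith
      · exact h
    have hCS_gt : rS * lam < ∑ l, F l * M.T (M.c l - (g l + F l)) := by
      rw [← hFsum, Finset.sum_mul]
      exact Finset.sum_lt_sum (fun l _ => mul_le_mul_of_nonneg_left (hlam_le l) (hF0 l))
        ⟨l1, Finset.mem_univ _, mul_lt_mul_of_pos_left hlt hF1⟩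
    rw [hdecomp] at hcost_ge
    nlinarith [mul_le_mul_of_nonneg_left hcost_ge hrS_pos.le,
      mul_lt_mul_of_pos_left hCS_gt (by linarith : (0:ℝ) < R - rS)]
  · obtain ⟨l1, hl1⟩ : ∃ l1, g l1 + F l1 ≠ fstar l1 := by
      by_contra h
      push_neg at h
      exact hteq (funext h)
    have hcost_gt : ∑ l, fstar l * M.T (M.c l - fstar l)
        < ∑ l, (g l + F l) * M.T (M.c l - (g l + F l)) :=
      cost_gt_of_ne M hfs_lt hfs_opt hfs ⟨ht0, htsum⟩ htlt hl1
    rw [hdecomp] at hcost_gt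
    nlinarith [mul_lt_mul_of_pos_left hcost_gt hrS_pos,
      mul_le_mul_of_nonneg_left hCS_ge (by linarith : (0:ℝ) ≤ R - rS)]

private lemma coalition_bound {L N : ℕ} (M : Model L) (r : Fin N → ℝ) (R : ℝ)
    (hr : ∀ i, 0 < r i) (hrsum : ∑ i, r i = R) (hRc : R < ∑ l, M.c l)
    (fstar : Fin L → ℝ) (hfs : IsFlow R fstar) (hfs_lt : ∀ l, fstar l < M.c l)
    (hfs_opt : ∀ f : Fin L → ℝ, IsFlow R f → (∀ l, f l < M.c l) →
      ∑ l, fstar l * M.T (M.c l - fstar l) ≤ ∑ l, f l * M.T (M.c l - f l))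
    (hNW : ¬ ∀ l n : Fin L, fstar n < M.c n → 0 < fstar l →
      M.T (M.c l - fstar l) ≤ M.T (M.c n - fstar n))
    (S : Finset (Fin N)) (hS : S.Nonempty) (hSu : S ≠ Finset.univ)
    (J : Fin N → ℝ) (hJ : VS M r R S J) :
    (∑ i ∈ S, r i) * (∑ l, fstar l * M.T (M.c l - fstar l)) < R * ∑ i ∈ S, J i := by
  obtain ⟨f, g, hf, hg, hcap, _hKKT, hW, hJval⟩ := hJ
  have hFsum : ∑ l, ∑ i ∈ S, f i l = ∑ i ∈ S, r i := by
    rw [Finset.sum_comm]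
    exact Finset.sum_congr rfl fun i hi => (hf i hi).2
  have hrS_pos : 0 < ∑ i ∈ S, r i := Finset.sum_pos (fun i _ => hr i) hS
  have hrS_lt : ∑ i ∈ S, r i < R := by
    rw [← hrsum]
    obtain ⟨j, hj⟩ : ∃ j, j ∉ S := by
      by_contra h
      push_neg at h
      exact hSu (Finset.eq_univ_iff_forall.mpr h)
    exact Finset.sum_lt_sum_of_subset (Finset.subset_univ S) (Finset.mem_univ j)
      hj (hr j) (fun k _ _ => (hr k).le)
  have hJsum : ∑ i ∈ S, J i
      = ∑ l, (∑ i ∈ S, f i l) * M.T (M.c l - (g l + ∑ i ∈ S, f i l)) := by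
    calc ∑ i ∈ S, J i
        = ∑ i ∈ S, ∑ l, f i l * M.T (M.c l - (g l + ∑ j ∈ S, f j l)) :=
          Finset.sum_congr rfl hJval
      _ = ∑ l, ∑ i ∈ S, f i l * M.T (M.c l - (g l + ∑ j ∈ S, f j l)) := Finset.sum_comm
      _ = ∑ l, (∑ i ∈ S, f i l) * M.T (M.c l - (g l + ∑ i ∈ S, f i l)) :=
          Finset.sum_congr rfl fun l _ => (Finset.sum_mul _ _ _).symm
  rw [hJsum]
  exact coalition_core M fstar (fun l => ∑ i ∈ S, f i l) g hfs hfs_lt hfs_opt hNW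
    (fun l => Finset.sum_nonneg fun i hi => (hf i hi).1 l) hFsum hg.1 hg.2
    hrS_pos hrS_lt hRc hcap hW

/-- If the Wardrop equilibrium is not system optimal, the Proportional
Allocation is strongly inhibitive (hence lies in the Inner Core): for every probability
distribution `η` on the nonempty proper coalitions and every choice of cost vectors
`Y S ∈ V(S)` for each such coalition, some user `i` has strictly larger expected cost
under the randomized deviation than at the PA. -/
theorem proportional_allocation_strongly_inhibitive
    {L N : ℕ} (M : Model L) (r : Fin N → ℝ) (R : ℝ)
    (hr : ∀ i, 0 < r i) (hrsum : ∑ i, r i = R)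
    (hR : 0 < R) (hRc : R < ∑ l, M.c l)
    (fstar : Fin L → ℝ)
    (hfs : IsFlow R fstar) (hfs_lt : ∀ l, fstar l < M.c l)
    (hfs_opt : ∀ f : Fin L → ℝ, IsFlow R f → (∀ l, f l < M.c l) →
      ∑ l, fstar l * M.T (M.c l - fstar l) ≤ ∑ l, f l * M.T (M.c l - f l))
    -- the Wardrop equilibrium is not system optimal
    (hNW : ¬ ∀ l n : Fin L, fstar n < M.c n → 0 < fstar l →
      M.T (M.c l - fstar l) ≤ M.T (M.c n - fstar n))
    -- η is a probability distribution on the nonempty proper coalitions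
    (η : Finset (Fin N) → ℝ)
    (hη0 : ∀ S, 0 ≤ η S)
    (hηsupp : ∀ S, η S ≠ 0 → S.Nonempty ∧ S ≠ Finset.univ)
    (hηsum : ∑ S : Finset (Fin N), η S = 1)
    -- Y assigns to each nonempty proper coalition a cost vector in V(S)
    (Y : Finset (Fin N) → Fin N → ℝ)
    (hY : ∀ S : Finset (Fin N), S.Nonempty → S ≠ Finset.univ → VS M r R S (Y S)) :
    ∃ i : Fin N,
      ∑ S ∈ Finset.univ.filter (fun S : Finset (Fin N) => i ∈ S),
          η S * (r i / R * ∑ l, fstar l * M.T (M.c l - fstar l))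
        < ∑ S ∈ Finset.univ.filter (fun S : Finset (Fin N) => i ∈ S),
            η S * Y S i := by
  by_contra hcon
  push_neg at hcon
  set Jstar := ∑ l, fstar l * M.T (M.c l - fstar l) with hJstar
  have hswap : ∀ c : Finset (Fin N) → Fin N → ℝ,
      ∑ i, ∑ S ∈ Finset.univ.filter (fun S : Finset (Fin N) => i ∈ S), c S i
        = ∑ S : Finset (Fin N), ∑ i ∈ S, c S i := by
    intro c
    simp only [Finset.sum_filter]
    rw [Finset.sum_comm]
    refine Finset.sum_congr rfl fun S _ => ?_
    rw [Finset.sum_ite_mem, Finset.univ_inter]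
  have hinner : ∀ S : Finset (Fin N), S.Nonempty → S ≠ Finset.univ →
      ∑ i ∈ S, r i / R * Jstar < ∑ i ∈ S, Y S i := by
    intro S hSne hSu
    have hb := coalition_bound M r R hr hrsum hRc fstar hfs hfs_lt hfs_opt hNW S hSne hSu
      (Y S) (hY S hSne hSu)
    rw [← hJstar] at hb
    have he : ∑ i ∈ S, r i / R * Jstar = (∑ i ∈ S, r i) / R * Jstar := by
      rw [← Finset.sum_mul, ← Finset.sum_div]
    rw [he, div_mul_eq_mul_div, div_lt_iff₀ hR]
    linarith
  have hBA : ∑ S : Finset (Fin N), ∑ i ∈ S, η S * Y S i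
      ≤ ∑ S : Finset (Fin N), ∑ i ∈ S, η S * (r i / R * Jstar) := by
    rw [← hswap, ← hswap]
    exact Finset.sum_le_sum fun i _ => hcon i
  obtain ⟨S0, hS0⟩ : ∃ S : Finset (Fin N), η S ≠ 0 := by
    by_contra h
    push_neg at h
    simp only [h, Finset.sum_const_zero] at hηsum
    exact zero_ne_one hηsum
  have hstrict : ∑ S : Finset (Fin N), ∑ i ∈ S, η S * (r i / R * Jstar)
      < ∑ S : Finset (Fin N), ∑ i ∈ S, η S * Y S i := by
    refine Finset.sum_lt_sum (fun S _ => ?_) ⟨S0, Finset.mem_univ _, ?_⟩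
    · rw [← Finset.mul_sum, ← Finset.mul_sum]
      rcases eq_or_ne (η S) 0 with h | h
      · simp [h]
      · obtain ⟨hSne, hSu⟩ := hηsupp S h
        exact mul_le_mul_of_nonneg_left (hinner S hSne hSu).le (hη0 S)
    · rw [← Finset.mul_sum, ← Finset.mul_sum]
      obtain ⟨hSne, hSu⟩ := hηsupp S0 hS0
      exact mul_lt_mul_of_pos_left (hinner S0 hSne hSu)
        (lt_of_le_of_ne (hη0 S0) (Ne.symm hS0))
  linarith
end

section
/- For symmetric demands the Nucleolus equals the Proportional Allocation: suppose r^i = R/N for every user i. Then no J ∈ 𝒥*_sys has sorted excess vector e*(J) lexicographically strictly smaller than e*(J̃), where J̃ is the Proportional Allocation J̃^i = (r^i/R)·J*_sys; hence the Nucleolus of the worst-case TU coalitional game is the Proportional Allocation. -/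
open scoped BigOperators

/-- The nonempty proper coalitions of `{1, …, N}`. -/
def properCoalitions (N : ℕ) : Finset (Finset (Fin N)) :=
  Finset.univ.filter (fun S => S.Nonempty ∧ S ≠ Finset.univ)

/-- The excess of coalition `S` at cost vector `J`, for coalition values `v`:
`e_S(J) = (∑_{i ∈ S} J i − v S) / r_S`. -/
noncomputable def excess {N : ℕ} (r : Fin N → ℝ) (v : Finset (Fin N) → ℝ)
    (S : Finset (Fin N)) (J : Fin N → ℝ) : ℝ :=
  (∑ i ∈ S, J i - v S) / ∑ i ∈ S, r i

/-- `e*(J)`: the excesses of all nonempty proper coalitions at `J`, arranged in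
nonincreasing order. -/
noncomputable def sortedExcess {N : ℕ} (r : Fin N → ℝ) (v : Finset (Fin N) → ℝ)
    (J : Fin N → ℝ) : List ℝ :=
  ((properCoalitions N).val.map (fun S => excess r v S J)).sort (· ≥ ·)

/-- The system-optimal cost vectors `𝒥*_sys`. -/
def sysOptCosts {L N : ℕ} (M : Model L) (r : Fin N → ℝ) (fstar : Fin L → ℝ) :
    Set (Fin N → ℝ) :=
  { J | ∃ f : Fin N → Fin L → ℝ, (∀ i, IsFlow (r i) (f i)) ∧
      (∀ l, ∑ i, f i l = fstar l) ∧
      ∀ i, J i = ∑ l, f i l * M.T (M.c l - fstar l) }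


section nucleolusHelpers

lemma sort_cons_max (m : Multiset ℝ) (t : ℝ) (h : ∀ y ∈ m, y ≤ t) :
    (t ::ₘ m).sort (· ≥ ·) = t :: m.sort (· ≥ ·) := by
  refine (fun hp h1 h2 => List.Perm.eq_of_pairwise' (r := (· ≥ · : ℝ → ℝ → Prop)) h1 h2 hp) ?_ ?_ ?_
  · apply Multiset.coe_eq_coe.mp
    rw [← Multiset.cons_coe, Multiset.sort_eq, Multiset.sort_eq]
  · exact Multiset.pairwise_sort _ _
  · rw [List.pairwise_cons]
    exact ⟨fun b hb => h b ((Multiset.mem_sort _).mp hb), Multiset.pairwise_sort _ _⟩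

lemma sorted_head_max {t : ℝ} {a : List ℝ} (h : List.Pairwise (· ≥ ·) (t :: a)) :
    ∀ y ∈ t :: a, y ≤ t := by
  intro y hy
  rcases List.mem_cons.mp hy with rfl | hy
  · exact le_rfl
  · exact (List.pairwise_cons.mp h).1 y hy

lemma avg_lex {ι K : Type*} [DecidableEq ι] (k : Finset K) (hk : k.Nonempty)
    (x : K → ι → ℝ) (xbar : ι → ℝ) (A : Multiset ι) :
    (∀ S ∈ A, xbar S = (∑ j ∈ k, x j S) / k.card) →
    ∀ a : List ℝ, (∀ j ∈ k, (A.map (x j)).sort (· ≥ ·) = a) →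
    ¬ List.Lex (· < ·) a ((A.map xbar).sort (· ≥ ·)) := by
  induction A using Multiset.strongInductionOn with
  | _ A ih =>
  intro hxbar a ha hlex
  obtain ⟨j₀, hj₀⟩ := hk
  have hkcard : (0:ℝ) < k.card := by
    exact_mod_cast Finset.card_pos.mpr ⟨j₀, hj₀⟩
  rcases hBe : (A.map xbar).sort (· ≥ ·) with _ | ⟨s, b'⟩
  · rw [hBe] at hlex; cases hlex
  · have hlen : a.length = Multiset.card A := by
      rw [← ha j₀ hj₀, Multiset.length_sort, Multiset.card_map]
    rcases a with _ | ⟨t, a'⟩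
    · have hA0 : A = 0 := Multiset.card_eq_zero.mp (by simpa using hlen.symm)
      rw [hA0] at hBe; simp at hBe
    have hsorted : List.Pairwise (· ≥ ·) (t :: a') := by
      rw [← ha j₀ hj₀]; exact Multiset.pairwise_sort _ _
    have hmax : ∀ j ∈ k, ∀ y ∈ A.map (x j), y ≤ t := by
      intro j hj y hy
      refine sorted_head_max hsorted y ?_
      rw [← ha j hj]
      exact (Multiset.mem_sort _).mpr hy
    have hmax' : ∀ j ∈ k, ∀ S ∈ A, x j S ≤ t := fun j hj S hS =>
      hmax j hj _ (Multiset.mem_map_of_mem _ hS)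
    have hxbar_le : ∀ S ∈ A, xbar S ≤ t := by
      intro S hS
      rw [hxbar S hS, div_le_iff₀ hkcard]
      calc ∑ j ∈ k, x j S ≤ ∑ j ∈ k, t :=
            Finset.sum_le_sum (fun j hj => hmax' j hj S hS)
        _ = t * k.card := by rw [Finset.sum_const, nsmul_eq_mul, mul_comm]
    have hs_mem : s ∈ A.map xbar := by
      have : s ∈ (A.map xbar).sort (· ≥ ·) := by
        rw [hBe]; exact List.mem_cons_self
      exact (Multiset.mem_sort _).mp this
    obtain ⟨S, hS, hxS⟩ := Multiset.mem_map.mp hs_mem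
    have hsle : s ≤ t := hxS ▸ hxbar_le S hS
    rw [hBe] at hlex
    cases hlex with
    | rel h => exact absurd h (not_lt.mpr hsle)
    | cons h =>
      have hxSt : xbar S = s := hxS
      have hall : ∀ j ∈ k, x j S = s := by
        by_contra hc
        push_neg at hc
        obtain ⟨j₁, hj₁, hne⟩ := hc
        have hlt : xbar S < s := by
          rw [hxbar S hS, div_lt_iff₀ hkcard]
          calc ∑ j ∈ k, x j S < ∑ j ∈ k, s :=
                Finset.sum_lt_sum (fun j hj => hmax' j hj S hS)
                  ⟨j₁, hj₁, lt_of_le_of_ne (hmax' j₁ hj₁ S hS) hne⟩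
            _ = s * k.card := by rw [Finset.sum_const, nsmul_eq_mul, mul_comm]
        exact absurd hxSt (ne_of_lt hlt)
      have hAe : A = S ::ₘ A.erase S := (Multiset.cons_erase hS).symm
      have ha' : ∀ j ∈ k, ((A.erase S).map (x j)).sort (· ≥ ·) = a' := by
        intro j hj
        have h1 : A.map (x j) = s ::ₘ (A.erase S).map (x j) := by
          conv_lhs => rw [hAe]
          rw [Multiset.map_cons, hall j hj]
        have h2 : ∀ y ∈ (A.erase S).map (x j), y ≤ s := by
          intro y hy
          exact hmax j hj y (by rw [h1]; exact Multiset.mem_cons_of_mem hy)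
        have h3 := ha j hj
        rw [h1, sort_cons_max _ _ h2] at h3
        injection h3
      have hb' : ((A.erase S).map xbar).sort (· ≥ ·) = b' := by
        have h1 : A.map xbar = s ::ₘ (A.erase S).map xbar := by
          conv_lhs => rw [hAe]
          rw [Multiset.map_cons, hxSt]
        have h2 : ∀ y ∈ (A.erase S).map xbar, y ≤ s := by
          intro y hy
          obtain ⟨S', hS', rfl⟩ := Multiset.mem_map.mp hy
          exact hxbar_le S' (Multiset.mem_of_mem_erase hS')
        have h3 := hBe
        rw [h1, sort_cons_max _ _ h2] at h3
        injection h3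
      exact ih (A.erase S) (Multiset.erase_lt.mpr hS)
        (fun S' hS' => hxbar S' (Multiset.mem_of_mem_erase hS'))
        a' ha' (hb' ▸ h)

lemma symmetric_lex {N : ℕ} (hN : 0 < N) (r : Fin N → ℝ) (v : Finset (Fin N) → ℝ)
    (c : ℝ) (hrc : ∀ i, r i = c) (hrpos : 0 < c)
    (hv : ∀ S T : Finset (Fin N), S.card = T.card → v S = v T)
    (J : Fin N → ℝ) (Jbar : Fin N → ℝ) (hbar : ∀ i, Jbar i = (∑ j, J j) / N) :
    ¬ List.Lex (· < ·) (sortedExcess r v J) (sortedExcess r v Jbar) := by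
  haveI : NeZero N := ⟨hN.ne'⟩
  have hNR : ((N:ℕ):ℝ) ≠ 0 := Nat.cast_ne_zero.mpr hN.ne'
  set e : Fin N → (Fin N ↪ Fin N) := fun kk => (Equiv.addRight kk).toEmbedding with he
  have hpc : ∀ kk : Fin N,
      (properCoalitions N).map ⟨fun S => S.map (e kk), Finset.map_injective (e kk)⟩
        = properCoalitions N := by
    intro kk
    apply Finset.ext
    intro S
    simp only [Finset.mem_map, Function.Embedding.coeFn_mk, properCoalitions,
      Finset.mem_filter, Finset.mem_univ, true_and]
    constructor
    · rintro ⟨T, ⟨hT1, hT2⟩, rfl⟩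
      refine ⟨Finset.map_nonempty.mpr hT1, ?_⟩
      intro hcon
      apply hT2
      have h1 : (T.map (e kk)).card = T.card := Finset.card_map _
      have h2 := Finset.card_lt_iff_ne_univ (s := T)
      have h3 := Finset.card_lt_iff_ne_univ (s := T.map (e kk))
      by_contra hT2'
      exact absurd hcon (h3.mp (h1 ▸ h2.mpr hT2'))
    · rintro ⟨hS1, hS2⟩
      refine ⟨S.map ((Equiv.addRight kk).symm.toEmbedding), ⟨?_, ?_⟩, ?_⟩
      · exact Finset.map_nonempty.mpr hS1
      · intro hcon
        apply hS2
        have h1 : (S.map ((Equiv.addRight kk).symm.toEmbedding)).card = S.card :=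
          Finset.card_map _
        by_contra hS2'
        exact absurd hcon ((Finset.card_lt_iff_ne_univ _).mp
          (h1 ▸ (Finset.card_lt_iff_ne_univ _).mpr hS2'))
      · ext i
        simp [he, Finset.mem_map]
  intro hlex
  refine avg_lex (Finset.univ : Finset (Fin N)) Finset.univ_nonempty
    (fun kk S => excess r v (S.map (e kk)) J)
    (fun S => excess r v S Jbar) (properCoalitions N).val ?_ (sortedExcess r v J) ?_ hlex
  · intro S hS
    have hSmem : S ∈ properCoalitions N := hS
    have hSne : S.Nonempty := ((Finset.mem_filter.mp hSmem).2).1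
    have hden : (0:ℝ) < ∑ i ∈ S, r i :=
      Finset.sum_pos (fun i _ => (hrc i) ▸ hrpos) hSne
    have hvmap : ∀ kk, v (S.map (e kk)) = v S := fun kk => hv _ _ (Finset.card_map _)
    have hrmap : ∀ kk, ∑ i ∈ S.map (e kk), r i = ∑ i ∈ S, r i := by
      intro kk; rw [Finset.sum_map]; simp [hrc]
    have hJmap : ∀ kk : Fin N, ∑ i ∈ S.map (e kk), J i = ∑ i ∈ S, J (i + kk) := by
      intro kk; rw [Finset.sum_map]; rfl
    have hsum2 : ∑ kk : Fin N, ∑ i ∈ S, J (i + kk) = S.card * ∑ j, J j := by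
      rw [Finset.sum_comm]
      have h4 : ∀ i : Fin N, ∑ kk : Fin N, J (i + kk) = ∑ j, J j := fun i =>
        Fintype.sum_equiv (Equiv.addLeft i) _ _ (fun kk => rfl)
      rw [Finset.sum_congr rfl (fun i _ => h4 i), Finset.sum_const, nsmul_eq_mul]
    have hJbarS : ∑ i ∈ S, Jbar i = S.card * ((∑ j, J j) / N) := by
      rw [Finset.sum_congr rfl (fun i _ => hbar i), Finset.sum_const, nsmul_eq_mul]
    have hxk : ∀ kk : Fin N, excess r v (S.map (e kk)) J
        = ((∑ i ∈ S, J (i + kk)) - v S) / (∑ i ∈ S, r i) := by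
      intro kk; rw [excess, hJmap kk, hvmap kk, hrmap kk]
    show excess r v S Jbar = (∑ kk : Fin N, excess r v (S.map (e kk)) J) /
      ((Finset.univ : Finset (Fin N)).card)
    rw [Finset.sum_congr rfl (fun kk _ => hxk kk), ← Finset.sum_div,
      Finset.sum_sub_distrib, hsum2, Finset.sum_const, Finset.card_univ,
      Fintype.card_fin, nsmul_eq_mul, excess, hJbarS]
    rw [← mul_div_assoc, div_div, div_eq_div_iff hden.ne' (mul_ne_zero hden.ne' hNR)]
    field_simp
  · intro kk _
    show ((properCoalitions N).val.map (fun S => excess r v (S.map (e kk)) J)).sort (· ≥ ·)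
      = sortedExcess r v J
    unfold sortedExcess
    congr 1
    calc (properCoalitions N).val.map (fun S => excess r v (S.map (e kk)) J)
        = ((properCoalitions N).val.map
            (fun S => S.map (e kk))).map (fun S => excess r v S J) := by
          rw [Multiset.map_map]; rfl
      _ = (((properCoalitions N).map
            ⟨fun S => S.map (e kk), Finset.map_injective (e kk)⟩).val).map
            (fun S => excess r v S J) := by rw [Finset.map_val]; rfl
      _ = (properCoalitions N).val.map (fun S => excess r v S J) := by rw [hpc kk]

end nucleolusHelpers

/-- For symmetric demands the Nucleolus equals the Proportional
Allocation: if `r i = R / N` for every user, the PA is system optimal and no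
system-optimal cost vector has a sorted excess vector lexicographically strictly
smaller than that of the PA, for the coalition values `v(S) = W(r_S)`. -/
theorem nucleolus_eq_PA_symmetric_demands
    {L N : ℕ} (M : Model L) (hN : 0 < N) (r : Fin N → ℝ) (R : ℝ)
    (hr : ∀ i, 0 < r i) (hrsum : ∑ i, r i = R)
    (hR : 0 < R) (hRc : R < ∑ l, M.c l)
    (hsym : ∀ i, r i = R / N)
    (fstar : Fin L → ℝ)
    (hfs : IsFlow R fstar) (hfs_lt : ∀ l, fstar l < M.c l)
    (hfs_opt : ∀ f : Fin L → ℝ, IsFlow R f → (∀ l, f l < M.c l) →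
      ∑ l, fstar l * M.T (M.c l - fstar l) ≤ ∑ l, f l * M.T (M.c l - f l)) :
    (fun i => r i / R * ∑ l, fstar l * M.T (M.c l - fstar l)) ∈
        sysOptCosts M r fstar ∧
    ∀ J ∈ sysOptCosts M r fstar,
      ¬ List.Lex (· < ·)
          (sortedExcess r (fun S => M.W R (∑ i ∈ S, r i)) J)
          (sortedExcess r (fun S => M.W R (∑ i ∈ S, r i))
            (fun i => r i / R * ∑ l, fstar l * M.T (M.c l - fstar l))) := by
  constructor
  · refine ⟨fun i l => r i / R * fstar l, fun i =>
      ⟨fun l => mul_nonneg (div_nonneg (hr i).le hR.le) (hfs.1 l), ?_⟩, fun l => ?_, fun i => ?_⟩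
    · rw [← Finset.mul_sum, hfs.2, div_mul_cancel₀ _ hR.ne']
    · show ∑ i, r i / R * fstar l = fstar l
      rw [← Finset.sum_mul, ← Finset.sum_div, hrsum, div_self hR.ne', one_mul]
    · show r i / R * ∑ l, fstar l * M.T (M.c l - fstar l)
        = ∑ l, (r i / R * fstar l) * M.T (M.c l - fstar l)
      rw [Finset.mul_sum]
      exact Finset.sum_congr rfl fun l _ => (mul_assoc _ _ _).symm
  · intro J hJ
    obtain ⟨f, hflow, hsumf, hJi⟩ := hJ
    have hNpos : (0:ℝ) < (N:ℝ) := by exact_mod_cast hN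
    have htot : ∑ i, J i = ∑ l, fstar l * M.T (M.c l - fstar l) := by
      rw [Finset.sum_congr rfl fun i _ => hJi i, Finset.sum_comm]
      exact Finset.sum_congr rfl fun l _ => by rw [← Finset.sum_mul, hsumf l]
    refine symmetric_lex hN r _ (R / N) hsym (div_pos hR hNpos) ?_ J _ ?_
    · intro S T hST
      have hs : ∑ i ∈ S, r i = S.card * (R/N) := by
        rw [Finset.sum_congr rfl fun i _ => hsym i, Finset.sum_const, nsmul_eq_mul]
      have ht : ∑ i ∈ T, r i = T.card * (R/N) := by
        rw [Finset.sum_congr rfl fun i _ => hsym i, Finset.sum_const, nsmul_eq_mul]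
      rw [hs, ht, hST]
    · intro i
      show r i / R * ∑ l, fstar l * M.T (M.c l - fstar l) = (∑ j, J j) / N
      rw [hsym i, htot]
      field_simp
end
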